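/- arXiv:1201.1137 — 7 statements merged into one kernel-verified Lean document; each statement's English description precedes it below -/
import Mathlib

section
/- Every multivariate linearized polynomial f in X_1,...,X_n over F_q can be written as f = g(h), where h ∈ F_q[X]^{(q)} is a coordinate of an automorphism all of whose components are multivariate linearized polynomials, and g ∈ F_q[X_1]^{(q)} is a univariate linearized polynomial, g(h) denoting the substitution of h into g. -/
open MvPolynomial

/-- The `F_q`-subspace `F_q[X]^{(q)}` of univariate linearized polynomials. -/
noncomputable def LinSpanUni (q : ℕ) (K : Type*) [Field K] : Submodule K (Polynomial K) :=
  Submodule.span K {f : Polynomial K | ∃ m : ℕ, f = Polynomial.X ^ q ^ m}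

/-- The `F_q`-subspace of multivariate linearized polynomials in `n` variables. -/
noncomputable def LinSpan (q : ℕ) (K : Type*) [Field K] (n : ℕ) : Submodule K (MvPolynomial (Fin n) K) :=
  Submodule.span K {f : MvPolynomial (Fin n) K | ∃ (i : Fin n) (m : ℕ), f = X i ^ q ^ m}

/-- `f` is an invertible polynomial map (polynomial automorphism). -/
def IsPolyAut {K : Type*} [CommSemiring K] {n : ℕ}
    (f : Fin n → MvPolynomial (Fin n) K) : Prop :=
  ∃ g : Fin n → MvPolynomial (Fin n) K,
    (∀ i, bind₁ g (f i) = X i) ∧ (∀ i, bind₁ f (g i) = X i)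



open MvPolynomial

noncomputable section

namespace St5

variable (q : ℕ) (K : Type*) [Field K]

/-- The univariate linearization operator: `∑ c_m t^m ↦ ∑ c_m X^{q^m}`. -/
def phiU : Polynomial K →ₗ[K] Polynomial K where
  toFun d := d.sum fun m c => c • Polynomial.X ^ q ^ m
  map_add' a b := Polynomial.sum_add_index a b _ (fun _ => zero_smul K _)
    (fun _ b₁ b₂ => add_smul b₁ b₂ _)
  map_smul' r d := by
    simp only [RingHom.id_apply]
    show (r • d).sum (fun m c => c • Polynomial.X ^ q ^ m)
      = r • d.sum (fun m c => c • Polynomial.X ^ q ^ m)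
    rw [Polynomial.sum_smul_index d r _ (fun m => by simp),
      Polynomial.sum_def, Polynomial.sum_def, Finset.smul_sum]
    exact Finset.sum_congr rfl fun m _ => mul_smul r _ _

lemma phiU_apply (d : Polynomial K) :
    phiU q K d = d.sum fun m c => c • Polynomial.X ^ q ^ m := rfl

lemma phiU_monomial (m : ℕ) (c : K) :
    phiU q K (Polynomial.monomial m c) = c • Polynomial.X ^ q ^ m := by
  rw [phiU_apply]
  exact Polynomial.sum_monomial_index c _ (by simp)

lemma phiU_mem (d : Polynomial K) : phiU q K d ∈ LinSpanUni q K := by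
  rw [phiU_apply, Polynomial.sum_def]
  exact Submodule.sum_mem _ fun m _ =>
    Submodule.smul_mem _ _ (Submodule.subset_span ⟨m, rfl⟩)

variable (n : ℕ)

/-- The multivariate linearization operator. -/
def phi : (Fin n → Polynomial K) →ₗ[K] MvPolynomial (Fin n) K :=
  ∑ i : Fin n,
    ((Polynomial.aeval (X i : MvPolynomial (Fin n) K)).toLinearMap.comp
      (phiU q K)).comp (LinearMap.proj i)

lemma phi_apply (p : Fin n → Polynomial K) :
    phi q K n p = ∑ i, Polynomial.aeval (X i) (phiU q K (p i)) := by
  simp [phi]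

lemma aeval_phiU_eq {A : Type*} [CommRing A] [Algebra K A] (h : A) (d : Polynomial K) :
    Polynomial.aeval h (phiU q K d) = d.sum fun m c => c • h ^ q ^ m := by
  rw [phiU_apply, Polynomial.sum_def, Polynomial.sum_def, map_sum]
  exact Finset.sum_congr rfl fun m _ => by
    rw [map_smul, map_pow, Polynomial.aeval_X]

lemma phi_mem (p : Fin n → Polynomial K) : phi q K n p ∈ LinSpan q K n := by
  rw [phi_apply]
  refine Submodule.sum_mem _ fun i _ => ?_
  rw [aeval_phiU_eq, Polynomial.sum_def]
  exact Submodule.sum_mem _ fun m _ =>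
    Submodule.smul_mem _ _ (Submodule.subset_span ⟨i, m, rfl⟩)

lemma phi_single (i : Fin n) (d : Polynomial K) :
    phi q K n (Pi.single i d) = Polynomial.aeval (X i : MvPolynomial (Fin n) K) (phiU q K d) := by
  rw [phi_apply]
  rw [Finset.sum_eq_single i]
  · rw [Pi.single_eq_same]
  · intro j _ hj
    rw [Pi.single_eq_of_ne hj, map_zero, map_zero]
  · intro hi; exact absurd (Finset.mem_univ i) hi

lemma exists_rep (f : MvPolynomial (Fin n) K) (hf : f ∈ LinSpan q K n) :
    ∃ p : Fin n → Polynomial K, phi q K n p = f := by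
  induction hf using Submodule.span_induction with
  | mem x hx =>
    obtain ⟨i, m, rfl⟩ := hx
    refine ⟨Pi.single i (Polynomial.X ^ m), ?_⟩
    rw [phi_single, ← Polynomial.monomial_one_right_eq_X_pow, phiU_monomial,
      map_smul, map_pow, Polynomial.aeval_X, one_smul]
  | zero => exact ⟨0, map_zero _⟩
  | add x y _ _ hx hy =>
    obtain ⟨p₁, rfl⟩ := hx; obtain ⟨p₂, rfl⟩ := hy
    exact ⟨p₁ + p₂, map_add _ _ _⟩
  | smul c x _ hx =>
    obtain ⟨p₁, rfl⟩ := hx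
    exact ⟨c • p₁, map_smul _ _ _⟩

section Frob

variable [Fintype K]

lemma aeval_phiU_frob {r k : ℕ} [Fact r.Prime] [CharP K r] (hcard : Fintype.card K = q)
    (hqrk : q = r ^ k) (i : Fin n) (d : Polynomial K) :
    (Polynomial.aeval (X i : MvPolynomial (Fin n) K) (phiU q K d)) ^ q
      = Polynomial.aeval (X i : MvPolynomial (Fin n) K) (phiU q K (Polynomial.X * d)) := by
  induction d using Polynomial.induction_on' with
  | add a b ha hb =>
    rw [mul_add, map_add, map_add, map_add, map_add]
    rw [hqrk, add_pow_char_pow, ← hqrk, ha, hb]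
  | monomial m c =>
    rw [Polynomial.X_mul_monomial, phiU_monomial, phiU_monomial, map_smul, map_smul,
      map_pow, map_pow, Polynomial.aeval_X, smul_pow, ← pow_mul, ← pow_succ]
    rw [← hcard, FiniteField.pow_card]

lemma phi_pow_q (hcard : Fintype.card K = q) (p : Fin n → Polynomial K) :
    phi q K n p ^ q = phi q K n fun i => Polynomial.X * p i := by
  have hr : (ringChar K).Prime := CharP.char_is_prime K (ringChar K)
  haveI : Fact (ringChar K).Prime := ⟨hr⟩
  obtain ⟨k, -, hk⟩ := FiniteField.card K (ringChar K)
  have hqrk : q = ringChar K ^ (k : ℕ) := by rw [← hcard, hk]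
  rw [phi_apply, phi_apply, hqrk, sum_pow_char_pow]
  exact Finset.sum_congr rfl fun i _ => by
    rw [← hqrk, aeval_phiU_frob q K n hcard hqrk]

lemma phi_pow_q_pow (hcard : Fintype.card K = q) (m : ℕ) (p : Fin n → Polynomial K) :
    phi q K n p ^ q ^ m = phi q K n fun i => Polynomial.X ^ m * p i := by
  induction m with
  | zero => simp
  | succ m ih =>
    rw [pow_succ, pow_mul, ih, phi_pow_q q K n hcard]
    congr 1
    funext i
    ring

lemma aeval_phi (hcard : Fintype.card K = q) (d : Polynomial K) (p : Fin n → Polynomial K) :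
    Polynomial.aeval (phi q K n p) (phiU q K d) = phi q K n fun i => d * p i := by
  induction d using Polynomial.induction_on' with
  | add a b ha hb =>
    have : (fun i => (a + b) * p i) = (fun i => a * p i) + fun i => b * p i := by
      funext i; simp [add_mul]
    rw [map_add, map_add, ha, hb, this, map_add]
  | monomial m c =>
    have : (fun i => Polynomial.monomial m c * p i)
        = c • ((fun i => Polynomial.X ^ m * p i) : Fin n → Polynomial K) := by
      funext i
      rw [Pi.smul_apply, Polynomial.smul_eq_C_mul, ← mul_assoc,
        Polynomial.C_mul_X_pow_eq_monomial]
    rw [phiU_monomial, map_smul, map_pow, Polynomial.aeval_X, this, map_smul,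
      phi_pow_q_pow q K n hcard]

lemma bind_phi (hcard : Fintype.card K = q) (N : Matrix (Fin n) (Fin n) (Polynomial K))
    (p : Fin n → Polynomial K) :
    bind₁ (fun j => phi q K n (N j)) (phi q K n p)
      = phi q K n fun j => ∑ i, p i * N i j := by
  rw [phi_apply, map_sum]
  have step : ∀ i : Fin n,
      bind₁ (fun j => phi q K n (N j)) (Polynomial.aeval (X i) (phiU q K (p i)))
        = phi q K n fun j => p i * N i j := by
    intro i
    rw [← Polynomial.aeval_algHom_apply, bind₁_X_right, aeval_phi q K n hcard]
  rw [Finset.sum_congr rfl fun i _ => step i]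
  rw [← map_sum]
  congr 1
  funext j
  simp

end Frob

section Completion

variable {R : Type*} [CommRing R] [IsDomain R] [IsPrincipalIdealRing R]

/-- A unimodular row over a PID extends to an invertible square matrix. -/
lemma exists_completion {N : ℕ} (v c : Fin (N + 1) → R) (hc : ∑ i, c i • v i = 1) :
    ∃ M : Matrix (Fin (N + 1)) (Fin (N + 1)) R, IsUnit M.det ∧ M 0 = v := by
  classical
  set φ : (Fin (N + 1) → R) →ₗ[R] R := Fintype.linearCombination R v with hφ
  have hφapp : ∀ x, φ x = ∑ i, x i • v i := fun x => by
    rw [hφ, Fintype.linearCombination_apply]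
  have hφc : φ c = 1 := by rw [hφapp]; exact hc
  obtain ⟨m, bN⟩ := Submodule.basisOfPid (Pi.basisFun R (Fin (N + 1))) (LinearMap.ker φ)
  have hli : ∀ (z : R), ∀ x ∈ LinearMap.ker φ, z • c + x = 0 → z = 0 := by
    intro z x hx h0
    have h1 := congrArg φ h0
    rwa [map_add, map_smul, hφc, LinearMap.mem_ker.mp hx, smul_eq_mul, mul_one, add_zero,
      map_zero] at h1
  have hsp : ∀ z : Fin (N + 1) → R, ∃ r : R, z + r • c ∈ LinearMap.ker φ := by
    intro z
    refine ⟨-φ z, ?_⟩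
    rw [LinearMap.mem_ker, map_add, map_smul, hφc, smul_eq_mul, mul_one, add_neg_cancel]
  set b' : Module.Basis (Fin (m + 1)) R (Fin (N + 1) → R) := Module.Basis.mkFinCons c bN hli hsp with hb'
  have heq : m + 1 = N + 1 := by
    simpa using Fintype.card_congr (b'.indexEquiv (Pi.basisFun R (Fin (N + 1))))
  set b'' : Module.Basis (Fin (N + 1)) R (Fin (N + 1) → R) := b'.reindex (finCongr heq) with hb''
  set B : Matrix (Fin (N + 1)) (Fin (N + 1)) R := (Pi.basisFun R (Fin (N + 1))).toMatrix ⇑b''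
    with hB
  haveI : Invertible B := (Pi.basisFun R (Fin (N + 1))).invertibleToMatrix b''
  refine ⟨⅟B, Matrix.isUnit_det_of_invertible _, ?_⟩
  have hcons : ∀ j, b'' j = (Fin.cons c ((LinearMap.ker φ).subtype ∘ bN) :
      Fin (m + 1) → (Fin (N + 1) → R)) ((finCongr heq).symm j) := by
    intro j
    rw [hb'', Module.Basis.reindex_apply, hb', Module.Basis.coe_mkFinCons]
    rfl
  have key : Matrix.vecMul v B = Pi.single (0 : Fin (N + 1)) (1 : R) := by
    funext j
    have hsum : Matrix.vecMul v B j = φ (b'' j) := by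
      show ∑ i, v i * B i j = _
      rw [hφapp]
      refine Finset.sum_congr rfl fun i _ => ?_
      rw [hB, Module.Basis.toMatrix_apply, Pi.basisFun_repr, smul_eq_mul, mul_comm]
    rcases eq_or_ne j 0 with rfl | hj
    · have h0 : b'' 0 = c := by
        rw [hcons]
        have : (finCongr heq).symm 0 = 0 := by ext; simp
        rw [this, Fin.cons_zero]
      rw [hsum, h0, hφc, Pi.single_eq_same]
    · have hj' : (finCongr heq).symm j ≠ 0 := by
        intro h
        apply hj
        have := congrArg (finCongr heq) h
        simpa using this
      obtain ⟨j₁, hj₁⟩ := Fin.eq_succ_of_ne_zero hj'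
      have hker : b'' j ∈ LinearMap.ker φ := by
        rw [hcons, hj₁, Fin.cons_succ]
        exact Submodule.coe_mem (bN j₁)
      rw [hsum, LinearMap.mem_ker.mp hker, Pi.single_eq_of_ne hj]
  have : v = Matrix.vecMul (Pi.single (0 : Fin (N+1)) (1:R)) (⅟B) := by
    rw [← key, Matrix.vecMul_vecMul, mul_invOf_self, Matrix.vecMul_one]
  rw [this, Matrix.single_one_vecMul]; rfl

end Completion

lemma X_mem (i : Fin n) : (X i : MvPolynomial (Fin n) K) ∈ LinSpan q K n :=
  Submodule.subset_span ⟨i, 0, by rw [pow_zero, pow_one]⟩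

lemma phi_one_row (i : Fin n) :
    phi q K n (fun j => (1 : Matrix (Fin n) (Fin n) (Polynomial K)) i j) = X i := by
  have h1 : (fun j => (1 : Matrix (Fin n) (Fin n) (Polynomial K)) i j)
      = Pi.single i (1 : Polynomial K) := by
    funext j
    rw [Matrix.one_apply, Pi.single_apply]
    simp [eq_comm]
  rw [h1, phi_single, ← Polynomial.monomial_zero_one, phiU_monomial, pow_zero, pow_one,
    one_smul, Polynomial.aeval_X]

end St5

theorem statement_5' (q : ℕ) (hq : IsPrimePow q) (K : Type*) [Field K] [Fintype K]
    (hcard : Fintype.card K = q) (n : ℕ) (hn : 0 < n)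
    (f : MvPolynomial (Fin n) K) (hf : f ∈ LinSpan q K n) :
    ∃ (g : Polynomial K) (h : MvPolynomial (Fin n) K),
      g ∈ LinSpanUni q K ∧ h ∈ LinSpan q K n ∧
      (∃ F : Fin n → MvPolynomial (Fin n) K,
        IsPolyAut F ∧ (∀ i, F i ∈ LinSpan q K n) ∧ ∃ i, F i = h) ∧
      f = Polynomial.aeval h g := by
  classical
  obtain ⟨p, rfl⟩ := St5.exists_rep q K n f hf
  set I := Ideal.span (Set.range p) with hI
  set d := Submodule.IsPrincipal.generator I with hd
  have hgen : Ideal.span {d} = I := Ideal.span_singleton_generator I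
  have hdvd : ∀ i, d ∣ p i := fun i => by
    rw [← Ideal.mem_span_singleton, hgen, hI]
    exact Ideal.subset_span (Set.mem_range_self i)
  by_cases hd0 : d = 0
  · have hp0 : p = 0 := funext fun i => by
      have h2 := hdvd i; rw [hd0, zero_dvd_iff] at h2; exact h2
    refine ⟨0, X ⟨0, hn⟩, Submodule.zero_mem _, St5.X_mem q K n _,
      ⟨fun i => X i, ⟨fun i => X i, fun i => by rw [bind₁_X_right],
        fun i => by rw [bind₁_X_right]⟩, fun i => St5.X_mem q K n i, ⟨⟨0, hn⟩, rfl⟩⟩, ?_⟩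
    rw [hp0, map_zero, map_zero]
  · have hd_mem : d ∈ I := Submodule.IsPrincipal.generator_mem I
    rw [hI, Ideal.mem_span_range_iff_exists_fun] at hd_mem
    obtain ⟨c, hcsum⟩ := hd_mem
    choose u hu using hdvd
    have hc1 : ∑ i, c i • u i = 1 := by
      have h3 : d * (∑ i, c i * u i) = d * 1 := by
        rw [mul_one, Finset.mul_sum]
        calc ∑ i, d * (c i * u i) = ∑ i, c i * p i :=
              Finset.sum_congr rfl fun i _ => by rw [hu i]; ring
          _ = d := hcsum
      have h4 := mul_left_cancel₀ hd0 h3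
      simpa [smul_eq_mul] using h4
    obtain ⟨n', rfl⟩ : ∃ n', n = n' + 1 := ⟨n - 1, by omega⟩
    obtain ⟨M, hMdet, hM0⟩ := St5.exists_completion u c hc1
    haveI := M.invertibleOfIsUnitDet hMdet
    refine ⟨St5.phiU q K d, St5.phi q K _ u, St5.phiU_mem q K d, St5.phi_mem q K _ u,
      ⟨fun i => St5.phi q K _ (M i),
        ⟨fun i => St5.phi q K _ ((⅟M) i), fun i => ?_, fun i => ?_⟩,
        fun i => St5.phi_mem q K _ _, ⟨0, by simp only []; rw [hM0]⟩⟩, ?_⟩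
    · rw [St5.bind_phi q K _ hcard]
      have h5 : (fun j => ∑ k, M i k * (⅟M) k j)
          = fun j => (1 : Matrix (Fin (n' + 1)) (Fin (n' + 1)) (Polynomial K)) i j := by
        funext j; rw [← Matrix.mul_apply, mul_invOf_self]
      rw [h5, St5.phi_one_row]
    · rw [St5.bind_phi q K _ hcard]
      have h5 : (fun j => ∑ k, (⅟M) i k * M k j)
          = fun j => (1 : Matrix (Fin (n' + 1)) (Fin (n' + 1)) (Polynomial K)) i j := by
        funext j; rw [← Matrix.mul_apply, invOf_mul_self]
      rw [h5, St5.phi_one_row]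
    · rw [St5.aeval_phi q K _ hcard]
      congr 1
      funext i
      exact hu i

end

/-- Every multivariate linearized polynomial `f` in `X_1,…,X_n`
can be written as `f = g(h)` where `h` is a linearized coordinate of an
automorphism all of whose components are linearized polynomials, and `g` is a
univariate linearized polynomial. -/
theorem statement_5 (q : ℕ) (hq : IsPrimePow q) (K : Type*) [Field K] [Fintype K]
    (hcard : Fintype.card K = q) (n : ℕ) (hn : 0 < n)
    (f : MvPolynomial (Fin n) K) (hf : f ∈ LinSpan q K n) :
    ∃ (g : Polynomial K) (h : MvPolynomial (Fin n) K),
      g ∈ LinSpanUni q K ∧ h ∈ LinSpan q K n ∧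
      (∃ F : Fin n → MvPolynomial (Fin n) K,
        IsPolyAut F ∧ (∀ i, F i ∈ LinSpan q K n) ∧ ∃ i, F i = h) ∧
      f = Polynomial.aeval h g := by
  exact statement_5' q hq K hcard n hn f hf
end

section
/- Let a be an ideal in F_q[X_1,...,X_n] generated by (an arbitrary set of) multivariate linearized polynomials. Then there exist an automorphism h = (h_1,...,h_n) ∈ GA_n(F_q)^{(q)} all of whose components are multivariate linearized polynomials, an integer r ≤ n, and nonzero univariate linearized polynomials g_i ∈ F_q[X_i]^{(q)} for i = 1,...,r, such that a = (g_1(h_1),...,g_r(h_r)). Moreover, if a is a prime ideal, then a is generated by r components of some automorphism in GA_n(F_q)^{(q)}. -/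
open MvPolynomial

noncomputable section StatementSixAux

/-- Substitution `X i ↦ X i ^ q` as a `K`-linear endomorphism. -/
def frq (q : ℕ) (K : Type*) [Field K] (n : ℕ) :
    Module.End K (MvPolynomial (Fin n) K) :=
  (bind₁ (fun i => (X i : MvPolynomial (Fin n) K) ^ q)).toLinearMap

theorem frq_apply (q : ℕ) (K : Type*) [Field K] (n : ℕ) (w : MvPolynomial (Fin n) K) :
    frq q K n w = bind₁ (fun i => (X i : MvPolynomial (Fin n) K) ^ q) w := rfl

theorem frq_X_qpow (q : ℕ) (K : Type*) [Field K] (n : ℕ) (i : Fin n) (m : ℕ) :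
    frq q K n ((X i : MvPolynomial (Fin n) K) ^ q ^ m) = X i ^ q ^ (m + 1) := by
  rw [frq_apply, map_pow, bind₁_X_right, ← pow_mul, ← pow_succ']

theorem mem_linSpan_X_qpow (q : ℕ) (K : Type*) [Field K] (n : ℕ) (i : Fin n) (m : ℕ) :
    (X i : MvPolynomial (Fin n) K) ^ q ^ m ∈ LinSpan q K n :=
  Submodule.subset_span ⟨i, m, rfl⟩

theorem mem_linSpan_X (q : ℕ) (K : Type*) [Field K] (n : ℕ) (i : Fin n) :
    (X i : MvPolynomial (Fin n) K) ∈ LinSpan q K n := by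
  simpa using mem_linSpan_X_qpow q K n i 0

theorem frq_mem (q : ℕ) (K : Type*) [Field K] (n : ℕ) {w : MvPolynomial (Fin n) K}
    (hw : w ∈ LinSpan q K n) : frq q K n w ∈ LinSpan q K n := by
  unfold LinSpan at hw ⊢
  induction hw using Submodule.span_induction with
  | mem x hx =>
    obtain ⟨i, m, rfl⟩ := hx
    rw [frq_X_qpow]
    exact Submodule.subset_span ⟨i, m + 1, rfl⟩
  | zero => simpa using Submodule.zero_mem _
  | add x y hx hy ihx ihy => rw [map_add]; exact Submodule.add_mem _ ihx ihy
  | smul c x hx ih => rw [map_smul]; exact Submodule.smul_mem _ _ ih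

theorem frq_pow_mem (q : ℕ) (K : Type*) [Field K] (n : ℕ) (m : ℕ) {w : MvPolynomial (Fin n) K}
    (hw : w ∈ LinSpan q K n) : (frq q K n ^ m) w ∈ LinSpan q K n := by
  induction m with
  | zero => simpa using hw
  | succ m ih =>
    rw [pow_succ', Module.End.mul_apply]
    exact frq_mem q K n ih

theorem frq_pow_eq (q : ℕ) (K : Type*) [Field K] (n : ℕ)
    (hfq : ∀ w ∈ LinSpan q K n, frq q K n w = w ^ q) (m : ℕ) :
    ∀ {w : MvPolynomial (Fin n) K}, w ∈ LinSpan q K n → (frq q K n ^ m) w = w ^ q ^ m := by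
  induction m with
  | zero => intro w _; simp
  | succ m ih =>
    intro w hw
    rw [pow_succ, Module.End.mul_apply, hfq w hw, ih (by rw [← hfq w hw]; exact frq_mem q K n hw),
      ← pow_mul, ← pow_succ']

theorem aeval_frq_apply (q : ℕ) (K : Type*) [Field K] (n : ℕ) (p : Polynomial K)
    (w : MvPolynomial (Fin n) K) :
    (Polynomial.aeval (frq q K n)) p w =
      ∑ i ∈ Finset.range (p.natDegree + 1), p.coeff i • (frq q K n ^ i) w := by
  rw [Polynomial.aeval_eq_sum_range, LinearMap.sum_apply]
  simp

theorem aeval_frq_mem (q : ℕ) (K : Type*) [Field K] (n : ℕ) (p : Polynomial K)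
    {w : MvPolynomial (Fin n) K} (hw : w ∈ LinSpan q K n) :
    (Polynomial.aeval (frq q K n)) p w ∈ LinSpan q K n := by
  rw [aeval_frq_apply]
  exact Submodule.sum_mem _ fun i _ => Submodule.smul_mem _ _ (frq_pow_mem q K n i hw)

/-- The univariate linearized polynomial attached to an ordinary polynomial:
`∑ cₘ Y^m ↦ ∑ cₘ X^(q^m)`. -/
def gpol (q : ℕ) {K : Type*} [Field K] (p : Polynomial K) : Polynomial K :=
  p.sum fun m c => Polynomial.C c * Polynomial.X ^ q ^ m

theorem gpol_mem (q : ℕ) {K : Type*} [Field K] (p : Polynomial K) :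
    gpol q p ∈ LinSpanUni q K := by
  rw [gpol, Polynomial.sum_def]
  refine Submodule.sum_mem _ fun m _ => ?_
  rw [← Polynomial.smul_eq_C_mul]
  exact Submodule.smul_mem _ _ (Submodule.subset_span ⟨m, rfl⟩)

theorem gpol_coeff (q : ℕ) {K : Type*} [Field K] (hq2 : 2 ≤ q) (p : Polynomial K) (t : ℕ) :
    (gpol q p).coeff (q ^ t) = p.coeff t := by
  rw [gpol, Polynomial.sum_def, Polynomial.finset_sum_coeff]
  have hcongr : ∀ m ∈ p.support,
      (Polynomial.C (p.coeff m) * Polynomial.X ^ q ^ m).coeff (q ^ t) =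
        if m = t then p.coeff m else 0 := by
    intro m _
    rw [Polynomial.coeff_C_mul, Polynomial.coeff_X_pow]
    by_cases h : m = t
    · subst h; simp
    · rw [if_neg (fun hc => h (Nat.pow_right_injective hq2 (hc.symm : q ^ m = q ^ t))), mul_zero, if_neg h]
  rw [Finset.sum_congr rfl hcongr, Finset.sum_ite_eq' p.support t]
  split
  · rfl
  · exact (Polynomial.notMem_support_iff.mp ‹_›).symm

theorem gpol_ne_zero (q : ℕ) {K : Type*} [Field K] (hq2 : 2 ≤ q) {p : Polynomial K}
    (hp : p ≠ 0) : gpol q p ≠ 0 := by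
  intro h
  refine hp (Polynomial.ext fun t => ?_)
  rw [← gpol_coeff q hq2 p t, h]; simp

theorem coeff_zero_of_mem_linSpanUni (q : ℕ) {K : Type*} [Field K] (hq0 : q ≠ 0)
    {p : Polynomial K} (hp : p ∈ LinSpanUni q K) : p.coeff 0 = 0 := by
  unfold LinSpanUni at hp
  induction hp using Submodule.span_induction with
  | mem x hx =>
    obtain ⟨m, rfl⟩ := hx
    rw [Polynomial.coeff_X_pow]
    exact if_neg (Nat.pos_of_ne_zero (pow_ne_zero m hq0)).ne
  | zero => simp
  | add x y hx hy ihx ihy => rw [Polynomial.coeff_add, ihx, ihy, add_zero]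
  | smul c x hx ih => rw [Polynomial.coeff_smul, ih, smul_zero]

theorem exists_perm_comp {r n : ℕ} (f g : Fin r ↪ Fin n) :
    ∃ σ : Equiv.Perm (Fin n), ∀ i, σ (g i) = f i := by
  classical
  let e₁ : {x // x ∈ Set.range g} ≃ {x // x ∈ Set.range f} :=
    (Equiv.ofInjective g g.injective).symm.trans (Equiv.ofInjective f f.injective)
  have hcardeq : Fintype.card {x // ¬x ∈ Set.range ⇑g} = Fintype.card {x // ¬x ∈ Set.range ⇑f} := by
    rw [Fintype.card_subtype_compl, Fintype.card_subtype_compl]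
    congr 1
    exact Fintype.card_congr e₁
  let e₂ : {x // ¬x ∈ Set.range ⇑g} ≃ {x // ¬x ∈ Set.range ⇑f} := Fintype.equivOfCardEq hcardeq
  refine ⟨Equiv.subtypeCongr e₁ e₂, fun i => ?_⟩
  have hp : g i ∈ Set.range ⇑g := ⟨i, rfl⟩
  show (Equiv.subtypeCongr e₁ e₂ : Equiv.Perm (Fin n)) (g i) = f i
  rw [Equiv.subtypeCongr]
  simp only [Equiv.trans_apply]
  rw [Equiv.sumCompl_symm_apply_of_pos hp]
  simp only [Equiv.sumCongr_apply, Sum.map_inl, Equiv.sumCompl_apply_inl]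
  show ((e₁ ⟨g i, hp⟩ : {x // x ∈ Set.range ⇑f}) : Fin n) = f i
  have : (⟨g i, hp⟩ : {x // x ∈ Set.range ⇑g}) = Equiv.ofInjective g g.injective i := rfl
  rw [this]
  simp [e₁]

theorem frq_pow_X (q : ℕ) (K : Type*) [Field K] (n : ℕ) (i : Fin n) (m : ℕ) :
    ((frq q K n) ^ m) (X i) = X i ^ q ^ m := by
  induction m with
  | zero => simp
  | succ m ih =>
    rw [pow_succ', Module.End.mul_apply, ih, frq_X_qpow]

def oA (q : ℕ) (K : Type*) [Field K] (n : ℕ) :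
    MvPolynomial (Fin n) K ≃ₗ[K] Module.AEval' (frq q K n) :=
  Module.AEval'.of _

def LL (q : ℕ) (K : Type*) [Field K] (n : ℕ) :
    Submodule (Polynomial K) (Module.AEval' (frq q K n)) :=
  Submodule.span (Polynomial K) (Set.range fun i => oA q K n (X i))

theorem oA_symm_smul (q : ℕ) (K : Type*) [Field K] (n : ℕ) (p : Polynomial K)
    (z : Module.AEval' (frq q K n)) :
    (oA q K n).symm (p • z) = Polynomial.aeval (frq q K n) p ((oA q K n).symm z) := by
  rw [show (oA q K n).symm = (Module.AEval'.of (frq q K n)).symm from rfl,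
    Module.AEval.of_symm_smul]
  rfl

theorem smul_oA (q : ℕ) (K : Type*) [Field K] (n : ℕ) (p : Polynomial K)
    (w : MvPolynomial (Fin n) K) :
    p • oA q K n w = oA q K n (Polynomial.aeval (frq q K n) p w) := by
  apply (oA q K n).symm.injective
  rw [oA_symm_smul, LinearEquiv.symm_apply_apply, LinearEquiv.symm_apply_apply]

theorem C_smul_AEval (q : ℕ) (K : Type*) [Field K] (n : ℕ) (c : K)
    (z : Module.AEval' (frq q K n)) :
    (Polynomial.C c) • z = c • z :=
  Module.AEval.C_smul (R := K) (M := MvPolynomial (Fin n) K) (a := frq q K n) c z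

theorem symm_mem_linSpan_of_mem_LL (q : ℕ) (K : Type*) [Field K] (n : ℕ)
    {z : Module.AEval' (frq q K n)} (hz : z ∈ LL q K n) :
    (oA q K n).symm z ∈ LinSpan q K n := by
  induction hz using Submodule.span_induction with
  | mem x hx =>
    obtain ⟨i, rfl⟩ := hx
    rw [LinearEquiv.symm_apply_apply]
    exact mem_linSpan_X q K n i
  | zero => rw [map_zero]; exact Submodule.zero_mem _
  | add x y hx hy ihx ihy => rw [map_add]; exact Submodule.add_mem _ ihx ihy
  | smul p z hz ih => rw [oA_symm_smul]; exact aeval_frq_mem q K n p ih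

theorem mem_LL_iff (q : ℕ) (K : Type*) [Field K] (n : ℕ) (w : MvPolynomial (Fin n) K) :
    oA q K n w ∈ LL q K n ↔ w ∈ LinSpan q K n := by
  constructor
  · intro hz
    have := symm_mem_linSpan_of_mem_LL q K n hz
    rwa [LinearEquiv.symm_apply_apply] at this
  · intro hw
    unfold LinSpan at hw
    induction hw using Submodule.span_induction with
    | mem x hx =>
      obtain ⟨i, m, rfl⟩ := hx
      have h1 : (X i : MvPolynomial (Fin n) K) ^ q ^ m =
          Polynomial.aeval (frq q K n) ((Polynomial.X : Polynomial K) ^ m) (X i) := by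
        rw [map_pow, Polynomial.aeval_X, frq_pow_X]
      rw [h1, ← smul_oA]
      exact Submodule.smul_mem _ _ (Submodule.subset_span ⟨i, rfl⟩)
    | zero => rw [map_zero]; exact Submodule.zero_mem _
    | add x y hx hy ihx ihy => rw [map_add]; exact Submodule.add_mem _ ihx ihy
    | smul c x hx ih =>
      rw [map_smul, ← C_smul_AEval]
      exact Submodule.smul_mem _ _ ih

theorem linearIndependent_oA_X (q : ℕ) (K : Type*) [Field K] (hq2 : 2 ≤ q) (n : ℕ) :
    LinearIndependent (Polynomial K) (fun i : Fin n => oA q K n (X i)) := by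
  rw [Fintype.linearIndependent_iff]
  intro g hg i0
  have hq0 : q ≠ 0 := by omega
  have hsum0 : ∑ i, (Polynomial.aeval (frq q K n)) (g i) (X i) = 0 := by
    have hc := congrArg (oA q K n).symm hg
    rw [map_sum, map_zero] at hc
    simpa [oA_symm_smul, LinearEquiv.symm_apply_apply] using hc
  refine Polynomial.ext fun t => ?_
  have hcf := congrArg (MvPolynomial.coeff (Finsupp.single i0 (q ^ t))) hsum0
  rw [MvPolynomial.coeff_sum, MvPolynomial.coeff_zero] at hcf
  have hterm : ∀ (i : Fin n) (m : ℕ),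
      MvPolynomial.coeff (Finsupp.single i0 (q ^ t))
        ((g i).coeff m • (X i : MvPolynomial (Fin n) K) ^ q ^ m) =
      if i = i0 then (if m = t then (g i).coeff m else 0) else 0 := by
    intro i m
    rw [MvPolynomial.coeff_smul, MvPolynomial.X_pow_eq_monomial, MvPolynomial.coeff_monomial]
    by_cases h : i = i0 ∧ m = t
    · obtain ⟨rfl, rfl⟩ := h
      rw [if_pos rfl, if_pos rfl, if_pos rfl, smul_eq_mul, mul_one]
    · have hne : Finsupp.single i (q ^ m) ≠ Finsupp.single i0 (q ^ t) := by
        intro hc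
        rcases (Finsupp.single_eq_single_iff _ _ _ _).mp hc with ⟨h1, h2⟩ | ⟨h1, _⟩
        · exact h ⟨h1, Nat.pow_right_injective hq2 h2⟩
        · exact pow_ne_zero m hq0 h1
      rw [if_neg hne, smul_zero]
      by_cases hi : i = i0
      · have hm : ¬ m = t := fun hm => h ⟨hi, hm⟩
        rw [if_pos hi, if_neg hm]
      · rw [if_neg hi]
  have hinner : ∀ i : Fin n,
      MvPolynomial.coeff (Finsupp.single i0 (q ^ t))
        ((Polynomial.aeval (frq q K n)) (g i) (X i)) =
      if i = i0 then (if t ∈ Finset.range ((g i).natDegree + 1) then (g i).coeff t else 0)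
        else 0 := by
    intro i
    rw [aeval_frq_apply, MvPolynomial.coeff_sum]
    have : ∀ m ∈ Finset.range ((g i).natDegree + 1),
        MvPolynomial.coeff (Finsupp.single i0 (q ^ t)) ((g i).coeff m • (frq q K n ^ m) (X i)) =
        if i = i0 then (if m = t then (g i).coeff m else 0) else 0 := by
      intro m _
      rw [frq_pow_X]
      exact hterm i m
    rw [Finset.sum_congr rfl this]
    by_cases hi : i = i0
    · simp only [if_pos hi]
      rw [Finset.sum_ite_eq' (Finset.range ((g i).natDegree + 1)) t]
    · simp [hi]
  rw [Finset.sum_congr rfl fun i _ => hinner i, Finset.sum_ite_eq' Finset.univ i0,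
    if_pos (Finset.mem_univ i0)] at hcf
  by_cases ht : t ∈ Finset.range ((g i0).natDegree + 1)
  · rw [if_pos ht] at hcf
    rw [hcf, Polynomial.coeff_zero]
  · rw [Polynomial.coeff_zero]
    exact Polynomial.coeff_eq_zero_of_natDegree_lt (by
      simp only [Finset.mem_range, not_lt] at ht; omega)

/-- Basis of `LL` given by the variables. -/
def bbs (q : ℕ) (K : Type*) [Field K] (hq2 : 2 ≤ q) (n : ℕ) :
    Module.Basis (Fin n) (Polynomial K) ↥(LL q K n) :=
  Module.Basis.span (linearIndependent_oA_X q K hq2 n)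

theorem bbs_coe (q : ℕ) (K : Type*) [Field K] (hq2 : 2 ≤ q) (n : ℕ) (i : Fin n) :
    (bbs q K hq2 n i : Module.AEval' (frq q K n)) = oA q K n (X i) :=
  congrArg Subtype.val (Module.Basis.span_apply _ i)

theorem gpol_aeval (q : ℕ) (K : Type*) [Field K] (n : ℕ)
    (hfq : ∀ w ∈ LinSpan q K n, frq q K n w = w ^ q) (p : Polynomial K)
    {w : MvPolynomial (Fin n) K} (hw : w ∈ LinSpan q K n) :
    Polynomial.aeval w (gpol q p) = Polynomial.aeval (frq q K n) p w := by
  have hLHS : Polynomial.aeval w (gpol q p) =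
      ∑ m ∈ Finset.range (p.natDegree + 1), p.coeff m • w ^ q ^ m := by
    rw [gpol, Polynomial.sum_def, map_sum,
      Finset.sum_subset p.supp_subset_range_natDegree_succ (fun m _ hm => by
        rw [Polynomial.notMem_support_iff.mp hm, map_zero, zero_mul, map_zero])]
    exact Finset.sum_congr rfl fun m _ => by
      rw [map_mul, Polynomial.aeval_C, map_pow, Polynomial.aeval_X, ← Algebra.smul_def]
  rw [hLHS, aeval_frq_apply]
  exact Finset.sum_congr rfl fun i _ => by rw [frq_pow_eq q K n hfq i hw]

theorem bind_key (q : ℕ) (K : Type*) [Field K] (n : ℕ)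
    (hfq : ∀ w ∈ LinSpan q K n, frq q K n w = w ^ q)
    (u : Fin n → MvPolynomial (Fin n) K) (hu : ∀ j, u j ∈ LinSpan q K n)
    (T : ↥(LL q K n) →ₗ[Polynomial K] Module.AEval' (frq q K n))
    (hT : ∀ j, T ⟨oA q K n (X j), Submodule.subset_span ⟨j, rfl⟩⟩ = oA q K n (u j)) :
    ∀ w (hw : w ∈ LinSpan q K n),
      bind₁ u w = (oA q K n).symm (T ⟨oA q K n w, (mem_LL_iff q K n w).mpr hw⟩) := by
  intro w hw
  unfold LinSpan at hw
  induction hw using Submodule.span_induction with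
  | mem x hx =>
    obtain ⟨i, m, rfl⟩ := hx
    have hsub : (⟨oA q K n ((X i : MvPolynomial (Fin n) K) ^ q ^ m),
        (mem_LL_iff q K n _).mpr (Submodule.subset_span ⟨i, m, rfl⟩)⟩ : ↥(LL q K n)) =
        ((Polynomial.X : Polynomial K) ^ m) •
          (⟨oA q K n (X i), Submodule.subset_span ⟨i, rfl⟩⟩ : ↥(LL q K n)) := by
      apply Subtype.ext
      show oA q K n ((X i : MvPolynomial (Fin n) K) ^ q ^ m) =
        ((Polynomial.X : Polynomial K) ^ m) • oA q K n (X i)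
      rw [smul_oA]
      exact congrArg _ (by rw [map_pow, Polynomial.aeval_X, frq_pow_X])
    rw [hsub, map_smul, hT i, map_pow, bind₁_X_right, oA_symm_smul, map_pow,
      Polynomial.aeval_X, LinearEquiv.symm_apply_apply, frq_pow_eq q K n hfq m (hu i)]
  | zero =>
    have hsub : (⟨oA q K n (0 : MvPolynomial (Fin n) K),
        (mem_LL_iff q K n _).mpr (Submodule.zero_mem _)⟩ : ↥(LL q K n)) = 0 := by
      apply Subtype.ext
      show oA q K n (0 : MvPolynomial (Fin n) K) = (0 : Module.AEval' (frq q K n))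
      rw [map_zero]
    rw [hsub, map_zero, map_zero, map_zero]
  | add x y hx hy ihx ihy =>
    have hsub : (⟨oA q K n (x + y),
        (mem_LL_iff q K n _).mpr (Submodule.add_mem _ hx hy)⟩ : ↥(LL q K n)) =
        (⟨oA q K n x, (mem_LL_iff q K n x).mpr hx⟩ : ↥(LL q K n)) +
          ⟨oA q K n y, (mem_LL_iff q K n y).mpr hy⟩ := by
      apply Subtype.ext
      show oA q K n (x + y) = oA q K n x + oA q K n y
      rw [map_add]
    rw [hsub, map_add, map_add, map_add, ihx, ihy]
  | smul c x hx ih =>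
    have hsub : (⟨oA q K n (c • x),
        (mem_LL_iff q K n _).mpr (Submodule.smul_mem _ c hx)⟩ : ↥(LL q K n)) =
        (Polynomial.C c) • (⟨oA q K n x, (mem_LL_iff q K n x).mpr hx⟩ : ↥(LL q K n)) := by
      apply Subtype.ext
      show oA q K n (c • x) = (Polynomial.C c) • oA q K n x
      rw [C_smul_AEval, map_smul]
    rw [map_smul, ih, hsub, map_smul, C_smul_AEval, map_smul]

theorem ideal_key (q : ℕ) (K : Type*) [Field K] (n : ℕ) (hq2 : 2 ≤ q)
    (hfq : ∀ w ∈ LinSpan q K n, frq q K n w = w ^ q)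
    (S₀ : Set (MvPolynomial (Fin n) K)) (hS₀ : ∀ s ∈ S₀, s ∈ LinSpan q K n) :
    ∀ z ∈ Submodule.span (Polynomial K) ((fun w => oA q K n w) '' S₀),
      (oA q K n).symm z ∈ Ideal.span S₀ := by
  have hle : Submodule.span (Polynomial K) ((fun w => oA q K n w) '' S₀) ≤ LL q K n :=
    Submodule.span_le.mpr (by
      rintro _ ⟨s, hs, rfl⟩
      exact (mem_LL_iff q K n s).mpr (hS₀ s hs))
  intro z hz
  induction hz using Submodule.span_induction with
  | mem x hx =>
    obtain ⟨s, hs, rfl⟩ := hx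
    rw [LinearEquiv.symm_apply_apply]
    exact Ideal.subset_span hs
  | zero => rw [map_zero]; exact Submodule.zero_mem _
  | add x y hx hy ihx ihy => rw [map_add]; exact Submodule.add_mem _ ihx ihy
  | smul p z hz ih =>
    have hzL : (oA q K n).symm z ∈ LinSpan q K n :=
      symm_mem_linSpan_of_mem_LL q K n (hle hz)
    rw [oA_symm_smul, aeval_frq_apply]
    refine Submodule.sum_mem _ fun i _ => ?_
    rw [frq_pow_eq q K n hfq i hzL, Algebra.smul_def]
    exact Ideal.mul_mem_left _ _
      (Ideal.pow_mem_of_mem _ ih _ (pow_pos (by omega) i))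

end StatementSixAux

set_option maxHeartbeats 1600000 in
/-- If `a` is an ideal of `F_q[X_1,…,X_n]` generated by a set of
multivariate linearized polynomials, then there exist an automorphism
`h = (h_1,…,h_n)` with linearized components, `r ≤ n` and nonzero univariate
linearized polynomials `g_1,…,g_r` such that `a = (g_1(h_1),…,g_r(h_r))`.
Moreover, if `a` is prime then `a` is generated by `r` components of some
automorphism with linearized components. -/
theorem statement_6 (q : ℕ) (hq : IsPrimePow q) (K : Type*) [Field K] [Fintype K]
    (hcard : Fintype.card K = q) (n : ℕ)
    (S : Set (MvPolynomial (Fin n) K)) (hS : ∀ s ∈ S, s ∈ LinSpan q K n) :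
    (∃ h : Fin n → MvPolynomial (Fin n) K,
      IsPolyAut h ∧ (∀ i, h i ∈ LinSpan q K n) ∧
      ∃ (r : ℕ) (hr : r ≤ n) (g : Fin r → Polynomial K),
        (∀ i, g i ∈ LinSpanUni q K) ∧ (∀ i, g i ≠ 0) ∧
        Ideal.span S =
          Ideal.span (Set.range fun i : Fin r =>
            Polynomial.aeval (h (Fin.castLE hr i)) (g i))) ∧
    ((Ideal.span S).IsPrime →
      ∃ h : Fin n → MvPolynomial (Fin n) K,
        IsPolyAut h ∧ (∀ i, h i ∈ LinSpan q K n) ∧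
        ∃ (r : ℕ) (hr : r ≤ n),
          Ideal.span S = Ideal.span (Set.range fun i : Fin r => h (Fin.castLE hr i))) := by
  classical
  have hq2 : 2 ≤ q := by rw [← hcard]; exact Fintype.one_lt_card
  have hq0 : q ≠ 0 := by omega
  haveI : CharP K (ringChar K) := ringChar.charP K
  obtain ⟨kk, hpprime, hcardp⟩ := FiniteField.card K (ringChar K)
  haveI : Fact (ringChar K).Prime := ⟨hpprime⟩
  have hqpk : q = ringChar K ^ (kk : ℕ) := by rw [← hcard, hcardp]
  have hfq : ∀ w ∈ LinSpan q K n, frq q K n w = w ^ q := by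
    intro w hw
    unfold LinSpan at hw
    induction hw using Submodule.span_induction with
    | mem x hx =>
      obtain ⟨i, m, rfl⟩ := hx
      rw [frq_X_qpow, ← pow_mul, pow_succ]
    | zero => rw [map_zero, zero_pow hq0]
    | add x y hx hy ihx ihy => rw [map_add, ihx, ihy, hqpk, add_pow_char_pow]
    | smul c x hx ih => rw [map_smul, ih, smul_pow, ← hcard, FiniteField.pow_card]
  -- the `Polynomial K`-submodule generated by `S`
  have hSL : ((fun w => oA q K n w) '' S) ⊆ ↑(LL q K n) := by
    rintro _ ⟨s, hs, rfl⟩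
    exact (mem_LL_iff q K n s).mpr (hS s hs)
  have hNL : Submodule.span (Polynomial K) ((fun w => oA q K n w) '' S) ≤ LL q K n :=
    Submodule.span_le.mpr hSL
  set Nsp := Submodule.span (Polynomial K) ((fun w => oA q K n w) '' S) with hNsp
  set N' : Submodule (Polynomial K) ↥(LL q K n) := Nsp.comap (LL q K n).subtype with hN'
  obtain ⟨r, bM, bN, femb, aa, hsnf⟩ := Submodule.smithNormalForm (R := Polynomial K) (M := ↥(LL q K n)) (bbs q K hq2 n) N'
  have hr : r ≤ n := by simpa using Fintype.card_le_of_embedding femb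
  obtain ⟨σ, hσ0⟩ := exists_perm_comp femb (Fin.castLEEmb hr)
  have hσ : ∀ i : Fin r, σ (Fin.castLE hr i) = femb i := fun i => hσ0 i
  set cb : Module.Basis (Fin n) (Polynomial K) ↥(LL q K n) := bM.reindex σ.symm with hcb
  have hcbap : ∀ j, cb j = bM (σ j) := fun j => by
    rw [hcb, Module.Basis.reindex_apply, Equiv.symm_symm]
  set A := (bbs q K hq2 n).equiv cb (Equiv.refl _) with hA
  have hAap : ∀ i, A ((bbs q K hq2 n) i) = cb i := fun i => by
    rw [hA, Module.Basis.equiv_apply]; rfl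
  set hh : Fin n → MvPolynomial (Fin n) K := fun j => (oA q K n).symm ↑(cb j) with hhh
  set gg : Fin n → MvPolynomial (Fin n) K :=
    fun j => (oA q K n).symm ↑(A.symm ((bbs q K hq2 n) j)) with hgg
  have hoAh : ∀ j, oA q K n (hh j) = ↑(cb j) := fun j =>
    LinearEquiv.apply_symm_apply _ _
  have hoAg : ∀ j, oA q K n (gg j) = ↑(A.symm ((bbs q K hq2 n) j)) := fun j =>
    LinearEquiv.apply_symm_apply _ _
  have hhmem : ∀ j, hh j ∈ LinSpan q K n := fun j =>
    (mem_LL_iff q K n _).mp (by rw [hoAh]; exact (cb j).2)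
  have hgmemL : ∀ j, gg j ∈ LinSpan q K n := fun j =>
    (mem_LL_iff q K n _).mp (by rw [hoAg]; exact (A.symm ((bbs q K hq2 n) j)).2)
  -- the two bind₁ computations giving the automorphism property
  have hTg := bind_key q K n hfq gg hgmemL
    ((LL q K n).subtype ∘ₗ A.symm.toLinearMap)
    (fun j => by
      have hj : (⟨oA q K n (X j), Submodule.subset_span ⟨j, rfl⟩⟩ : ↥(LL q K n)) =
          (bbs q K hq2 n) j := Subtype.ext (bbs_coe q K hq2 n j).symm
      rw [hj]
      show ↑(A.symm ((bbs q K hq2 n) j)) = oA q K n (gg j)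
      exact (hoAg j).symm)
  have hTh := bind_key q K n hfq hh hhmem
    ((LL q K n).subtype ∘ₗ A.toLinearMap)
    (fun j => by
      have hj : (⟨oA q K n (X j), Submodule.subset_span ⟨j, rfl⟩⟩ : ↥(LL q K n)) =
          (bbs q K hq2 n) j := Subtype.ext (bbs_coe q K hq2 n j).symm
      rw [hj]
      show ↑(A ((bbs q K hq2 n) j)) = oA q K n (hh j)
      rw [hAap, (hoAh j).symm])
  have hbind_g_h : ∀ i, bind₁ gg (hh i) = X i := by
    intro i
    rw [hTg (hh i) (hhmem i)]
    have h1 : (⟨oA q K n (hh i), (mem_LL_iff q K n (hh i)).mpr (hhmem i)⟩ : ↥(LL q K n)) =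
        cb i := Subtype.ext (hoAh i)
    rw [h1]
    show (oA q K n).symm ↑(A.symm (cb i)) = X i
    rw [← hAap i, LinearEquiv.symm_apply_apply, bbs_coe, LinearEquiv.symm_apply_apply]
  have hbind_h_g : ∀ i, bind₁ hh (gg i) = X i := by
    intro i
    rw [hTh (gg i) (hgmemL i)]
    have h1 : (⟨oA q K n (gg i), (mem_LL_iff q K n (gg i)).mpr (hgmemL i)⟩ : ↥(LL q K n)) =
        A.symm ((bbs q K hq2 n) i) := Subtype.ext (hoAg i)
    rw [h1]
    show (oA q K n).symm ↑(A (A.symm ((bbs q K hq2 n) i))) = X i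
    rw [LinearEquiv.apply_symm_apply, bbs_coe, LinearEquiv.symm_apply_apply]
  -- nonvanishing of the diagonal entries
  have aa_ne : ∀ i, aa i ≠ 0 := by
    intro i h0
    have h1 := hsnf i
    rw [h0, zero_smul] at h1
    exact Module.Basis.ne_zero bN i (by
      apply Subtype.ext
      exact h1)
  -- the generators
  set Gen : Fin r → MvPolynomial (Fin n) K :=
    fun i => Polynomial.aeval (hh (Fin.castLE hr i)) (gpol q (aa i)) with hGen
  have hGenval : ∀ i, oA q K n (Gen i) =
      ((bN i : ↥(LL q K n)) : Module.AEval' (frq q K n)) := by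
    intro i
    rw [hGen]
    show oA q K n (Polynomial.aeval (hh (Fin.castLE hr i)) (gpol q (aa i))) = _
    rw [gpol_aeval q K n hfq (aa i) (hhmem (Fin.castLE hr i)), ← smul_oA]
    rw [hoAh, hcbap, hσ, ← Submodule.coe_smul, ← hsnf i]
  have hGenLS : ∀ x ∈ Set.range Gen, x ∈ LinSpan q K n := by
    rintro _ ⟨i, rfl⟩
    refine (mem_LL_iff q K n _).mp ?_
    rw [hGenval i]
    exact SetLike.coe_mem ((bN i : ↥(LL q K n)))
  have hspan_vL : Submodule.span (Polynomial K)
      (Set.range fun i => ((bN i : ↥(LL q K n)) : Module.AEval' (frq q K n))) = Nsp := by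
    have h1 : (fun i => ((bN i : ↥(LL q K n)) : Module.AEval' (frq q K n))) =
        ⇑((LL q K n).subtype ∘ₗ N'.subtype) ∘ ⇑bN := rfl
    rw [h1, Set.range_comp, ← Submodule.map_span, Module.Basis.span_eq, Submodule.map_comp,
      Submodule.map_subtype_top, hN', Submodule.map_comap_subtype]
    exact inf_eq_right.mpr hNL
  have hIdeal : Ideal.span S = Ideal.span (Set.range Gen) := by
    apply le_antisymm
    · rw [Ideal.span_le]
      intro s hs
      have himg : (fun w => oA q K n w) '' (Set.range Gen) =
          Set.range fun i => ((bN i : ↥(LL q K n)) : Module.AEval' (frq q K n)) := by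
        rw [← Set.range_comp]
        exact congrArg Set.range (funext fun i => hGenval i)
      have h1 : oA q K n s ∈ Submodule.span (Polynomial K)
          ((fun w => oA q K n w) '' (Set.range Gen)) := by
        rw [himg, hspan_vL]
        exact Submodule.subset_span ⟨s, hs, rfl⟩
      have h2 := ideal_key q K n hq2 hfq (Set.range Gen) hGenLS (oA q K n s) h1
      rwa [LinearEquiv.symm_apply_apply] at h2
    · rw [Ideal.span_le]
      rintro _ ⟨i, rfl⟩
      have h1 : oA q K n (Gen i) ∈ Nsp := by
        rw [hGenval i]
        exact Submodule.mem_comap.mp (bN i).2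
      have h2 := ideal_key q K n hq2 hfq S hS (oA q K n (Gen i)) (by rw [← hNsp]; exact h1)
      rwa [LinearEquiv.symm_apply_apply] at h2
  constructor
  · exact ⟨hh, ⟨gg, hbind_g_h, hbind_h_g⟩, hhmem, r, hr, fun i => gpol q (aa i),
      fun i => gpol_mem q _, fun i => gpol_ne_zero q hq2 (aa_ne i), hIdeal⟩
  -- part 2
  intro hprime
  refine ⟨hh, ⟨gg, hbind_g_h, hbind_h_g⟩, hhmem, r, hr, ?_⟩
  have hψφ : ∀ x, bind₁ gg (bind₁ hh x) = x := fun x => by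
    rw [bind₁_bind₁]
    simp [hbind_g_h, bind₁_X_left]
  have hφψ : ∀ x, bind₁ hh (bind₁ gg x) = x := fun x => by
    rw [bind₁_bind₁]
    simp [hbind_h_g, bind₁_X_left]
  have hbij : Function.Bijective ⇑(bind₁ hh :
      MvPolynomial (Fin n) K →ₐ[K] MvPolynomial (Fin n) K) :=
    ⟨Function.LeftInverse.injective hψφ, fun y => ⟨bind₁ gg y, hφψ y⟩⟩
  set bI : Ideal (MvPolynomial (Fin n) K) := Ideal.span (Set.range fun i : Fin r =>
    Polynomial.aeval (X (Fin.castLE hr i) : MvPolynomial (Fin n) K) (gpol q (aa i))) with hbI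
  have hmapb : Ideal.map (bind₁ hh) bI = Ideal.span S := by
    rw [hIdeal, hbI, Ideal.map_span, ← Set.range_comp]
    congr 1
    refine congrArg Set.range (funext fun i => ?_)
    show bind₁ hh (Polynomial.aeval (X (Fin.castLE hr i) : MvPolynomial (Fin n) K)
      (gpol q (aa i))) = Gen i
    rw [← Polynomial.aeval_algHom_apply, bind₁_X_right, hGen]
  have hbprime : bI.IsPrime := by
    have hbc : bI = Ideal.comap (bind₁ hh :
        MvPolynomial (Fin n) K →ₐ[K] MvPolynomial (Fin n) K) (Ideal.span S) := by
      rw [← hmapb, Ideal.comap_map_of_bijective _ hbij]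
    rw [hbc]
    exact Ideal.IsPrime.comap _ (hK := hprime)
  have hXw : ∀ i : Fin r, ∃ w : Polynomial K,
      gpol q (aa i) = Polynomial.X * w ∧ w ≠ 0 := by
    intro i
    obtain ⟨w, hw⟩ := Polynomial.X_dvd_iff.mpr
      (coeff_zero_of_mem_linSpanUni q hq0 (gpol_mem q (aa i)))
    exact ⟨w, hw, fun h0 => gpol_ne_zero q hq2 (aa_ne i) (by rw [hw, h0, mul_zero])⟩
  have hXmem : ∀ i : Fin r, (X (Fin.castLE hr i) : MvPolynomial (Fin n) K) ∈ bI := by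
    intro i
    obtain ⟨w, hw, hwne⟩ := hXw i
    have hgen : Polynomial.aeval (X (Fin.castLE hr i) : MvPolynomial (Fin n) K)
        (gpol q (aa i)) ∈ bI := Ideal.subset_span ⟨i, rfl⟩
    rw [hw, map_mul, Polynomial.aeval_X] at hgen
    rcases hbprime.mem_or_mem hgen with hc | hc
    · exact hc
    exfalso
    set ρ : MvPolynomial (Fin n) K →ₐ[K] Polynomial K :=
      aeval (fun k => if k = Fin.castLE hr i then Polynomial.X else 0) with hρ
    have hρX : ρ (X (Fin.castLE hr i)) = Polynomial.X := by rw [hρ, aeval_X, if_pos rfl]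
    have hρb : Ideal.map ρ bI ≤ Ideal.span {gpol q (aa i)} := by
      rw [hbI, Ideal.map_span, Ideal.span_le]
      rintro _ ⟨_, ⟨i', rfl⟩, rfl⟩
      rw [← Polynomial.aeval_algHom_apply]
      by_cases hii : i' = i
      · subst hii
        rw [hρX, Polynomial.aeval_X_left_apply]
        exact Ideal.subset_span rfl
      · have h0 : ρ (X (Fin.castLE hr i')) = 0 := by
          rw [hρ, aeval_X, if_neg (fun hc => hii (Fin.castLE_injective hr hc))]
        rw [h0, ← Polynomial.coeff_zero_eq_aeval_zero',
          coeff_zero_of_mem_linSpanUni q hq0 (gpol_mem q (aa i')), map_zero]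
        exact Ideal.zero_mem _
    have hwmem : w ∈ Ideal.span {gpol q (aa i)} := by
      have h1 : ρ (Polynomial.aeval (X (Fin.castLE hr i) : MvPolynomial (Fin n) K) w) ∈
          Ideal.map ρ bI := Ideal.mem_map_of_mem ρ hc
      rw [← Polynomial.aeval_algHom_apply, hρX, Polynomial.aeval_X_left_apply] at h1
      exact hρb h1
    obtain ⟨t, ht⟩ := Ideal.mem_span_singleton.mp hwmem
    have htne : t ≠ 0 := fun h0 => hwne (by rw [ht, h0, mul_zero])
    have hdeg := congrArg Polynomial.natDegree ht
    rw [hw, Polynomial.natDegree_mul (mul_ne_zero Polynomial.X_ne_zero hwne) htne,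
      Polynomial.natDegree_mul Polynomial.X_ne_zero hwne, Polynomial.natDegree_X] at hdeg
    omega
  have hbeq : bI = Ideal.span (Set.range fun i : Fin r =>
      (X (Fin.castLE hr i) : MvPolynomial (Fin n) K)) := by
    apply le_antisymm
    · rw [hbI, Ideal.span_le]
      rintro _ ⟨i, rfl⟩
      obtain ⟨w, hw, -⟩ := hXw i
      show Polynomial.aeval (X (Fin.castLE hr i) : MvPolynomial (Fin n) K)
        (gpol q (aa i)) ∈ _
      rw [hw, map_mul, Polynomial.aeval_X]
      exact Ideal.mul_mem_right _ _ (Ideal.subset_span ⟨i, rfl⟩)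
    · rw [Ideal.span_le]
      rintro _ ⟨i, rfl⟩
      exact hXmem i
  rw [← hmapb, hbeq, Ideal.map_span, ← Set.range_comp]
  congr 1
  exact congrArg Set.range (funext fun i => by exact bind₁_X_right hh (Fin.castLE hr i))
end

section
/- Let A = F_q[X_1,...,X_n]/I be a finitely generated F_q-algebra, where I is an ideal of F_q[X_1,...,X_n] generated by multivariate linearized polynomials. Then A is isomorphic as an F_q-algebra to a polynomial ring over F_q (in some number of variables) if and only if A is an integral domain. -/
set_option maxHeartbeats 1000000


open MvPolynomial

namespace Statement7Aux

variable {K : Type*} [Field K]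

/-- The coefficient-wise lift of a one-variable polynomial to a linearized polynomial
in the variable `X i`. -/
noncomputable def linCoef (q : ℕ) {ι : Type*} (i : ι) : Polynomial K →ₗ[K] MvPolynomial ι K where
  toFun p := p.sum fun m c => c • (X i ^ q ^ m : MvPolynomial ι K)
  map_add' p₁ p₂ := Polynomial.sum_add_index p₁ p₂ _ (fun _ => zero_smul K _)
    (fun _ c₁ c₂ => add_smul c₁ c₂ _)
  map_smul' c p := by
    rw [Polynomial.sum_smul_index p c _ (fun i => by simp), Polynomial.smul_sum]
    simp [mul_smul]

lemma linCoef_monomial (q : ℕ) {ι : Type*} (i : ι) (m : ℕ) (c : K) :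
    linCoef q i (Polynomial.monomial m c) = c • (X i ^ q ^ m : MvPolynomial ι K) := by
  have : linCoef q i (Polynomial.monomial m c)
      = (Polynomial.monomial m c).sum fun m c => c • (X i ^ q ^ m : MvPolynomial ι K) := rfl
  rw [this, Polynomial.sum_monomial_index _ _ (zero_smul K _)]

/-- The linear map sending a vector of one-variable polynomials to the corresponding
multivariate linearized polynomial. -/
noncomputable def theta (q : ℕ) {ι : Type*} [Fintype ι] :
    (ι → Polynomial K) →ₗ[K] MvPolynomial ι K :=
  ∑ i, (linCoef q i).comp (LinearMap.proj i)

lemma theta_apply (q : ℕ) {ι : Type*} [Fintype ι] (v : ι → Polynomial K) :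
    theta q v = ∑ i, linCoef q i (v i) := by
  simp [theta]

lemma theta_single (q : ℕ) {ι : Type*} [Fintype ι] [DecidableEq ι] (i : ι) (p : Polynomial K) :
    theta q (Pi.single i p) = linCoef q i p := by
  rw [theta_apply, Finset.sum_eq_single i]
  · simp
  · intro j _ hj; rw [Pi.single_eq_of_ne hj, map_zero]
  · intro h; exact absurd (Finset.mem_univ i) h

lemma theta_single_one (q : ℕ) {ι : Type*} [Fintype ι] [DecidableEq ι] (i : ι) :
    theta q (Pi.single i (1 : Polynomial K)) = X i := by
  have h1 : (1 : Polynomial K) = Polynomial.monomial 0 1 := by simp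
  rw [theta_single, h1, linCoef_monomial]
  simp

section Char

variable {p k q : ℕ} [Fact p.Prime] [CharP K p]

lemma hq2 (hqpk : q = p ^ k) (hk : 0 < k) : 2 ≤ q := by
  subst hqpk
  calc 2 ≤ p := (Fact.out : p.Prime).two_le
  _ = p ^ 1 := (pow_one p).symm
  _ ≤ p ^ k := Nat.pow_le_pow_right (Fact.out : p.Prime).pos hk

lemma linCoef_X_mul (hqpk : q = p ^ k) (hc : ∀ c : K, c ^ q = c)
    {ι : Type*} (i : ι) (pol : Polynomial K) :
    linCoef q i (Polynomial.X * pol) = (linCoef q i pol) ^ q := by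
  induction pol using Polynomial.induction_on' with
  | add f g hf hg =>
    rw [mul_add, map_add, hf, hg, map_add, hqpk, add_pow_char_pow]
  | monomial m c =>
    rw [Polynomial.X_mul_monomial, linCoef_monomial, linCoef_monomial, smul_pow, hc,
      ← pow_mul, ← pow_succ]

lemma theta_X_smul (hqpk : q = p ^ k) (hc : ∀ c : K, c ^ q = c)
    {ι : Type*} [Fintype ι] (v : ι → Polynomial K) :
    theta q ((Polynomial.X : Polynomial K) • v) = theta q v ^ q := by
  rw [theta_apply, theta_apply, hqpk, sum_pow_char_pow]
  refine Finset.sum_congr rfl fun i _ => ?_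
  rw [Pi.smul_apply, smul_eq_mul, ← hqpk, linCoef_X_mul hqpk hc]

lemma theta_monomial_smul (hqpk : q = p ^ k) (hc : ∀ c : K, c ^ q = c)
    {ι : Type*} [Fintype ι] (m : ℕ) (c : K) (v : ι → Polynomial K) :
    theta q ((Polynomial.monomial m c) • v) = c • theta q v ^ q ^ m := by
  induction m with
  | zero =>
    have h0 : (Polynomial.monomial 0 c) • v = c • v := by
      funext j
      simp [Polynomial.smul_eq_C_mul, Algebra.smul_def, Polynomial.algebraMap_eq]
    rw [h0, map_smul, pow_zero, pow_one]
  | succ m ih =>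
    have h1 : (Polynomial.monomial (m + 1) c) • v
        = (Polynomial.X : Polynomial K) • ((Polynomial.monomial m c) • v) := by
      rw [← smul_assoc, smul_eq_mul, Polynomial.X_mul_monomial]
    rw [h1, theta_X_smul hqpk hc, ih, smul_pow, hc, ← pow_mul, ← pow_succ]

lemma theta_smul (hqpk : q = p ^ k) (hc : ∀ c : K, c ^ q = c)
    {ι : Type*} [Fintype ι] (pol : Polynomial K) (v : ι → Polynomial K) :
    theta q (pol • v) = pol.sum fun m c => c • theta q v ^ q ^ m := by
  induction pol using Polynomial.induction_on' with
  | add f g hf hg =>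
    rw [add_smul, map_add, hf, hg,
      Polynomial.sum_add_index f g (fun m c => c • theta q v ^ q ^ m)
        (fun _ => zero_smul K _) (fun _ c₁ c₂ => add_smul c₁ c₂ _)]
  | monomial m c =>
    rw [theta_monomial_smul hqpk hc, Polynomial.sum_monomial_index _ _ (zero_smul K _)]

lemma theta_smul_mem_ideal (hqpk : q = p ^ k) (hc : ∀ c : K, c ^ q = c) (hk : 0 < k)
    {ι : Type*} [Fintype ι] (pol : Polynomial K) (v : ι → Polynomial K) :
    theta q (pol • v) ∈ Ideal.span {theta q v} := by
  rw [theta_smul hqpk hc, Polynomial.sum_def]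
  refine Submodule.sum_mem _ fun m _ => ?_
  rw [Algebra.smul_def]
  refine Ideal.mul_mem_left _ _ (Ideal.pow_mem_of_mem _ ?_ _ ?_)
  · exact Ideal.mem_span_singleton_self _
  · have := hq2 hqpk hk
    exact pow_pos (by omega) m

lemma constantCoeff_theta (q : ℕ) (hq0 : q ≠ 0) {ι : Type*} [Fintype ι]
    (v : ι → Polynomial K) :
    constantCoeff (theta q v) = 0 := by
  rw [theta_apply, map_sum]
  refine Finset.sum_eq_zero fun i _ => ?_
  show constantCoeff ((v i).sum fun m c => c • (X i ^ q ^ m : MvPolynomial ι K)) = 0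
  rw [Polynomial.sum_def, map_sum]
  refine Finset.sum_eq_zero fun m _ => ?_
  rw [Algebra.smul_def, map_mul, map_pow, constantCoeff_X, zero_pow (pow_ne_zero m hq0)]
  ring

/-- The saturated submodule of relations. -/
noncomputable def Msub (hqpk : q = p ^ k) (hc : ∀ c : K, c ^ q = c) (hk : 0 < k)
    {ι : Type*} [Fintype ι] (I : Ideal (MvPolynomial ι K)) :
    Submodule (Polynomial K) (ι → Polynomial K) where
  carrier := {v | theta q v ∈ I}
  add_mem' ha hb := by simpa [map_add] using I.add_mem ha hb
  zero_mem' := by simp [Set.mem_setOf_eq, map_zero, I.zero_mem]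
  smul_mem' := by
    intro pol v hv
    rw [Set.mem_setOf_eq] at hv ⊢
    exact (Ideal.span_singleton_le_iff_mem I).mpr hv (theta_smul_mem_ideal hqpk hc hk pol v)

lemma mem_Msub (hqpk : q = p ^ k) (hc : ∀ c : K, c ^ q = c) (hk : 0 < k)
    {ι : Type*} [Fintype ι] {I : Ideal (MvPolynomial ι K)} (v : ι → Polynomial K) :
    v ∈ Msub hqpk hc hk I ↔ theta q v ∈ I := Iff.rfl

/-- Saturation: the quotient by `Msub` is torsion-free when the quotient ring is a domain. -/
lemma Msub_saturated (hqpk : q = p ^ k) (hc : ∀ c : K, c ^ q = c) (hk : 0 < k)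
    {ι : Type*} [Fintype ι] {I : Ideal (MvPolynomial ι K)}
    (hI : I.IsPrime) (hIc : ∀ f ∈ I, constantCoeff f = 0) :
    ∀ (pol : Polynomial K) (v : ι → Polynomial K), pol ≠ 0 →
      pol • v ∈ Msub hqpk hc hk I → v ∈ Msub hqpk hc hk I := by
  have hq2' := hq2 hqpk hk
  have hq0 : q ≠ 0 := by omega
  suffices H : ∀ (N : ℕ) (pol : Polynomial K) (v : ι → Polynomial K), pol.natDegree ≤ N →
      pol ≠ 0 → theta q (pol • v) ∈ I → theta q v ∈ I by
    intro pol v hp h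
    exact H pol.natDegree pol v le_rfl hp h
  intro N
  induction N with
  | zero =>
    intro pol v hdeg hp h
    have hC : pol = Polynomial.C (pol.coeff 0) :=
      Polynomial.eq_C_of_natDegree_eq_zero (Nat.le_zero.mp hdeg)
    have hc0 : pol.coeff 0 ≠ 0 := by
      intro h0; exact hp (by rw [hC, h0, map_zero])
    have hsm : pol • v = (pol.coeff 0) • v := by
      funext j
      rw [Pi.smul_apply, Pi.smul_apply, smul_eq_mul, Polynomial.smul_eq_C_mul, ← hC]
    rw [hsm, map_smul] at h
    have : theta q v = (pol.coeff 0)⁻¹ • ((pol.coeff 0) • theta q v) := by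
      rw [smul_smul, inv_mul_cancel₀ hc0, one_smul]
    rw [this, Algebra.smul_def]
    exact Ideal.mul_mem_left _ _ h
  | succ N ih =>
    intro pol v hdeg hp h
    by_cases h0 : pol.coeff 0 = 0
    · obtain ⟨pol', rfl⟩ := Polynomial.X_dvd_iff.mpr h0
      have hp' : pol' ≠ 0 := fun h' => hp (by rw [h', mul_zero])
      rw [mul_smul, theta_X_smul hqpk hc] at h
      have h' : theta q (pol' • v) ∈ I := hI.mem_of_pow_mem q h
      refine ih pol' v ?_ hp' h'
      have hdm : (Polynomial.X * pol').natDegree = 1 + pol'.natDegree := by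
        rw [Polynomial.natDegree_mul Polynomial.X_ne_zero hp', Polynomial.natDegree_X]
      omega
    · set g := theta q v with hg
      set u := pol.sum (fun m c => c • g ^ (q ^ m - 1)) with hu
      have key : theta q (pol • v) = g * u := by
        rw [theta_smul hqpk hc, hu, Polynomial.sum_def, Polynomial.sum_def, Finset.mul_sum]
        refine Finset.sum_congr rfl fun m _ => ?_
        have he : q ^ m - 1 + 1 = q ^ m := Nat.succ_pred_eq_of_pos (pow_pos (by omega) m)
        rw [mul_smul_comm, ← pow_succ', he]
      rw [key] at h
      rcases hI.mem_or_mem h with hgI | huI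
      · exact hgI
      · exfalso
        have hcc : constantCoeff u = pol.coeff 0 := by
          rw [hu, Polynomial.sum_def, map_sum, Finset.sum_eq_single 0]
          · have h00 : q ^ 0 - 1 = 0 := by simp
            rw [h00, pow_zero, Algebra.smul_def, mul_one, MvPolynomial.algebraMap_eq,
              constantCoeff_C]
          · intro b _ hb0
            have hqb : q ≤ q ^ b := Nat.le_self_pow hb0 q
            rw [Algebra.smul_def, map_mul, map_pow, hg, constantCoeff_theta q hq0 v,
              zero_pow (by omega : q ^ b - 1 ≠ 0), mul_zero]
          · intro h00
            exact absurd (Polynomial.mem_support_iff.mpr h0) h00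
        exact h0 (hcc ▸ hIc u huI)

/-- The algebra map induced by a `K[t]`-linear map intertwines `theta`. -/
lemma aeval_theta (hqpk : q = p ^ k) (hc : ∀ c : K, c ^ q = c)
    {ι ι' : Type*} [Fintype ι] [Fintype ι'] [DecidableEq ι]
    (β : (ι → Polynomial K) →ₗ[Polynomial K] (ι' → Polynomial K)) (v : ι → Polynomial K) :
    aeval (fun i => theta q (β (Pi.single i 1))) (theta q v) = theta q (β v) := by
  have hsingle : ∀ (i : ι) (pol : Polynomial K),
      aeval (fun i => theta q (β (Pi.single i 1))) (theta q (Pi.single i pol))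
        = theta q (β (Pi.single i pol)) := by
    intro i pol
    induction pol using Polynomial.induction_on' with
    | add f g hf hg =>
      have hadd : (Pi.single i (f + g) : ι → Polynomial K) = Pi.single i f + Pi.single i g := by
        rw [Pi.single_add]
      rw [hadd, map_add, map_add, map_add, map_add, hf, hg]
    | monomial m c =>
      have hsm : (Pi.single i (Polynomial.monomial m c) : ι → Polynomial K)
          = (Polynomial.monomial m c) • (Pi.single i (1 : Polynomial K) : ι → Polynomial K) := by
        funext j
        by_cases hj : j = i
        · subst hj; simp
        · simp [Pi.single_eq_of_ne hj]
      rw [hsm, theta_monomial_smul hqpk hc, theta_single_one, map_smul, map_pow, aeval_X,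
        LinearMap.map_smul, theta_monomial_smul hqpk hc]
  rw [← Finset.univ_sum_single v, map_sum, map_sum, map_sum, map_sum]
  exact Finset.sum_congr rfl fun i _ => hsingle i (v i)

end Char

/-- Killing all variables of an `MvPolynomial` ring: quotient by the span of the variables. -/
noncomputable def quotSpanXEquiv (σ : Type*) (B : Type*) [CommRing B] :
    (MvPolynomial σ B ⧸ Ideal.span (Set.range (X (R := B) (σ := σ)))) ≃ₐ[B] B := by
  have main : ∀ f : MvPolynomial σ B,
      f - C (aeval (fun _ : σ => (0 : B)) f) ∈ Ideal.span (Set.range (X (R := B) (σ := σ))) := by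
    intro f
    induction f using MvPolynomial.induction_on with
    | C a => simpa using Ideal.zero_mem _
    | add f g hf hg =>
      have := Ideal.add_mem _ hf hg
      rw [map_add, C_add] at *
      convert this using 1
      ring
    | mul_X f i hf =>
      have : aeval (fun _ : σ => (0 : B)) (f * X i) = 0 := by simp
      rw [this, map_zero, sub_zero]
      exact Ideal.mul_mem_left _ f (Ideal.subset_span ⟨i, rfl⟩)
  have hker : RingHom.ker ((aeval (fun _ : σ => (0 : B))) : MvPolynomial σ B →ₐ[B] B)
      = Ideal.span (Set.range (X (R := B) (σ := σ))) := by
    apply le_antisymm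
    · intro f hf
      have hf0 : aeval (fun _ : σ => (0 : B)) f = 0 := hf
      have := main f
      rwa [hf0, map_zero, sub_zero] at this
    · rw [Ideal.span_le]
      rintro _ ⟨i, rfl⟩
      simp [RingHom.mem_ker]
  have hsurj : Function.Surjective ((aeval (fun _ : σ => (0 : B))) : MvPolynomial σ B →ₐ[B] B) :=
    fun b => ⟨C b, by simp⟩
  exact (Ideal.quotientEquivAlgOfEq B hker.symm).trans
    (Ideal.quotientKerAlgEquivOfSurjective hsurj)

/-- Killing the left variables of a sum. -/
noncomputable def quotSpanInlEquiv (σ τ : Type*) :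
    (MvPolynomial (σ ⊕ τ) K ⧸
        Ideal.span (Set.range fun a : σ => (X (Sum.inl a) : MvPolynomial (σ ⊕ τ) K)))
      ≃ₐ[K] MvPolynomial τ K := by
  have hmap : Ideal.span (Set.range (X (R := MvPolynomial τ K) (σ := σ)))
      = Ideal.map (sumAlgEquiv K σ τ : MvPolynomial (σ ⊕ τ) K →+* MvPolynomial σ (MvPolynomial τ K))
        (Ideal.span (Set.range fun a : σ => (X (Sum.inl a) : MvPolynomial (σ ⊕ τ) K))) := by
    rw [Ideal.map_span, ← Set.range_comp]
    have hcomp : (⇑(sumAlgEquiv K σ τ : MvPolynomial (σ ⊕ τ) K →+* MvPolynomial σ (MvPolynomial τ K))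
        ∘ fun a : σ => (X (Sum.inl a) : MvPolynomial (σ ⊕ τ) K))
        = fun a : σ => (X a : MvPolynomial σ (MvPolynomial τ K)) := by
      funext a
      show sumAlgEquiv K σ τ (X (Sum.inl a)) = X a
      exact sumAlgEquiv_X_inl K σ τ a
    rw [hcomp]
  exact (Ideal.quotientEquivAlg _ _ (sumAlgEquiv K σ τ) hmap).trans
    ((quotSpanXEquiv σ (MvPolynomial τ K)).restrictScalars K)

end Statement7Aux

/-- Let `A = F_q[X_1,…,X_n]/I` with `I` generated by multivariate
linearized polynomials. Then `A` is isomorphic as an `F_q`-algebra to a polynomial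
ring over `F_q` (in some number of variables) if and only if `A` is a domain. -/
theorem statement_7 (q : ℕ) (hq : IsPrimePow q) (K : Type*) [Field K] [Fintype K]
    (hcard : Fintype.card K = q) (n : ℕ)
    (S : Set (MvPolynomial (Fin n) K)) (hS : ∀ s ∈ S, s ∈ LinSpan q K n) :
    (∃ m : ℕ, Nonempty
        ((MvPolynomial (Fin n) K ⧸ Ideal.span S) ≃ₐ[K] MvPolynomial (Fin m) K)) ↔
      IsDomain (MvPolynomial (Fin n) K ⧸ Ideal.span S) := by
  constructor
  · rintro ⟨m, ⟨e⟩⟩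
    exact e.toRingEquiv.toMulEquiv.isDomain (MvPolynomial (Fin m) K)
  · intro hdom
    classical
    obtain ⟨p, k, hpp, hk, hpk⟩ := hq
    have hp : p.Prime := Nat.prime_iff.mpr hpp
    haveI : Fact p.Prime := ⟨hp⟩
    haveI hKp : CharP K p := by
      haveI h1 : CharP K (ringChar K) := ringChar.charP K
      obtain ⟨n', hn'p, hcard'⟩ := FiniteField.card K (ringChar K)
      have hpr : p = ringChar K := by
        have hdvd : p ∣ ringChar K ^ (n' : ℕ) := by
          rw [← hcard', hcard, ← hpk]
          exact dvd_pow_self p (by omega : k ≠ 0)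
        exact (Nat.prime_dvd_prime_iff_eq hp hn'p).mp (hp.dvd_of_dvd_pow hdvd)
      rw [hpr]; exact h1
    have hqpk : q = p ^ k := hpk.symm
    have hc : ∀ c : K, c ^ q = c := fun c => by rw [← hcard]; exact FiniteField.pow_card c
    set I : Ideal (MvPolynomial (Fin n) K) := Ideal.span S with hIdef
    have hIprime : I.IsPrime := (Ideal.Quotient.isDomain_iff_prime I).mp hdom
    have hq2' : 2 ≤ q := Statement7Aux.hq2 hqpk hk
    have hq0 : q ≠ 0 := by omega
    have hIc : ∀ f ∈ I, constantCoeff f = 0 := by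
      intro f hf
      have hle : I ≤ RingHom.ker (constantCoeff : MvPolynomial (Fin n) K →+* K) := by
        rw [hIdef, Ideal.span_le]
        intro s hs
        have h2 : {f : MvPolynomial (Fin n) K | ∃ i m, f = X i ^ q ^ m} ⊆
            (Submodule.restrictScalars K
              ((RingHom.ker (constantCoeff : MvPolynomial (Fin n) K →+* K)).restrictScalars
                (MvPolynomial (Fin n) K)) : Set (MvPolynomial (Fin n) K)) := by
          rintro _ ⟨i, m, rfl⟩
          show constantCoeff (X i ^ q ^ m : MvPolynomial (Fin n) K) = 0
          rw [map_pow, constantCoeff_X, zero_pow (pow_ne_zero m hq0)]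
        exact Submodule.span_le.mpr h2 (hS s hs)
      exact hle hf
    -- the module of linearized relations
    set Ms : Submodule (Polynomial K) (Fin n → Polynomial K) :=
      Statement7Aux.Msub hqpk hc hk I with hMsdef
    haveI : Module.Finite (Polynomial K) Ms :=
      Module.Finite.iff_fg.mpr (IsNoetherian.noetherian Ms)
    haveI hNZ : NoZeroSMulDivisors (Polynomial K)
        ((Fin n → Polynomial K) ⧸ Ms) := by
      constructor
      intro pol x hx
      by_cases hp0 : pol = 0
      · exact Or.inl hp0
      · refine Or.inr ?_
        obtain ⟨v, rfl⟩ := Submodule.Quotient.mk_surjective Ms x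
        rw [← Submodule.Quotient.mk_smul, Submodule.Quotient.mk_eq_zero] at hx
        rw [Submodule.Quotient.mk_eq_zero]
        exact Statement7Aux.Msub_saturated hqpk hc hk hIprime hIc pol v hp0 hx
    haveI hNZM : NoZeroSMulDivisors (Polynomial K) Ms := by
      constructor
      intro pol m hm
      by_cases hp0 : pol = 0
      · exact Or.inl hp0
      · refine Or.inr ?_
        ext1
        have : pol • (m : Fin n → Polynomial K) = 0 := congrArg Subtype.val hm
        funext j
        have hj := congrFun this j
        simp only [Pi.smul_apply, smul_eq_mul, Pi.zero_apply] at hj ⊢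
        rcases mul_eq_zero.mp hj with h | h
        · exact absurd h hp0
        · exact h
    haveI : Module.Free (Polynomial K) ((Fin n → Polynomial K) ⧸ Ms) :=
      Module.free_of_finite_type_torsion_free'
    haveI : Module.Free (Polynomial K) Ms :=
      Module.free_of_finite_type_torsion_free'
    -- a section of the quotient map
    obtain ⟨sQ, hsQ⟩ := Module.projective_lifting_property Ms.mkQ LinearMap.id
      (Submodule.mkQ_surjective Ms)
    have hmemsub : ∀ f : Fin n → Polynomial K, f - sQ (Ms.mkQ f) ∈ Ms := by
      intro f
      rw [← Submodule.Quotient.mk_eq_zero]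
      have h1 : Ms.mkQ (f - sQ (Ms.mkQ f)) = 0 := by
        rw [map_sub]
        have := LinearMap.congr_fun hsQ (Ms.mkQ f)
        simp only [LinearMap.comp_apply, LinearMap.id_apply] at this
        rw [this, sub_self]
      simpa using h1
    set φ1 : (Fin n → Polynomial K) →ₗ[Polynomial K] Ms × ((Fin n → Polynomial K) ⧸ Ms) :=
      LinearMap.prod ((LinearMap.id - sQ ∘ₗ Ms.mkQ).codRestrict Ms hmemsub) Ms.mkQ with hφ1
    set φ2 : (Ms × ((Fin n → Polynomial K) ⧸ Ms)) →ₗ[Polynomial K] (Fin n → Polynomial K) :=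
      Ms.subtype ∘ₗ LinearMap.fst _ _ _ + sQ ∘ₗ LinearMap.snd _ _ _ with hφ2
    have hmk0 : ∀ m : Ms, Ms.mkQ (m : Fin n → Polynomial K) = 0 := by
      intro m
      simpa using (Submodule.Quotient.mk_eq_zero Ms).mpr m.2
    have hmksQ : ∀ x, Ms.mkQ (sQ x) = x := by
      intro x
      have := LinearMap.congr_fun hsQ x
      simpa using this
    have h21 : φ2 ∘ₗ φ1 = LinearMap.id := by
      apply LinearMap.ext; intro f
      simp only [hφ1, hφ2, LinearMap.comp_apply, LinearMap.prod_apply, LinearMap.add_apply,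
        LinearMap.fst_apply, LinearMap.snd_apply, Function.prod_apply, LinearMap.codRestrict_apply,
        Submodule.subtype_apply, LinearMap.sub_apply, LinearMap.id_apply]
      abel
    have h12 : φ1 ∘ₗ φ2 = LinearMap.id := by
      apply LinearMap.ext; intro mx
      obtain ⟨m, x⟩ := mx
      have hval : φ2 (m, x) = (m : Fin n → Polynomial K) + sQ x := by
        simp [hφ2]
      have hmk : Ms.mkQ (φ2 (m, x)) = x := by
        rw [hval, map_add, hmk0, hmksQ, zero_add]
      apply Prod.ext
      · apply Subtype.ext
        show φ2 (m, x) - sQ (Ms.mkQ (φ2 (m, x))) = (m : Fin n → Polynomial K)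
        rw [hmk, hval, add_sub_cancel_right]
      · exact hmk
    set e1 : (Fin n → Polynomial K) ≃ₗ[Polynomial K]
        (Ms × ((Fin n → Polynomial K) ⧸ Ms)) := LinearEquiv.ofLinear φ1 φ2 h12 h21 with he1
    -- bases
    set bM : Module.Basis (Module.Free.ChooseBasisIndex (Polynomial K) Ms) (Polynomial K) Ms :=
      Module.Free.chooseBasis _ _ with hbM
    set bQ : Module.Basis (Module.Free.ChooseBasisIndex (Polynomial K)
        ((Fin n → Polynomial K) ⧸ Ms)) (Polynomial K) ((Fin n → Polynomial K) ⧸ Ms) :=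
      Module.Free.chooseBasis _ _ with hbQ
    set ιM := Module.Free.ChooseBasisIndex (Polynomial K) Ms with hιM
    set ιQ := Module.Free.ChooseBasisIndex (Polynomial K)
      ((Fin n → Polynomial K) ⧸ Ms) with hιQ
    set α : ((ιM ⊕ ιQ) → Polynomial K) ≃ₗ[Polynomial K] (Fin n → Polynomial K) :=
      (LinearEquiv.sumArrowLequivProdArrow ιM ιQ (Polynomial K) (Polynomial K)).trans
        ((bM.equivFun.symm.prodCongr bQ.equivFun.symm).trans e1.symm) with hα
    have hα1 : ∀ a : ιM, α (Pi.single (Sum.inl a) 1) = (bM a : Fin n → Polynomial K) := by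
      intro a
      rw [hα]
      simp only [LinearEquiv.trans_apply]
      have hs1 : (LinearEquiv.sumArrowLequivProdArrow ιM ιQ (Polynomial K) (Polynomial K))
          (Pi.single (Sum.inl a) 1) = (Pi.single a 1, (0 : ιQ → Polynomial K)) := by
        have hfst : ∀ x : ιM, ((LinearEquiv.sumArrowLequivProdArrow ιM ιQ (Polynomial K)
            (Polynomial K)) (Pi.single (Sum.inl a) 1)).1 x
            = (Pi.single a (1 : Polynomial K) : ιM → Polynomial K) x := by
          intro x
          rw [LinearEquiv.sumArrowLequivProdArrow_apply_fst]
          simp [Pi.single_apply, Sum.inl.injEq]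
        have hsnd : ∀ x : ιQ, ((LinearEquiv.sumArrowLequivProdArrow ιM ιQ (Polynomial K)
            (Polynomial K)) (Pi.single (Sum.inl a) 1)).2 x = 0 := by
          intro x
          rw [LinearEquiv.sumArrowLequivProdArrow_apply_snd]
          simp [Pi.single_apply]
        exact Prod.ext (funext hfst) (funext hsnd)
      rw [hs1]
      have hs2 : (bM.equivFun.symm.prodCongr bQ.equivFun.symm)
          (Pi.single a 1, (0 : ιQ → Polynomial K)) = (bM a, 0) := by
        apply Prod.ext
        · show bM.equivFun.symm (Pi.single a 1) = bM a
          rw [Module.Basis.equivFun_symm_apply]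
          simp [Pi.single_apply]
        · show bQ.equivFun.symm 0 = 0
          exact map_zero _
      rw [hs2]
      show e1.symm (bM a, 0) = _
      rw [he1, LinearEquiv.ofLinear_symm_apply]
      simp [hφ2]
    -- the algebra equivalence
    have hkeyf := Statement7Aux.aeval_theta hqpk hc α.toLinearMap
    have hkeyb := Statement7Aux.aeval_theta hqpk hc α.symm.toLinearMap
    have hfb : (aeval fun j => Statement7Aux.theta q (α.toLinearMap (Pi.single j 1))).comp
        (aeval fun i => Statement7Aux.theta q (α.symm.toLinearMap (Pi.single i 1)))
        = AlgHom.id K (MvPolynomial (Fin n) K) := by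
      apply MvPolynomial.algHom_ext
      intro i
      rw [AlgHom.comp_apply, AlgHom.id_apply, aeval_X, hkeyf]
      have hsi : α.toLinearMap (α.symm.toLinearMap (Pi.single i 1)) = Pi.single i 1 := by
        simp
      rw [hsi, Statement7Aux.theta_single_one]
    have hbf : (aeval fun i => Statement7Aux.theta q (α.symm.toLinearMap (Pi.single i 1))).comp
        (aeval fun j => Statement7Aux.theta q (α.toLinearMap (Pi.single j 1)))
        = AlgHom.id K (MvPolynomial (ιM ⊕ ιQ) K) := by
      apply MvPolynomial.algHom_ext
      intro j
      rw [AlgHom.comp_apply, AlgHom.id_apply, aeval_X, hkeyb]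
      have hsj : α.symm.toLinearMap (α.toLinearMap (Pi.single j 1)) = Pi.single j 1 := by
        simp
      rw [hsj, Statement7Aux.theta_single_one]
    set Φ : MvPolynomial (ιM ⊕ ιQ) K ≃ₐ[K] MvPolynomial (Fin n) K :=
      AlgEquiv.ofAlgHom (aeval fun j => Statement7Aux.theta q (α.toLinearMap (Pi.single j 1)))
        (aeval fun i => Statement7Aux.theta q (α.symm.toLinearMap (Pi.single i 1))) hfb hbf
      with hΦ
    -- ideal correspondence
    have hspan : Ideal.span S = Ideal.map (Φ : MvPolynomial (ιM ⊕ ιQ) K →+* MvPolynomial (Fin n) K)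
        (Ideal.span (Set.range fun a : ιM => (X (Sum.inl a) : MvPolynomial (ιM ⊕ ιQ) K))) := by
      have hXmem : ∀ a : ιM,
          Φ (X (Sum.inl a)) = Statement7Aux.theta q (bM a : Fin n → Polynomial K) := by
        intro a
        show (aeval fun j => Statement7Aux.theta q (α.toLinearMap (Pi.single j 1)))
          (X (Sum.inl a)) = _
        rw [aeval_X]
        show Statement7Aux.theta q (α.toLinearMap (Pi.single (Sum.inl a) 1)) = _
        have : α.toLinearMap (Pi.single (Sum.inl a) 1) = (bM a : Fin n → Polynomial K) := hα1 a
        rw [this]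
      rw [Ideal.map_span, ← Set.range_comp]
      have hcomp : (⇑(Φ : MvPolynomial (ιM ⊕ ιQ) K →+* MvPolynomial (Fin n) K)
          ∘ fun a : ιM => (X (Sum.inl a) : MvPolynomial (ιM ⊕ ιQ) K))
          = fun a : ιM => Statement7Aux.theta q (bM a : Fin n → Polynomial K) := by
        funext a
        exact hXmem a
      rw [hcomp]
      apply le_antisymm
      · rw [Ideal.span_le]
        intro s hs
        have hrange : ∃ v : Fin n → Polynomial K, Statement7Aux.theta q v = s := by
          have hsub : LinSpan q K n
              ≤ LinearMap.range (Statement7Aux.theta (K := K) q (ι := Fin n)) := by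
            rw [LinSpan, Submodule.span_le]
            rintro _ ⟨i, m, rfl⟩
            exact ⟨Pi.single i (Polynomial.monomial m 1), by
              rw [Statement7Aux.theta_single, Statement7Aux.linCoef_monomial, one_smul]⟩
          exact hsub (hS s hs)
        obtain ⟨v, rfl⟩ := hrange
        have hvM : v ∈ Ms := by
          show Statement7Aux.theta q v ∈ I
          exact Ideal.subset_span hs
        have hrepr : v = ∑ a, bM.equivFun ⟨v, hvM⟩ a • (bM a : Fin n → Polynomial K) := by
          have h1 := bM.sum_equivFun ⟨v, hvM⟩
          have h2 := congrArg (Subtype.val) h1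
          rw [Submodule.coe_sum] at h2
          simp only [SetLike.val_smul] at h2
          exact h2.symm
        rw [hrepr, map_sum]
        refine Submodule.sum_mem _ fun a _ => ?_
        have hmem := Statement7Aux.theta_smul_mem_ideal hqpk hc hk
          (bM.equivFun ⟨v, hvM⟩ a) ((bM a : Fin n → Polynomial K))
        refine Ideal.span_mono ?_ hmem
        rw [Set.singleton_subset_iff]
        exact ⟨a, rfl⟩
      · rw [Ideal.span_le]
        rintro _ ⟨a, rfl⟩
        show Statement7Aux.theta q (bM a : Fin n → Polynomial K) ∈ I
        exact (bM a).2
    refine ⟨Fintype.card ιQ, ⟨?_⟩⟩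
    have hIS : I = Ideal.span S := hIdef
    exact ((Ideal.quotientEquivAlg
        (Ideal.span (Set.range fun a : ιM => (X (Sum.inl a) : MvPolynomial (ιM ⊕ ιQ) K)))
        (Ideal.span S) Φ hspan).symm.trans
      ((Statement7Aux.quotSpanInlEquiv ιM ιQ).trans
        (renameEquiv K (Fintype.equivFin ιQ))))
end

section
/- Let R be an integral domain containing a field K such that K is integrally closed in L, the field of fractions of R. Let A ∈ GL_n(R), let h(X) ∈ R[X] be the characteristic polynomial of A and let g(X) ∈ L[X] be the minimal polynomial of A over L. If f(A) = 0 for some nonzero f(X) ∈ K[X], then g(X) and h(X) both have all their coefficients in K, i.e. g(X), h(X) ∈ K[X]. -/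
open Polynomial

/-- Evaluation of the characteristic polynomial. -/
lemma charpoly_eval_aux {F : Type*} [Field F] {n : ℕ} (M : Matrix (Fin n) (Fin n) F) (t : F) :
    M.charpoly.eval t = (t • (1 : Matrix (Fin n) (Fin n) F) - M).det := by
  rw [Matrix.charpoly, ← Polynomial.coe_evalRingHom, RingHom.map_det]
  congr 1
  ext i j
  by_cases h : i = j <;>
    simp [h, Matrix.charmatrix_apply_eq, Matrix.charmatrix_apply_ne, Matrix.one_apply,
      Matrix.sub_apply, Matrix.smul_apply]

/-- A monic polynomial over `L` whose roots in an algebraically closed extension `F` are all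
integral over `K` comes from `K[X]`, provided `K` is integrally closed in `L`. -/
lemma monic_map_of_roots_integral {K L F : Type*} [Field K] [Field L] [Field F]
    [Algebra K L] [Algebra L F] [Algebra K F] [IsScalarTower K L F] [IsAlgClosed F]
    (hKint : ∀ x : L, IsIntegral K x → ∃ k : K, algebraMap K L k = x)
    (p : L[X]) (hp : p.Monic)
    (hroots : ∀ x ∈ (p.map (algebraMap L F)).roots, IsIntegral K x) :
    ∃ p₀ : K[X], p = p₀.map (algebraMap K L) := by
  have hlift : p.map (algebraMap L F) ∈
      Polynomial.lifts (algebraMap (integralClosure K F) F) := by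
    refine (IsAlgClosed.splits _).mem_lift_of_roots_mem_range
      (hp.map _) (algebraMap (integralClosure K F) F) fun a ha => ?_
    exact ⟨⟨a, hroots a ha⟩, rfl⟩
  rw [Polynomial.lifts_iff_coeff_lifts] at hlift
  have hcoeff : ∀ m : ℕ, p.coeff m ∈ Set.range (algebraMap K L) := by
    intro m
    obtain ⟨c, hc⟩ := hlift m
    have hint : IsIntegral K ((p.map (algebraMap L F)).coeff m) := by
      rw [← hc]; exact c.2
    rw [Polynomial.coeff_map] at hint
    rw [isIntegral_algebraMap_iff (algebraMap L F).injective] at hint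
    obtain ⟨k, hk⟩ := hKint _ hint
    exact ⟨k, hk⟩
  have : p ∈ Polynomial.lifts (algebraMap K L) :=
    (Polynomial.lifts_iff_coeff_lifts p).2 hcoeff
  obtain ⟨p₀, hp₀⟩ := (Polynomial.mem_lifts _).1 this
  exact ⟨p₀, hp₀.symm⟩

/-- Let `R` be a domain containing a field `K` such that `K` is
integrally closed in the fraction field `L` of `R`.  Let `A ∈ GL_n(R)` with
characteristic polynomial `h ∈ R[X]` and minimal polynomial `g ∈ L[X]` over `L`.
If `f(A) = 0` for some nonzero `f ∈ K[X]`, then `g` and `h` have all their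
coefficients in `K`. -/
theorem statement_9 (K R L : Type*) [Field K] [CommRing R] [IsDomain R] [Field L]
    [Algebra K R] [Algebra R L] [IsFractionRing R L] [Algebra K L] [IsScalarTower K R L]
    (hKint : ∀ x : L, IsIntegral K x → ∃ k : K, algebraMap K L k = x)
    (n : ℕ) (A : Matrix (Fin n) (Fin n) R) (hA : IsUnit A)
    (f : Polynomial K) (hf : f ≠ 0) (hfA : Polynomial.aeval A f = 0) :
    (∃ g₀ : Polynomial K,
        minpoly L (A.map (algebraMap R L)) = g₀.map (algebraMap K L)) ∧
    (∃ h₀ : Polynomial K, A.charpoly = h₀.map (algebraMap K R)) := by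
  classical
  set F := AlgebraicClosure L
  set B : Matrix (Fin n) (Fin n) L := A.map (algebraMap R L) with hB
  -- `f` mapped to `L` annihilates `B`
  have hfB : Polynomial.aeval B (f.map (algebraMap K L)) = 0 := by
    rw [Polynomial.aeval_map_algebraMap]
    have : B = (IsScalarTower.toAlgHom K R L).mapMatrix A := rfl
    rw [this, Polynomial.aeval_algHom_apply, hfA, map_zero]
  have hfL : f.map (algebraMap K L) ≠ 0 :=
    Polynomial.map_ne_zero_iff (algebraMap K L).injective |>.2 hf
  -- `B` is integral over `L`
  have hBint : IsIntegral L B :=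
    ⟨B.charpoly, B.charpoly_monic, B.aeval_self_charpoly⟩
  -- minpoly divides f_L
  have hgdvd : minpoly L B ∣ f.map (algebraMap K L) := minpoly.dvd L B hfB
  -- roots of f over F are integral over K
  have hfroots : ∀ x : F, (f.map (algebraMap K F)).eval x = 0 → IsIntegral K x := by
    intro x hx
    refine IsAlgebraic.isIntegral ⟨f, hf, ?_⟩
    rwa [Polynomial.aeval_def, ← Polynomial.eval_map]
  have hfF : (f.map (algebraMap K L)).map (algebraMap L F) = f.map (algebraMap K F) := by
    rw [Polynomial.map_map, ← IsScalarTower.algebraMap_eq]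
  constructor
  · -- minpoly part
    have hgroots : ∀ x ∈ ((minpoly L B).map (algebraMap L F)).roots, IsIntegral K x := by
      intro x hx
      have hroot : ((minpoly L B).map (algebraMap L F)).eval x = 0 :=
        (Polynomial.mem_roots'.1 hx).2
      obtain ⟨c, hc⟩ := hgdvd
      apply hfroots
      rw [← hfF, hc, Polynomial.map_mul, Polynomial.eval_mul, hroot, zero_mul]
    obtain ⟨g₀, hg₀⟩ := monic_map_of_roots_integral hKint (minpoly L B)
      (minpoly.monic hBint) hgroots
    exact ⟨g₀, hg₀⟩
  · -- charpoly part
    have hcharmap : A.charpoly.map (algebraMap R L) = B.charpoly :=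
      (A.charpoly_map (algebraMap R L)).symm
    set BF : Matrix (Fin n) (Fin n) F := B.map (algebraMap L F) with hBF
    have hfBF : Polynomial.aeval BF (f.map (algebraMap K F)) = 0 := by
      rw [← hfF, Polynomial.aeval_map_algebraMap]
      have : BF = (IsScalarTower.toAlgHom L L F).mapMatrix B := rfl
      rw [this, Polynomial.aeval_algHom_apply, hfB, map_zero]
    -- roots of charpoly of BF are integral over K
    have hcroots : ∀ x ∈ ((B.charpoly).map (algebraMap L F)).roots, IsIntegral K x := by
      intro x hx
      have hroot : (BF.charpoly).eval x = 0 := by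
        rw [hBF, Matrix.charpoly_map]
        exact (Polynomial.mem_roots'.1 hx).2
      -- x is in the spectrum of BF
      have hspec : x ∈ spectrum F BF := by
        rw [spectrum.mem_iff, Algebra.algebraMap_eq_smul_one]
        intro hu
        have hdet := (Matrix.isUnit_iff_isUnit_det _).1 hu
        rw [← charpoly_eval_aux, hroot] at hdet
        exact hdet.ne_zero rfl
      have hmem := spectrum.subset_polynomial_aeval BF (f.map (algebraMap K F))
        ⟨x, hspec, rfl⟩
      rw [hfBF] at hmem
      apply hfroots
      by_contra hne
      rw [spectrum.mem_iff, sub_zero] at hmem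
      exact hmem ((IsUnit.mk0 _ hne).map (algebraMap F (Matrix (Fin n) (Fin n) F)))
    obtain ⟨h₀, hh₀⟩ := monic_map_of_roots_integral hKint B.charpoly B.charpoly_monic hcroots
    refine ⟨h₀, ?_⟩
    have hinj : Function.Injective (Polynomial.map (algebraMap R L)) :=
      fun p q h => Polynomial.map_injective _ (IsFractionRing.injective R L) h
    apply hinj
    rw [hcharmap, hh₀, Polynomial.map_map, ← IsScalarTower.algebraMap_eq]
end

section
/- Let K be a field and suppose A ∈ GL_n(K[t]) satisfies f(A) = 0 for some nonzero f ∈ K[X], and write f = f_1···f_r with f_1,...,f_r ∈ K[X] pairwise coprime. Then K[t]^n = Ker(f_1(A)) ⊕ ... ⊕ Ker(f_r(A)) as K[t]-modules, and A is conjugate over K[t] (i.e. by a matrix in GL_n(K[t])) to a block diagonal matrix with blocks A_1,...,A_r satisfying f_i(A_i) = 0 for all i. Moreover, if f is the minimal polynomial (respectively characteristic polynomial) of A and each f_i is monic, then f_i is the minimal polynomial (respectively characteristic polynomial) of A_i for each i. -/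
open Polynomial Matrix




section Aux

variable {R M : Type*} [CommRing R] [AddCommGroup M] [Module R M]

lemma aux_ker_aeval_prod {ι : Type*} [DecidableEq ι] (φ : Module.End R M) (s : Finset ι)
    (p : ι → R[X]) (hcop : ∀ i ∈ s, ∀ j ∈ s, i ≠ j → IsCoprime (p i) (p j)) :
    LinearMap.ker (aeval φ (∏ i ∈ s, p i)) = ⨆ i ∈ s, LinearMap.ker (aeval φ (p i)) := by
  induction s using Finset.induction_on with
  | empty =>
    simp only [Finset.prod_empty, _root_.map_one, Finset.notMem_empty, iSup_false, iSup_bot]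
    exact LinearMap.ker_eq_bot_of_injective (f := (1 : Module.End R M)) (fun a b h => h)
  | @insert a s ha ih =>
    rw [Finset.prod_insert ha]
    have hc : IsCoprime (p a) (∏ i ∈ s, p i) :=
      IsCoprime.prod_right fun j hj =>
        hcop a (Finset.mem_insert_self a s) j (Finset.mem_insert_of_mem hj)
          (fun h => ha (h ▸ hj))
    rw [← Polynomial.sup_ker_aeval_eq_ker_aeval_mul_of_coprime φ hc,
      ih (fun i hi j hj hij => hcop i (Finset.mem_insert_of_mem hi) j
        (Finset.mem_insert_of_mem hj) hij)]
    simp only [Finset.iSup_insert]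

lemma aux_aeval_restrict_apply (φ : Module.End R M) {W : Submodule R M}
    (h : ∀ x ∈ W, φ x ∈ W) (q : R[X]) (x : W) :
    ((aeval (φ.restrict h) q) x : M) = aeval φ q (x : M) := by
  induction q using Polynomial.induction_on' with
  | add p q hp hq => simp [hp, hq]
  | monomial k c =>
    rw [aeval_monomial, aeval_monomial]
    simp only [Module.End.mul_apply, Module.algebraMap_end_apply]
    rw [Module.End.pow_restrict]
    simp [LinearMap.restrict_apply]

end Aux


section Aux2

variable {R : Type*} [CommRing R] {o : Type*} [Fintype o] [DecidableEq o] [LinearOrder o]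
variable {m' : o → Type*} [∀ i, Fintype (m' i)] [∀ i, DecidableEq (m' i)]

/-- equiv between a fiber of the sigma type and the block index type -/
def sigmaFiberEquiv' (i : o) : m' i ≃ { x : Σ j, m' j // x.1 = i } where
  toFun a := ⟨⟨i, a⟩, rfl⟩
  invFun x := cast (congrArg m' x.2) x.1.2
  left_inv a := rfl
  right_inv := by rintro ⟨⟨j, b⟩, rfl⟩; rfl

lemma aux_det_blockDiagonal' (M : ∀ i, Matrix (m' i) (m' i) R) :
    (blockDiagonal' M).det = ∏ i, (M i).det := by
  rw [(blockTriangular_blockDiagonal' M).det_fintype]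
  refine Finset.prod_congr rfl fun i _ => ?_
  rw [← Matrix.det_submatrix_equiv_self (sigmaFiberEquiv' i)]
  congr 1
  ext a b
  show blockDiagonal' M ⟨i, a⟩ ⟨i, b⟩ = M i a b
  exact blockDiagonal'_apply_eq M i a b

lemma aux_charmatrix_blockDiagonal' (M : ∀ i, Matrix (m' i) (m' i) R) :
    charmatrix (blockDiagonal' M) = blockDiagonal' fun i => charmatrix (M i) := by
  ext ⟨i, a⟩ ⟨j, b⟩
  rcases eq_or_ne i j with rfl | hij
  · rcases eq_or_ne a b with rfl | hab
    · simp [charmatrix_apply, blockDiagonal'_apply_eq, diagonal_apply]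
    · simp [charmatrix_apply, blockDiagonal'_apply_eq, diagonal_apply, Sigma.mk.inj_iff, hab]
  · have h : (⟨i,a⟩ : Σ k, m' k) ≠ ⟨j,b⟩ := by
      intro h; exact hij (congrArg Sigma.fst h)
    simp [charmatrix_apply, blockDiagonal'_apply_ne _ _ _ hij, diagonal_apply, h]

lemma aux_charpoly_blockDiagonal' (M : ∀ i, Matrix (m' i) (m' i) R) :
    (blockDiagonal' M).charpoly = ∏ i, (M i).charpoly := by
  rw [Matrix.charpoly, aux_charmatrix_blockDiagonal', aux_det_blockDiagonal']
  rfl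

end Aux2


section Aux3

lemma aux_multiset_prod_dvd_pow {α : Type*} [CommMonoid α] (s : Multiset α) (a : α)
    (h : ∀ x ∈ s, x ∣ a) : s.prod ∣ a ^ Multiset.card s := by
  induction s using Multiset.induction_on with
  | empty => simp
  | cons x s ih =>
    rw [Multiset.prod_cons, Multiset.card_cons, pow_succ']
    exact mul_dvd_mul (h x (Multiset.mem_cons_self x s)) (ih fun y hy => h y (Multiset.mem_cons_of_mem hy))

/-- conjugation by a unit as an algebra automorphism -/
noncomputable def auxConj {R A : Type*} [CommSemiring R] [Semiring A] [Algebra R A] (u : Aˣ) :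
    A ≃ₐ[R] A where
  toFun x := ↑u * x * ↑u⁻¹
  invFun x := ↑u⁻¹ * x * ↑u
  left_inv x := by simp [mul_assoc]
  right_inv x := by simp [mul_assoc]
  map_add' x y := by simp [mul_add, add_mul]
  map_mul' x y := by
    show (↑u:A) * (x*y) * ↑u⁻¹ = ↑u * x * ↑u⁻¹ * (↑u * y * ↑u⁻¹)
    have h : (↑u⁻¹ : A) * ↑u = 1 := u.inv_mul
    have h2 : (↑u:A) * x * ↑u⁻¹ * (↑u * y * ↑u⁻¹) = ↑u * (x * ((↑u⁻¹ * ↑u) * (y * ↑u⁻¹))) := by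
      simp [mul_assoc]
    rw [h2, h, one_mul]
    simp [mul_assoc]
  commutes' r := by
    show ↑u * algebraMap R A r * ↑u⁻¹ = algebraMap R A r
    rw [← Algebra.commutes r (↑u : A), mul_assoc, Units.mul_inv, mul_one]

lemma aux_conj_apply {R A : Type*} [CommSemiring R] [Semiring A] [Algebra R A] (u : Aˣ) (x : A) :
    auxConj (R := R) u x = ↑u * x * ↑u⁻¹ := rfl

lemma aux_charpoly_dvd_pow {F : Type*} [Field F] {m : ℕ} (M : Matrix (Fin m) (Fin m) F)
    (q : F[X]) (hq : Polynomial.aeval M q = 0) : M.charpoly ∣ q ^ m := by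
  classical
  let L := AlgebraicClosure F
  let ψ : F →+* L := algebraMap F L
  rw [← Polynomial.map_dvd_map' ψ, Polynomial.map_pow, ← Matrix.charpoly_map]
  set ML := M.map ψ with hML
  set qL := q.map ψ with hqL
  have hqML : Polynomial.aeval ML qL = 0 := by
    have h0 : Polynomial.aeval ML qL = Polynomial.aeval ML q := by
      rw [hqL]; exact Polynomial.aeval_map_algebraMap L ML q
    rw [h0, show ML = (AlgHom.mapMatrix (Algebra.ofId F L)) M from rfl,
      Polynomial.aeval_algHom_apply (AlgHom.mapMatrix (Algebra.ofId F L)) M q, hq, map_zero]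
  have hroot : ∀ μ : L, (ML.charpoly).IsRoot μ → (X - C μ) ∣ qL := by
    intro μ hμ
    rw [dvd_iff_isRoot]
    have hdet : (Matrix.diagonal (fun _ => μ) - ML).det = 0 := by
      have h1 : (ML.charpoly).eval μ = ((charmatrix ML).map (evalRingHom μ)).det := by
        rw [Matrix.charpoly, ← Polynomial.coe_evalRingHom, RingHom.map_det]
        rfl
      rw [IsRoot, h1] at hμ
      rw [← hμ]
      congr 1
      ext i j
      simp [charmatrix_apply, Matrix.diagonal_apply, apply_ite (eval μ)]
    obtain ⟨v, hv0, hv⟩ := (Matrix.exists_mulVec_eq_zero_iff).2 hdet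
    have hev : Matrix.toLin' ML v = μ • v := by
      rw [Matrix.sub_mulVec, sub_eq_zero] at hv
      have h1 : (Matrix.diagonal (fun _ => μ)).mulVec v = μ • v := by
        ext i; simp [Matrix.mulVec_diagonal]
      rw [h1] at hv
      rw [Matrix.toLin'_apply, ← hv]
    have heig : Module.End.HasEigenvector (Matrix.toLin' ML : Module.End L (Fin m → L)) μ v :=
      ⟨Module.End.mem_eigenspace_iff.2 hev, hv0⟩
    have := Module.End.aeval_apply_of_hasEigenvector (p := qL) heig
    have h2 : Polynomial.aeval (Matrix.toLin' ML) qL = 0 := by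
      have h3 : Matrix.toLin' ML = Matrix.toLinAlgEquiv' ML := rfl
      rw [h3, Polynomial.aeval_algEquiv, AlgHom.coe_comp, Function.comp_apply,
        hqML, map_zero]
    rw [h2] at this
    have h4 : qL.eval μ • v = 0 := by rw [← this]; rfl
    rcases smul_eq_zero.1 h4 with h | h
    · exact h
    · exact absurd h hv0
  have hmonic : (ML.charpoly).Monic := Matrix.charpoly_monic ML
  have hsplits : Splits ML.charpoly := IsAlgClosed.splits _
  have heq : ML.charpoly = ((ML.charpoly).roots.map fun a => X - C a).prod :=
    hsplits.eq_prod_roots_of_monic hmonic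
  have hfactors : ∀ x ∈ (ML.charpoly).roots.map fun a => X - C a, x ∣ qL := by
    intro x hx
    obtain ⟨μ, hμ, rfl⟩ := Multiset.mem_map.1 hx
    exact hroot μ (Polynomial.isRoot_of_mem_roots hμ)
  have hdvd := aux_multiset_prod_dvd_pow ((ML.charpoly).roots.map fun a => X - C a) qL hfactors
  rw [← heq] at hdvd
  refine hdvd.trans (pow_dvd_pow _ ?_)
  rw [Multiset.card_map]
  calc Multiset.card (ML.charpoly).roots ≤ (ML.charpoly).natDegree := Polynomial.card_roots' _
  _ = m := by rw [Matrix.charpoly_natDegree_eq_dim, Fintype.card_fin]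

end Aux3


section Aux4

variable {R M : Type*} [CommRing R] [AddCommGroup M] [Module R M]

lemma aux_toMatrix_reindex {ι ι' : Type*} [Fintype ι] [DecidableEq ι] [Fintype ι']
    [DecidableEq ι'] (v : Module.Basis ι R M) (e : ι ≃ ι') (φ : M →ₗ[R] M) :
    LinearMap.toMatrix (v.reindex e) (v.reindex e) φ =
      Matrix.reindex e e (LinearMap.toMatrix v v φ) := by
  ext i j
  rw [LinearMap.toMatrix_apply, Module.Basis.reindex_apply, Module.Basis.repr_reindex_apply]
  rw [Matrix.reindex_apply, Matrix.submatrix_apply, LinearMap.toMatrix_apply]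

/-- toMatrix of an endomorphism preserving each submodule in an internal decomposition,
w.r.t. the collected basis, is block diagonal. -/
lemma aux_toMatrix_collectedBasis {ι : Type*} [DecidableEq ι] [Fintype ι]
    {W : ι → Submodule R M} (hI : DirectSum.IsInternal W)
    {α : ι → Type*} [∀ i, Fintype (α i)] [∀ i, DecidableEq (α i)]
    (b : ∀ i, Module.Basis (α i) R (W i)) (φ : Module.End R M)
    (hstab : ∀ i, ∀ x ∈ W i, φ x ∈ W i) :
    LinearMap.toMatrix (hI.collectedBasis b) (hI.collectedBasis b) φ =
      Matrix.blockDiagonal' fun i =>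
        LinearMap.toMatrix (b i) (b i) (φ.restrict (hstab i)) := by
  ext ⟨i, a⟩ ⟨j, c⟩
  rw [LinearMap.toMatrix_apply]
  have hbc : hI.collectedBasis b ⟨j, c⟩ = (b j c : M) := by
    rw [hI.collectedBasis_coe]
  rw [hbc]
  have hmem : φ (b j c : M) ∈ W j := hstab j _ (b j c).2
  rcases eq_or_ne i j with rfl | hij
  · rw [blockDiagonal'_apply_eq, hI.collectedBasis_repr_of_mem b hmem,
      LinearMap.toMatrix_apply]
    congr 1
  · rw [blockDiagonal'_apply_ne _ a c hij,
      hI.collectedBasis_repr_of_mem_ne b (Ne.symm hij) hmem]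

/-- blockDiagonal' as an algebra hom from the product algebra. -/
def auxBlockDiagAlgHom (ι : Type*) [DecidableEq ι] [Fintype ι] (α : ι → Type*)
    [∀ i, Fintype (α i)] [∀ i, DecidableEq (α i)] (S : Type*) [CommRing S] :
    (∀ i, Matrix (α i) (α i) S) →ₐ[S] Matrix (Σ i, α i) (Σ i, α i) S :=
  { Matrix.blockDiagonal'RingHom α S with
    commutes' := fun c => by
      show Matrix.blockDiagonal' (fun i => (algebraMap S (Matrix (α i) (α i) S)) c) = _
      ext ⟨i, a⟩ ⟨j, d⟩
      rcases eq_or_ne i j with rfl | hij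
      · rcases eq_or_ne a d with rfl | had
        · simp [blockDiagonal'_apply_eq, Matrix.algebraMap_matrix_apply]
        · simp [blockDiagonal'_apply_eq, Matrix.algebraMap_matrix_apply, had,
            Sigma.mk.inj_iff]
      · have h : (⟨i,a⟩ : Σ k, α k) ≠ ⟨j,d⟩ := fun h => hij (congrArg Sigma.fst h)
        simp [blockDiagonal'_apply_ne _ _ _ hij, Matrix.algebraMap_matrix_apply, h] }

lemma aux_aeval_blockDiagonal' {ι : Type*} [DecidableEq ι] [Fintype ι] {α : ι → Type*}
    [∀ i, Fintype (α i)] [∀ i, DecidableEq (α i)] {S : Type*} [CommRing S]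
    (M : ∀ i, Matrix (α i) (α i) S) (q : S[X]) :
    Polynomial.aeval (Matrix.blockDiagonal' M) q =
      Matrix.blockDiagonal' fun i => Polynomial.aeval (M i) q := by
  have h := Polynomial.aeval_algHom_apply (auxBlockDiagAlgHom ι α S) M q
  have h2 : (auxBlockDiagAlgHom ι α S) M = Matrix.blockDiagonal' M := rfl
  rw [h2] at h
  have h3 : (Polynomial.aeval (R := S) (A := ∀ i, Matrix (α i) (α i) S) M q) =
      fun i => Polynomial.aeval (M i) q := by
    funext i
    exact (Polynomial.aeval_algHom_apply (Pi.evalAlgHom S (fun j => Matrix (α j) (α j) S) i) M q).symm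
  rw [h, h3]
  rfl

end Aux4

/-- Let `A ∈ GL_n(K[t])` satisfy `f(A) = 0` for a nonzero
`f ∈ K[X]` with `f = f_1 ⋯ f_r`, the `f_i` pairwise coprime.  Then
`K[t]^n = Ker f_1(A) ⊕ ⋯ ⊕ Ker f_r(A)`, and `A` is conjugate over `K[t]` to a
block diagonal matrix with blocks `A_1,…,A_r` satisfying `f_i(A_i) = 0`; moreover
if each `f_i` is monic and `f` is the minimal (resp. characteristic) polynomial of
`A`, then `f_i` is the minimal (resp. characteristic) polynomial of `A_i`. -/
theorem statement_10 (K : Type*) [Field K] (n r : ℕ)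
    (A : Matrix (Fin n) (Fin n) (Polynomial K)) (hA : IsUnit A)
    (f : Polynomial K) (hf0 : f ≠ 0)
    (fi : Fin r → Polynomial K) (hprod : f = ∏ i, fi i)
    (hcop : ∀ i j, i ≠ j → IsCoprime (fi i) (fi j))
    (hfA : Polynomial.aeval A f = 0) :
    DirectSum.IsInternal (fun i : Fin r =>
      LinearMap.ker (Matrix.mulVecLin (Polynomial.aeval A (fi i)))) ∧
    ∃ (d : Fin r → ℕ) (e : (Σ i : Fin r, Fin (d i)) ≃ Fin n)
      (Ai : ∀ i : Fin r, Matrix (Fin (d i)) (Fin (d i)) (Polynomial K))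
      (B : Matrix (Fin n) (Fin n) (Polynomial K)),
      IsUnit B ∧
      B * A = (Matrix.reindex e e (Matrix.blockDiagonal' Ai)) * B ∧
      (∀ i, Polynomial.aeval (Ai i) (fi i) = 0) ∧
      ((∀ i, (fi i).Monic) →
        ((minpoly (RatFunc K) (A.map (algebraMap (Polynomial K) (RatFunc K))) =
            f.map (algebraMap K (RatFunc K)) →
          ∀ i, minpoly (RatFunc K)
              ((Ai i).map (algebraMap (Polynomial K) (RatFunc K))) =
            (fi i).map (algebraMap K (RatFunc K))) ∧
         (A.charpoly = f.map (algebraMap K (Polynomial K)) →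
          ∀ i, (Ai i).charpoly = (fi i).map (algebraMap K (Polynomial K))))) := by
  classical
  -- notation
  let p : Fin r → (Polynomial K)[X] := fun i => (fi i).map (algebraMap K (Polynomial K))
  let φ : Module.End (Polynomial K) (Fin n → Polynomial K) := Matrix.mulVecLin A
  have hker : ∀ q : K[X], Matrix.mulVecLin (Polynomial.aeval A q) =
      Polynomial.aeval φ (q.map (algebraMap K (Polynomial K))) := by
    intro q
    have h1 : Polynomial.aeval A (q.map (algebraMap K (Polynomial K))) = Polynomial.aeval A q :=
      Polynomial.aeval_map_algebraMap _ _ _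
    have h2 : Polynomial.aeval φ (q.map (algebraMap K (Polynomial K))) =
        Matrix.toLinAlgEquiv' (Polynomial.aeval A (q.map (algebraMap K (Polynomial K)))) :=
      Polynomial.aeval_algHom_apply (Matrix.toLinAlgEquiv' :
        Matrix (Fin n) (Fin n) (Polynomial K) ≃ₐ[Polynomial K] _) A _
    rw [h2, h1]
    rfl
  have hcopP : ∀ i j, i ≠ j → IsCoprime (p i) (p j) := by
    intro i j hij
    have := (hcop i j hij).map (Polynomial.mapRingHom (algebraMap K (Polynomial K)))
    simpa [Polynomial.coe_mapRingHom, p] using this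
  have hfP : f.map (algebraMap K (Polynomial K)) = ∏ i, p i := by
    rw [hprod, Polynomial.map_prod]
  have htop : Polynomial.aeval φ (∏ i, p i) = 0 := by
    rw [← hfP, ← hker f, hfA, Matrix.mulVecLin_zero]
  have hkerprod : ∀ s : Finset (Fin r),
      LinearMap.ker (Polynomial.aeval φ (∏ i ∈ s, p i)) =
        ⨆ i ∈ s, LinearMap.ker (Polynomial.aeval φ (p i)) :=
    fun s => aux_ker_aeval_prod φ s p (fun i _ j _ hij => hcopP i j hij)
  set W : Fin r → Submodule (Polynomial K) (Fin n → Polynomial K) :=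
    fun i => LinearMap.ker (Polynomial.aeval φ (p i)) with hWdef
  have hWker : ∀ i, LinearMap.ker (Matrix.mulVecLin (Polynomial.aeval A (fi i))) = W i :=
    fun i => by rw [hker (fi i)]
  have hI : DirectSum.IsInternal W := by
    apply DirectSum.isInternal_submodule_of_iSupIndep_of_iSup_eq_top
    · intro i
      have he : (⨆ j, ⨆ (_ : j ≠ i), W j) = ⨆ j ∈ Finset.univ.erase i, W j := by
        simp [Finset.mem_erase]
      rw [he, ← hkerprod]
      exact Polynomial.disjoint_ker_aeval_of_isCoprime φ
        (IsCoprime.prod_right fun j hj => hcopP i j (Finset.ne_of_mem_erase hj).symm)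
    · have : (⨆ i, W i) = ⨆ i ∈ Finset.univ, W i := by simp
      rw [this, ← hkerprod, htop]
      exact LinearMap.ker_zero
  have hIker : DirectSum.IsInternal (fun i : Fin r =>
      LinearMap.ker (Matrix.mulVecLin (Polynomial.aeval A (fi i)))) := by
    have : (fun i : Fin r => LinearMap.ker (Matrix.mulVecLin (Polynomial.aeval A (fi i)))) = W :=
      funext hWker
    rw [this]; exact hI
  refine ⟨hIker, ?_⟩
  -- stability
  have hstab : ∀ i, ∀ x ∈ W i, φ x ∈ W i := by
    intro i x hx
    have hcomm : Polynomial.aeval φ (p i) * φ = φ * Polynomial.aeval φ (p i) := by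
      calc Polynomial.aeval φ (p i) * φ = Polynomial.aeval φ (p i * X) := by
            rw [_root_.map_mul, Polynomial.aeval_X]
      _ = Polynomial.aeval φ (X * p i) := by rw [mul_comm]
      _ = φ * Polynomial.aeval φ (p i) := by rw [_root_.map_mul, Polynomial.aeval_X]
    have h0 : Polynomial.aeval φ (p i) x = 0 := hx
    show Polynomial.aeval φ (p i) (φ x) = 0
    calc Polynomial.aeval φ (p i) (φ x) = (Polynomial.aeval φ (p i) * φ) x := rfl
    _ = (φ * Polynomial.aeval φ (p i)) x := by rw [hcomm]
    _ = φ (Polynomial.aeval φ (p i) x) := rfl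
    _ = 0 := by rw [h0, map_zero]
  -- bases of the kernels
  let bw : ∀ i, Σ m : ℕ, Module.Basis (Fin m) (Polynomial K) (W i) :=
    fun i => Submodule.basisOfPid (Pi.basisFun (Polynomial K) (Fin n)) (W i)
  let d : Fin r → ℕ := fun i => (bw i).1
  let b : ∀ i, Module.Basis (Fin (d i)) (Polynomial K) (W i) := fun i => (bw i).2
  let v : Module.Basis (Σ i, Fin (d i)) (Polynomial K) (Fin n → Polynomial K) := hI.collectedBasis b
  let P : Module.Basis (Fin n) (Polynomial K) (Fin n → Polynomial K) := Pi.basisFun _ _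
  let e : (Σ i : Fin r, Fin (d i)) ≃ Fin n := v.indexEquiv P
  let Ai : ∀ i, Matrix (Fin (d i)) (Fin (d i)) (Polynomial K) :=
    fun i => LinearMap.toMatrix (b i) (b i) (φ.restrict (hstab i))
  have hD : LinearMap.toMatrix v v φ = Matrix.blockDiagonal' Ai :=
    aux_toMatrix_collectedBasis hI b φ hstab
  let w : Module.Basis (Fin n) (Polynomial K) (Fin n → Polynomial K) := v.reindex e
  have hw : LinearMap.toMatrix w w φ = Matrix.reindex e e (Matrix.blockDiagonal' Ai) := by
    rw [show w = v.reindex e from rfl, aux_toMatrix_reindex, hD]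
  let B : Matrix (Fin n) (Fin n) (Polynomial K) := w.toMatrix P
  have hAP : LinearMap.toMatrix P P φ = A := by
    rw [show P = Pi.basisFun (Polynomial K) (Fin n) from rfl, LinearMap.toMatrix_eq_toMatrix']
    exact LinearMap.toMatrix'_toLin' A
  have hBA : B * A = Matrix.reindex e e (Matrix.blockDiagonal' Ai) * B := by
    rw [← hAP, ← hw]
    rw [show B = w.toMatrix P from rfl]
    rw [basis_toMatrix_mul_linearMap_toMatrix, linearMap_toMatrix_mul_basis_toMatrix]
  have hBunit : IsUnit B :=
    ⟨⟨B, P.toMatrix w, w.toMatrix_mul_toMatrix_flip P, P.toMatrix_mul_toMatrix_flip w⟩, rfl⟩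
  have hAi0 : ∀ i, Polynomial.aeval (Ai i) (fi i) = 0 := by
    intro i
    have h1 : Polynomial.aeval (Ai i) (fi i) = Polynomial.aeval (Ai i) (p i) :=
      (Polynomial.aeval_map_algebraMap _ _ _).symm
    have h2 : Polynomial.aeval (φ.restrict (hstab i)) (p i) = 0 := by
      apply LinearMap.ext; intro x
      rw [LinearMap.zero_apply]
      exact Subtype.ext ((aux_aeval_restrict_apply φ (hstab i) (p i) x).trans x.2)
    have h3 : Polynomial.aeval (Ai i) (p i) =
        (LinearMap.toMatrixAlgEquiv (b i)) (Polynomial.aeval (φ.restrict (hstab i)) (p i)) :=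
      Polynomial.aeval_algHom_apply (LinearMap.toMatrixAlgEquiv (b i)) _ _
    rw [h1, h3, h2, map_zero]
  refine ⟨d, e, Ai, B, hBunit, hBA, hAi0, ?_⟩
  intro hm
  -- common preparation over RatFunc K
  have hfi0 : ∀ j, fi j ≠ 0 := by
    intro j hj
    exact hf0 (by rw [hprod]; exact Finset.prod_eq_zero (Finset.mem_univ j) hj)
  have hψinj : Function.Injective (algebraMap (Polynomial K) (RatFunc K)) :=
    IsFractionRing.injective (Polynomial K) (RatFunc K)
  set g : Fin r → (RatFunc K)[X] := fun j => (fi j).map (algebraMap K (RatFunc K)) with hgdef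
  have hcompat : ∀ q : K[X],
      (q.map (algebraMap K (Polynomial K))).map (algebraMap (Polynomial K) (RatFunc K)) =
        q.map (algebraMap K (RatFunc K)) := by
    intro q; rw [Polynomial.map_map, ← IsScalarTower.algebraMap_eq]
  have hg0 : ∀ j, g j ≠ 0 := fun j => Polynomial.map_ne_zero (hfi0 j)
  have hgmonic : ∀ j, (g j).Monic := fun j => (hm j).map _
  have hcopg : ∀ i j, i ≠ j → IsCoprime (g i) (g j) := by
    intro i j hij
    have := (hcop i j hij).map (Polynomial.mapRingHom (algebraMap K (RatFunc K)))
    simpa [Polynomial.coe_mapRingHom, hgdef] using this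
  have haevalg : ∀ j, Polynomial.aeval
      ((Ai j).map (algebraMap (Polynomial K) (RatFunc K))) (g j) = 0 := by
    intro j
    have h1 : (Ai j).map (algebraMap (Polynomial K) (RatFunc K)) =
        (AlgHom.mapMatrix (IsScalarTower.toAlgHom K (Polynomial K) (RatFunc K))) (Ai j) := rfl
    have h0 : Polynomial.aeval ((Ai j).map (algebraMap (Polynomial K) (RatFunc K))) (fi j) = 0 := by
      rw [h1, Polynomial.aeval_algHom_apply, hAi0 j, map_zero]
    rw [hgdef]
    show Polynomial.aeval _ ((fi j).map (algebraMap K (RatFunc K))) = 0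
    rw [Polynomial.aeval_map_algebraMap, h0]
  have hfmapg : f.map (algebraMap K (RatFunc K)) = ∏ j, g j := by
    rw [hprod, Polynomial.map_prod]
  -- the conjugation over RatFunc K
  obtain ⟨u, hu⟩ := hBunit.map ((algebraMap (Polynomial K) (RatFunc K)).mapMatrix)
  have hbm : (Matrix.blockDiagonal' Ai).map (algebraMap (Polynomial K) (RatFunc K)) =
      Matrix.blockDiagonal' (fun j => (Ai j).map (algebraMap (Polynomial K) (RatFunc K))) :=
    Matrix.blockDiagonal'_map Ai _ (map_zero _)
  have hconj : (B.map (algebraMap (Polynomial K) (RatFunc K))) *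
      (A.map (algebraMap (Polynomial K) (RatFunc K))) =
      (Matrix.reindex e e (Matrix.blockDiagonal'
        (fun j => (Ai j).map (algebraMap (Polynomial K) (RatFunc K))))) *
      (B.map (algebraMap (Polynomial K) (RatFunc K))) := by
    have h0 := congrArg (fun M : Matrix (Fin n) (Fin n) (Polynomial K) =>
      M.map (algebraMap (Polynomial K) (RatFunc K))) hBA
    simp only [Matrix.map_mul] at h0
    rw [h0]
    congr 1
    rw [← hbm]
    rfl
  have hDA : auxConj (R := RatFunc K) u (A.map (algebraMap (Polynomial K) (RatFunc K))) =
      Matrix.reindex e e (Matrix.blockDiagonal'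
        (fun j => (Ai j).map (algebraMap (Polynomial K) (RatFunc K)))) := by
    rw [aux_conj_apply, hu, RingHom.mapMatrix_apply, hconj, ← RingHom.mapMatrix_apply, ← hu,
      mul_assoc, Units.mul_inv, mul_one]
  constructor
  · -- minimal polynomial
    intro hmin i
    set mp : Fin r → (RatFunc K)[X] :=
      fun j => minpoly (RatFunc K) ((Ai j).map (algebraMap (Polynomial K) (RatFunc K))) with hmpdef
    have hint : ∀ j, IsIntegral (RatFunc K) ((Ai j).map (algebraMap (Polynomial K) (RatFunc K))) :=
      fun j => Matrix.isIntegral _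
    have hmp0 : ∀ j, mp j ≠ 0 := fun j => minpoly.ne_zero (hint j)
    have hmpmonic : ∀ j, (mp j).Monic := fun j => minpoly.monic (hint j)
    have hmpdvd : ∀ j, mp j ∣ g j := fun j => minpoly.dvd _ _ (haevalg j)
    have haevalblock : Polynomial.aeval (Matrix.reindex e e (Matrix.blockDiagonal'
        (fun j => (Ai j).map (algebraMap (Polynomial K) (RatFunc K))))) (∏ j, mp j) = 0 := by
      have h1 : Matrix.reindex e e (Matrix.blockDiagonal'
          (fun j => (Ai j).map (algebraMap (Polynomial K) (RatFunc K)))) =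
          (Matrix.reindexAlgEquiv (RatFunc K) (RatFunc K) e) (Matrix.blockDiagonal'
          (fun j => (Ai j).map (algebraMap (Polynomial K) (RatFunc K)))) := rfl
      rw [h1, Polynomial.aeval_algHom_apply, aux_aeval_blockDiagonal']
      have h2 : (fun j => Polynomial.aeval
          ((Ai j).map (algebraMap (Polynomial K) (RatFunc K))) (∏ k, mp k)) =
          fun j => (0 : Matrix (Fin (d j)) (Fin (d j)) (RatFunc K)) := by
        funext j
        have h4 : ∏ k, mp k = mp j * ∏ k ∈ Finset.univ.erase j, mp k :=
          (Finset.mul_prod_erase _ _ (Finset.mem_univ j)).symm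
        rw [h4, _root_.map_mul, minpoly.aeval, zero_mul]
      rw [h2]
      rw [show Matrix.blockDiagonal'
          (fun j => (0 : Matrix (Fin (d j)) (Fin (d j)) (RatFunc K))) = 0 from
        Matrix.blockDiagonal'_zero]
      rw [map_zero]
    have hA_aeval : Polynomial.aeval
        (A.map (algebraMap (Polynomial K) (RatFunc K))) (∏ j, mp j) = 0 := by
      apply (auxConj (R := RatFunc K) u).injective
      rw [_root_.map_zero, ← Polynomial.aeval_algHom_apply (auxConj (R := RatFunc K) u), hDA,
        haevalblock]
    have hfdvd : ∏ j, g j ∣ ∏ j, mp j := by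
      rw [← hfmapg, ← hmin]
      exact minpoly.dvd _ _ hA_aeval
    have hmdvd : ∏ j, mp j ∣ ∏ j, g j :=
      Finset.prod_dvd_prod_of_dvd _ _ (fun j _ => hmpdvd j)
    have hprodeq : ∏ j, mp j = ∏ j, g j :=
      Polynomial.eq_of_monic_of_associated
        (Polynomial.monic_prod_of_monic _ _ fun j _ => hmpmonic j)
        (Polynomial.monic_prod_of_monic _ _ fun j _ => hgmonic j)
        (associated_of_dvd_dvd hmdvd hfdvd)
    have hdegle : ∀ j, (mp j).natDegree ≤ (g j).natDegree :=
      fun j => Polynomial.natDegree_le_of_dvd (hmpdvd j) (hg0 j)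
    have hsum : ∑ j, (mp j).natDegree = ∑ j, (g j).natDegree := by
      rw [← Polynomial.natDegree_prod _ _ (fun j _ => hmp0 j),
        ← Polynomial.natDegree_prod _ _ (fun j _ => hg0 j), hprodeq]
    have hdeg : (g i).natDegree ≤ (mp i).natDegree := by
      by_contra hlt
      push_neg at hlt
      have hlt2 := Finset.sum_lt_sum (fun j (_ : j ∈ Finset.univ) => hdegle j)
        ⟨i, Finset.mem_univ i, hlt⟩
      exact absurd hsum (ne_of_lt hlt2)
    exact Polynomial.eq_of_dvd_of_natDegree_le_of_leadingCoeff (hmpdvd i) hdeg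
      (by rw [(hmpmonic i).leadingCoeff, (hgmonic i).leadingCoeff])
  · -- characteristic polynomial
    intro hch i
    have hchar1 : A.charpoly = LinearMap.charpoly φ := by
      rw [← hAP, LinearMap.charpoly_toMatrix]
    have hchar2 : (Matrix.blockDiagonal' Ai).charpoly = LinearMap.charpoly φ := by
      rw [← hD, LinearMap.charpoly_toMatrix]
    have hprodchar : ∏ j, (Ai j).charpoly = f.map (algebraMap K (Polynomial K)) := by
      rw [← aux_charpoly_blockDiagonal', hchar2, ← hchar1, hch]
    set cF : Fin r → (RatFunc K)[X] :=
      fun j => ((Ai j).charpoly).map (algebraMap (Polynomial K) (RatFunc K)) with hcFdef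
    have hcFmonic : ∀ j, (cF j).Monic := fun j => (Matrix.charpoly_monic _).map _
    have hprodF : ∏ j, cF j = ∏ j, g j := by
      have h0 := congrArg (fun q : (Polynomial K)[X] =>
        q.map (algebraMap (Polynomial K) (RatFunc K))) hprodchar
      simp only [Polynomial.map_prod] at h0
      rw [hcFdef]
      rw [h0, hcompat f, hfmapg]
    have hdvdpow : ∀ j, cF j ∣ (g j) ^ (d j) := by
      intro j
      have h0 := aux_charpoly_dvd_pow ((Ai j).map (algebraMap (Polynomial K) (RatFunc K)))
        (g j) (haevalg j)
      rwa [Matrix.charpoly_map] at h0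
    have hcop_cF_g : ∀ j k, j ≠ k → IsCoprime (cF j) (g k) := by
      intro j k hjk
      exact ((hcopg k j hjk.symm).pow_right (n := d j)).symm.of_isCoprime_of_dvd_left
        (hdvdpow j)
    have hcF_dvd_g : ∀ j, cF j ∣ g j := by
      intro j
      have h1 : cF j ∣ ∏ k, g k := by
        rw [← hprodF]; exact Finset.dvd_prod_of_mem _ (Finset.mem_univ j)
      have h2 : ∏ k, g k = g j * ∏ k ∈ Finset.univ.erase j, g k :=
        (Finset.mul_prod_erase _ _ (Finset.mem_univ j)).symm
      rw [h2] at h1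
      have h3 : IsCoprime (cF j) (∏ k ∈ Finset.univ.erase j, g k) :=
        IsCoprime.prod_right fun k hk => hcop_cF_g j k (Finset.ne_of_mem_erase hk).symm
      exact h3.dvd_of_dvd_mul_right h1
    have hg_dvd_cF : ∀ j, g j ∣ cF j := by
      intro j
      have h1 : g j ∣ ∏ k, cF k := by
        rw [hprodF]; exact Finset.dvd_prod_of_mem _ (Finset.mem_univ j)
      have h2 : ∏ k, cF k = cF j * ∏ k ∈ Finset.univ.erase j, cF k :=
        (Finset.mul_prod_erase _ _ (Finset.mem_univ j)).symm
      rw [h2] at h1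
      have h3 : IsCoprime (g j) (∏ k ∈ Finset.univ.erase j, cF k) :=
        IsCoprime.prod_right fun k hk =>
          ((hcopg j k (Finset.ne_of_mem_erase hk).symm).pow_right
            (n := d k)).of_isCoprime_of_dvd_right (hdvdpow k)
      exact h3.dvd_of_dvd_mul_right h1
    have hcFg : cF i = g i :=
      Polynomial.eq_of_monic_of_associated (hcFmonic i) (hgmonic i)
        (associated_of_dvd_dvd (hcF_dvd_g i) (hg_dvd_cF i))
    apply Polynomial.map_injective _ hψinj
    rw [hcompat (fi i)]
    exact hcFg
end

section
/- The Jacobian Conjecture holds for polynomial maps without mixed terms: if K is a field of characteristic zero and f = (f_1,...,f_n) ∈ K[X_1,...,X_n]^n is a polynomial map without mixed terms whose Jacobian matrix Jf = (∂f_i/∂X_j) has determinant a nonzero element of K, then f is a polynomial automorphism. -/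
set_option linter.unusedSectionVars false
set_option maxHeartbeats 1000000

open MvPolynomial


/-- A polynomial map is without mixed terms if each component lies in
`K[X_1] + ⋯ + K[X_n]`. -/
def NoMixedTerms {K : Type*} [CommSemiring K] {n : ℕ}
    (f : Fin n → MvPolynomial (Fin n) K) : Prop :=
  ∀ i, f i ∈ ⨆ j : Fin n,
    Subalgebra.toSubmodule (MvPolynomial.supported K ({j} : Set (Fin n)))

namespace S16

variable {K : Type*} [Field K] [CharZero K]

section General
variable {R : Type*} [CommSemiring R] {σ : Type*}

lemma pderiv_eq_zero_of_supported {s : Set σ} {j : σ} (hj : j ∉ s) {p : MvPolynomial σ R}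
    (hp : p ∈ supported R s) : pderiv j p = 0 :=
  pderiv_eq_zero_of_notMem_vars fun h => hj (mem_supported.1 hp h)

lemma pderiv_mem_supported {s : Set σ} {j : σ} {p : MvPolynomial σ R}
    (hp : p ∈ supported R s) : pderiv j p ∈ supported R s := by
  classical
  induction hp using Algebra.adjoin_induction with
  | mem x hx =>
    obtain ⟨k, hk, rfl⟩ := hx
    by_cases h : k = j
    · subst h; rw [pderiv_X_self]; exact one_mem _
    · rw [pderiv_X_of_ne h]; exact zero_mem _
  | algebraMap r => rw [MvPolynomial.algebraMap_eq, pderiv_C]; exact zero_mem _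
  | add x y hx hy ihx ihy => rw [map_add]; exact add_mem ihx ihy
  | mul x y hx hy ihx ihy =>
    rw [pderiv_mul]
    exact add_mem (mul_mem ihx hy) (mul_mem hx ihy)

lemma aeval_congr_of_supported {S : Type*} [CommSemiring S] [Algebra R S] {s : Set σ}
    {v w : σ → S} (h : ∀ k ∈ s, v k = w k) {p : MvPolynomial σ R}
    (hp : p ∈ supported R s) : aeval v p = aeval w p := by
  induction hp using Algebra.adjoin_induction with
  | mem x hx => obtain ⟨k, hk, rfl⟩ := hx; simp [h k hk]
  | algebraMap r => simp
  | add x y hx hy ihx ihy => simp [ihx, ihy]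
  | mul x y hx hy ihx ihy => simp [ihx, ihy]

lemma aeval_mem_supported {τ : Type*} {s : Set σ} {t : Set τ}
    {v : σ → MvPolynomial τ R} (hv : ∀ k ∈ s, v k ∈ supported R t) {p : MvPolynomial σ R}
    (hp : p ∈ supported R s) : aeval v p ∈ supported R t := by
  induction hp using Algebra.adjoin_induction with
  | mem x hx => obtain ⟨k, hk, rfl⟩ := hx; simpa using hv k hk
  | algebraMap r => simpa [MvPolynomial.algebraMap_eq] using Subalgebra.algebraMap_mem (supported R t) r
  | add x y hx hy ihx ihy => rw [map_add]; exact add_mem ihx ihy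
  | mul x y hx hy ihx ihy => rw [map_mul]; exact mul_mem ihx ihy

lemma aeval_zero_eq_C_eval_zero {τ : Type*} (p : MvPolynomial σ R) :
    aeval (fun _ => (0 : MvPolynomial τ R)) p = C (eval (fun _ => (0:R)) p) := by
  induction p using MvPolynomial.induction_on with
  | C a => simp
  | add p q hp hq => rw [map_add, hp, hq, map_add, map_add]
  | mul_X p i hp => rw [map_mul, hp, map_mul, map_mul]; simp

end General

/-- Univariate char-zero fact: a polynomial in `X j` with vanishing derivative is constant. -/
lemma eq_C_of_pderiv_eq_zero {σ : Type*} {j : σ} {p : MvPolynomial σ K}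
    (hp : p ∈ supported K ({j} : Set σ)) (h : pderiv j p = 0) : ∃ c : K, p = C c := by
  classical
  set ψ : MvPolynomial σ K →ₐ[K] Polynomial K :=
    aeval (fun k => if k = j then Polynomial.X else 0) with hψ
  have key : ∀ q ∈ supported K ({j} : Set σ),
      Polynomial.derivative (ψ q) = ψ (pderiv j q) ∧
        Polynomial.aeval (X j : MvPolynomial σ K) (ψ q) = q := by
    intro q hq
    induction hq using Algebra.adjoin_induction with
    | mem x hx =>
      obtain ⟨k, hk, rfl⟩ := hx
      rcases hk with rfl
      constructor
      · simp [hψ]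
      · simp [hψ]
    | algebraMap r =>
      constructor
      · simp [MvPolynomial.algebraMap_eq, hψ]
      · simp [MvPolynomial.algebraMap_eq, hψ]
    | add x y hx hy ihx ihy =>
      constructor
      · simp [map_add, ihx.1, ihy.1]
      · simp [map_add, ihx.2, ihy.2]
    | mul x y hx hy ihx ihy =>
      constructor
      · rw [map_mul, Polynomial.derivative_mul, pderiv_mul, map_add, map_mul, map_mul,
          ihx.1, ihy.1]
      · simp [map_mul, ihx.2, ihy.2]
  obtain ⟨hder, hinv⟩ := key p hp
  rw [h, map_zero] at hder
  have hc := Polynomial.eq_C_of_derivative_eq_zero hder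
  refine ⟨(ψ p).coeff 0, ?_⟩
  conv_lhs => rw [← hinv, hc]
  rw [Polynomial.aeval_C, MvPolynomial.algebraMap_eq]

/-- Composition of polynomial maps. -/
noncomputable def pcomp {n : ℕ} (f g : Fin n → MvPolynomial (Fin n) K) :
    Fin n → MvPolynomial (Fin n) K := fun i => bind₁ g (f i)

lemma pcomp_assoc {n : ℕ} (f g h : Fin n → MvPolynomial (Fin n) K) :
    pcomp (pcomp f g) h = pcomp f (pcomp g h) := by
  funext i
  simp only [pcomp, bind₁_bind₁]
  rfl

lemma pcomp_X_left {n : ℕ} (f : Fin n → MvPolynomial (Fin n) K) :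
    pcomp (fun i => X i) f = f := by
  funext i; simp [pcomp]

lemma pcomp_X_right {n : ℕ} (f : Fin n → MvPolynomial (Fin n) K) :
    pcomp f (fun i => X i) = f := by
  funext i
  simp only [pcomp]
  exact congrFun (congrArg _ bind₁_X_left) (f i)

lemma isPolyAut_def {n : ℕ} (f : Fin n → MvPolynomial (Fin n) K) :
    IsPolyAut f ↔ ∃ g, pcomp f g = (fun i => X i) ∧ pcomp g f = (fun i => X i) := by
  constructor
  · rintro ⟨g, h1, h2⟩
    exact ⟨g, funext h1, funext h2⟩
  · rintro ⟨g, h1, h2⟩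
    exact ⟨g, fun i => congrFun h1 i, fun i => congrFun h2 i⟩

lemma isPolyAut_pcomp {n : ℕ} {f g : Fin n → MvPolynomial (Fin n) K}
    (hf : IsPolyAut f) (hg : IsPolyAut g) : IsPolyAut (pcomp f g) := by
  rw [isPolyAut_def] at hf hg ⊢
  obtain ⟨f', hf1, hf2⟩ := hf
  obtain ⟨g', hg1, hg2⟩ := hg
  refine ⟨S16.pcomp g' f', ?_, ?_⟩
  · rw [pcomp_assoc, ← pcomp_assoc g g' f', hg1, pcomp_X_left, hf1]
  · rw [pcomp_assoc, ← pcomp_assoc f' f g, hf2, pcomp_X_left, hg2]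

/-- The linear polynomial map attached to a matrix. -/
noncomputable def linMap {n : ℕ} (A : Matrix (Fin n) (Fin n) K) :
    Fin n → MvPolynomial (Fin n) K := fun i => ∑ k, C (A i k) * X k

lemma pcomp_linMap {n : ℕ} (A B : Matrix (Fin n) (Fin n) K) :
    pcomp (linMap A) (linMap B) = linMap (A * B) := by
  funext i
  simp only [pcomp, linMap, map_sum, map_mul, bind₁_X_right, bind₁_C_right]
  have h1 : ∀ k, C (A i k) * ∑ m, C (B k m) * X m = ∑ m, C (A i k * B k m) * X m := by
    intro k
    rw [Finset.mul_sum]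
    exact Finset.sum_congr rfl fun m _ => by rw [map_mul, mul_assoc]
  simp only [h1]
  rw [Finset.sum_comm]
  refine Finset.sum_congr rfl fun m _ => ?_
  rw [Matrix.mul_apply, map_sum, Finset.sum_mul]

lemma linMap_one {n : ℕ} : linMap (1 : Matrix (Fin n) (Fin n) K) = fun i => X i := by
  funext i
  simp only [linMap]
  rw [Finset.sum_eq_single i]
  · simp
  · intro k _ hk
    rw [Matrix.one_apply_ne (Ne.symm hk)]; simp
  · simp

lemma isPolyAut_linMap {n : ℕ} {A : Matrix (Fin n) (Fin n) K} (h : IsUnit A.det) :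
    IsPolyAut (linMap A) := by
  rw [isPolyAut_def]
  refine ⟨linMap A⁻¹, ?_, ?_⟩
  · rw [pcomp_linMap, Matrix.mul_nonsing_inv _ h, linMap_one]
  · rw [pcomp_linMap, Matrix.nonsing_inv_mul _ h, linMap_one]

section ColumnLemma

variable {n : ℕ}

omit [CharZero K] in
lemma eval_congr_of_supported {s : Set (Fin n)} {v w : Fin n → K}
    (h : ∀ k ∈ s, v k = w k) {p : MvPolynomial (Fin n) K}
    (hp : p ∈ supported K s) : eval v p = eval w p := by
  induction hp using Algebra.adjoin_induction with
  | mem x hx => obtain ⟨k, hk, rfl⟩ := hx; simp [h k hk]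
  | algebraMap r => simp [MvPolynomial.algebraMap_eq]
  | add x y hx hy ihx ihy => simp [ihx, ihy]
  | mul x y hx hy ihx ihy => simp [ihx, ihy]

omit [CharZero K] in
lemma pderiv_supported {F : Fin n → MvPolynomial (Fin n) K} (hmix : NoMixedTerms F)
    (i j : Fin n) : pderiv j (F i) ∈ supported K ({j} : Set (Fin n)) := by
  classical
  refine Submodule.iSup_induction (motive := fun p => pderiv j p ∈ supported K ({j} : Set (Fin n)))
    _ (hmix i) ?_ ?_ ?_
  · intro k p hp
    rw [Subalgebra.mem_toSubmodule] at hp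
    by_cases hkj : k = j
    · exact pderiv_mem_supported (hkj ▸ hp)
    · rw [pderiv_eq_zero_of_supported (by simp [Ne.symm hkj]) hp]
      exact zero_mem _
  · show pderiv j (0 : MvPolynomial (Fin n) K) ∈ _
    rw [map_zero]; exact zero_mem _
  · intro p q hp hq
    show pderiv j (p + q) ∈ _
    rw [map_add]; exact add_mem hp hq

lemma exists_trivial_column (F : Fin n → MvPolynomial (Fin n) K)
    (hmix : NoMixedTerms F)
    (hdet : (Matrix.of fun i j : Fin n => pderiv j (F i)).det = C 1)
    (h0 : ∀ i j : Fin n, eval (fun _ => (0 : K)) (pderiv j (F i))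
      = if i = j then 1 else 0)
    (hn : 0 < n) :
    ∃ j : Fin n, (∀ i, i ≠ j → pderiv j (F i) = 0) ∧ pderiv j (F j) = 1 := by
  classical
  have hsupp : ∀ i j : Fin n, pderiv j (F i) ∈ supported K ({j} : Set (Fin n)) :=
    pderiv_supported hmix
  -- Diagonal entries are 1.
  have hdiag : ∀ j : Fin n, pderiv j (F j) = 1 := by
    intro j
    set φ : MvPolynomial (Fin n) K →ₐ[K] MvPolynomial (Fin n) K :=
      aeval (fun k => if k = j then X j else 0) with hφ
    have hmapdet := RingHom.map_det (φ : MvPolynomial (Fin n) K →+* MvPolynomial (Fin n) K)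
      (Matrix.of fun i j : Fin n => pderiv j (F i))
    rw [hdet] at hmapdet
    have hφC : φ (C 1) = C 1 := by simp [hφ]
    have hupdate : (RingHom.mapMatrix (φ : MvPolynomial (Fin n) K →+* MvPolynomial (Fin n) K))
        (Matrix.of fun i j : Fin n => pderiv j (F i)) =
        Matrix.updateCol 1 j (fun i => pderiv j (F i)) := by
      refine Matrix.ext fun i k => ?_
      by_cases hkj : k = j
      · subst hkj
        have : φ (pderiv k (F i)) = aeval X (pderiv k (F i)) :=
          aeval_congr_of_supported (by intro m hm; rcases hm with rfl; simp [hφ]) (hsupp i k)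
        simp only [RingHom.mapMatrix_apply, Matrix.map_apply, Matrix.of_apply,
          Matrix.updateCol_self]
        show φ _ = _
        rw [this, aeval_X_left_apply]
      · have h1 : φ (pderiv k (F i)) = aeval (fun _ => (0 : MvPolynomial (Fin n) K))
            (pderiv k (F i)) :=
          aeval_congr_of_supported (by intro m hm; rcases hm with rfl; simp [hφ, hkj]) (hsupp i k)
        rw [aeval_zero_eq_C_eval_zero, h0 i k] at h1
        simp only [RingHom.mapMatrix_apply, Matrix.map_apply, Matrix.of_apply,
          Matrix.updateCol_ne hkj]
        show φ _ = _
        rw [h1, Matrix.one_apply]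
        split_ifs with h2 <;> simp
    rw [hupdate] at hmapdet
    have hcr : (Matrix.updateCol (1 : Matrix (Fin n) (Fin n) (MvPolynomial (Fin n) K)) j
        (fun i => pderiv j (F i))).det = pderiv j (F j) := by
      rw [← Matrix.cramer_apply, Matrix.cramer_one]
      rfl
    rw [hcr] at hmapdet
    rw [← hmapdet, map_one]
    exact map_one _
  -- the matrix of "nonlinear parts"
  set gm : Fin n → Fin n → MvPolynomial (Fin n) K :=
    fun i j => pderiv j (F i) - C (if i = j then 1 else 0) with hgm
  have hgsupp : ∀ i j, gm i j ∈ supported K ({j} : Set (Fin n)) := by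
    intro i j
    exact sub_mem (hsupp i j) (SetLike.mem_coe.1 (Subalgebra.algebraMap_mem _ _))
  have hg0 : ∀ i j, eval (fun _ => (0 : K)) (gm i j) = 0 := by
    intro i j
    rw [hgm]
    simp only [map_sub, h0 i j, eval_C]
    exact sub_self _
  have hgdiag : ∀ j, gm j j = 0 := by
    intro j
    rw [hgm]
    simp [hdiag j]
  -- it suffices to find a zero column of `gm`
  suffices hz : ∃ j, ∀ i, gm i j = 0 by
    obtain ⟨j, hj⟩ := hz
    refine ⟨j, fun i hij => ?_, hdiag j⟩
    have := hj i
    rw [hgm] at this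
    simpa [if_neg hij] using sub_eq_zero.1 this
  by_contra hcol
  push_neg at hcol
  -- `hcol : ∀ j, ∃ i, gm i j ≠ 0`
  haveI : Nonempty (Fin n) := ⟨⟨0, hn⟩⟩
  -- minimal "closed" set S
  set P : Finset (Fin n) → Prop :=
    fun S => S.Nonempty ∧ ∀ j ∈ S, ∃ i ∈ S, gm i j ≠ 0 with hPdef
  have hPuniv : P Finset.univ :=
    ⟨Finset.univ_nonempty, fun j _ => (hcol j).imp fun i hi => ⟨Finset.mem_univ i, hi⟩⟩
  have hex : ∃ m, ∃ S, P S ∧ S.card = m := ⟨_, Finset.univ, hPuniv, rfl⟩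
  obtain ⟨S, hPS, hScard⟩ := Nat.find_spec hex
  have hmin : ∀ T, P T → S.card ≤ T.card := by
    intro T hT
    rw [hScard]
    exact Nat.find_le ⟨T, hT, rfl⟩
  have hSsub : ∀ {T}, P T → T ⊆ S → T = S := fun hT hsub =>
    Finset.eq_of_subset_of_card_le hsub (hmin _ hT)
  -- choice of a nonzero entry in each column of S
  have hec : ∀ j, ∃ i, j ∈ S → i ∈ S ∧ gm i j ≠ 0 := by
    intro j
    by_cases hj : j ∈ S
    · obtain ⟨i, hi, hgi⟩ := hPS.2 j hj
      exact ⟨i, fun _ => ⟨hi, hgi⟩⟩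
    · exact ⟨j, fun h => absurd h hj⟩
  choose e he using hec
  have heS : ∀ j ∈ S, e j ∈ S := fun j h => (he j h).1
  have heg : ∀ j ∈ S, gm (e j) j ≠ 0 := fun j h => (he j h).2
  have hene : ∀ j ∈ S, e j ≠ j := by
    intro j hj h
    apply heg j hj
    rw [h]
    exact hgdiag j
  have hiter : ∀ (m : ℕ), ∀ x ∈ S, e^[m] x ∈ S := by
    intro m
    induction m with
    | zero => exact fun x hx => hx
    | succ m ih => intro x hx; rw [Function.iterate_succ_apply']; exact heS _ (ih x hx)
  -- orbits fill up S
  have horb : ∀ x ∈ S, ∀ y ∈ S, ∃ m : ℕ, e^[m] x = y := by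
    intro x hx y hy
    have hO : P (S.filter fun y => ∃ m : ℕ, e^[m] x = y) := by
      constructor
      · exact ⟨x, Finset.mem_filter.2 ⟨hx, 0, rfl⟩⟩
      · intro j hj
        obtain ⟨hjS, m, hm⟩ := Finset.mem_filter.1 hj
        exact ⟨e j, Finset.mem_filter.2 ⟨heS j hjS, m + 1,
          by rw [Function.iterate_succ_apply', hm]⟩, heg j hjS⟩
    have hOS := hSsub hO (Finset.filter_subset _ _)
    have hy' : y ∈ S.filter fun y => ∃ m : ℕ, e^[m] x = y := by rw [hOS]; exact hy
    exact (Finset.mem_filter.1 hy').2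
  -- e is injective on S
  have hinj : Set.InjOn e S := by
    have hImg : P (S.image e) := by
      constructor
      · exact hPS.1.image e
      · intro j hj
        obtain ⟨x, hx, rfl⟩ := Finset.mem_image.1 hj
        have hjS : e x ∈ S := heS x hx
        exact ⟨e (e x), Finset.mem_image_of_mem e hjS, heg _ hjS⟩
    have himgS := hSsub hImg (Finset.image_subset_iff.2 fun x hx => heS x hx)
    exact Finset.injOn_of_card_image_eq (by rw [himgS])
  -- uniqueness of nonzero entries within S
  have huniq : ∀ j ∈ S, ∀ i ∈ S, gm i j ≠ 0 → i = e j := by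
    intro j hj i hi hgij
    have hij : i ≠ j := by
      rintro rfl
      exact hgij (hgdiag i)
    have hexM : ∃ m : ℕ, e^[m] i = j := horb i hi j hj
    set M := Nat.find hexM with hMdef
    have hMj : e^[M] i = j := Nat.find_spec hexM
    have hMpos : 0 < M := by
      rcases Nat.eq_zero_or_pos M with h | h
      · exact absurd (h ▸ hMj : e^[0] i = j) (by simpa using hij)
      · exact h
    have hT : P (S.filter fun y => ∃ m ≤ M, e^[m] i = y) := by
      constructor
      · exact ⟨i, Finset.mem_filter.2 ⟨hi, 0, Nat.zero_le _, rfl⟩⟩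
      · intro y hy
        obtain ⟨hyS, m, hmM, hmy⟩ := Finset.mem_filter.1 hy
        rcases lt_or_eq_of_le hmM with hlt | heq
        · exact ⟨e y, Finset.mem_filter.2 ⟨heS y hyS, m + 1, hlt,
            by rw [Function.iterate_succ_apply', hmy]⟩, heg y hyS⟩
        · have hyj : y = j := by rw [← hmy, heq, hMj]
          exact ⟨i, Finset.mem_filter.2 ⟨hi, 0, Nat.zero_le _, rfl⟩, hyj ▸ hgij⟩
    have hTS := hSsub hT (Finset.filter_subset _ _)
    have hejS : e j ∈ S := heS j hj
    have hej' : e j ∈ S.filter fun y => ∃ m ≤ M, e^[m] i = y := by rw [hTS]; exact hejS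
    obtain ⟨-, m, hmM, hme⟩ := Finset.mem_filter.1 hej'
    rcases Nat.eq_zero_or_pos m with rfl | hm
    · simpa using hme
    · exfalso
      obtain ⟨m', rfl⟩ : ∃ m', m = m' + 1 := ⟨m - 1, by omega⟩
      rw [Function.iterate_succ_apply'] at hme
      have h1 : e^[m'] i = j := hinj (hiter m' i hi) hj hme
      exact absurd h1 (Nat.find_min hexM (by omega))
  -- choose an evaluation point
  have hpt : ∀ j ∈ S, ∃ x : Fin n → K, eval x (gm (e j) j) ≠ 0 := by
    intro j hj
    by_contra hco
    push_neg at hco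
    exact heg j hj (MvPolynomial.funext fun x => by rw [hco x, map_zero])
  choose w hw using hpt
  set a : Fin n → K := fun j => if h : j ∈ S then w j h j else 0 with ha
  set N : Matrix (Fin n) (Fin n) K := Matrix.of fun i j => eval a (gm i j) with hN
  have hNout : ∀ i j, j ∉ S → N i j = 0 := by
    intro i j hj
    have : eval a (gm i j) = eval (fun _ => (0 : K)) (gm i j) := by
      refine eval_congr_of_supported ?_ (hgsupp i j)
      intro k hk
      rcases hk with rfl
      simp [ha, hj]
    simpa [hN, this] using hg0 i j
  have hNin : ∀ i j (hj : j ∈ S), N i j = eval (w j hj) (gm i j) := by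
    intro i j hj
    refine eval_congr_of_supported ?_ (hgsupp i j)
    intro k hk
    rcases hk with rfl
    simp [ha, hj]
  have hNe : ∀ j (hj : j ∈ S), N (e j) j ≠ 0 := by
    intro j hj
    rw [hNin _ _ hj]
    exact hw j hj
  have hNuniq : ∀ i j, j ∈ S → i ∈ S → i ≠ e j → N i j = 0 := by
    intro i j hj hi hie
    have : gm i j = 0 := by
      by_contra hne
      exact hie (huniq j hj i hi hne)
    simp [hN, this]
  have hNdiag : ∀ j, N j j = 0 := fun j => by simp [hN, hgdiag j]
  -- evaluate the determinant identity at the point a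
  have hdetA : (Matrix.of fun i j : Fin n => (if i = j then (1 : K) else 0) + N i j).det = 1 := by
    have hmd := RingHom.map_det (eval a) (Matrix.of fun i j : Fin n => pderiv j (F i))
    rw [hdet, eval_C] at hmd
    have : (RingHom.mapMatrix (eval a)) (Matrix.of fun i j : Fin n => pderiv j (F i)) =
        Matrix.of fun i j : Fin n => (if i = j then (1 : K) else 0) + N i j := by
      refine Matrix.ext fun i j => ?_
      simp only [RingHom.mapMatrix_apply, Matrix.map_apply, Matrix.of_apply, hN]
      have : pderiv j (F i) = gm i j + C (if i = j then 1 else 0) := by rw [hgm]; ring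
      rw [this, map_add, eval_C, add_comm]
    rw [this] at hmd
    exact hmd.symm
  -- reduce to the block on S
  set Amat : Matrix (Fin n) (Fin n) K :=
    Matrix.of (fun i j : Fin n => (if i = j then (1 : K) else 0) + N i j) with hAmat
  set Bsub : Matrix {x // x ∈ S} {x // x ∈ S} K :=
    Matrix.of (fun x y => Amat x.1 y.1) with hBsub
  set Csub : Matrix {x // ¬x ∈ S} {x // x ∈ S} K :=
    Matrix.of (fun x y => Amat x.1 y.1) with hCsub
  set eqv := Equiv.sumCompl (fun x : Fin n => x ∈ S) with heqv
  have hsubm : Amat.submatrix eqv eqv = Matrix.fromBlocks Bsub 0 Csub 1 := by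
    refine Matrix.ext fun i j => ?_
    cases i with
    | inl x =>
      cases j with
      | inl y => rfl
      | inr y =>
        have hxy : x.1 ≠ y.1 := fun h => y.2 (h ▸ x.2)
        simp only [Matrix.submatrix_apply, heqv, Equiv.sumCompl_apply_inl,
          Equiv.sumCompl_apply_inr, Matrix.fromBlocks_apply₁₂, Matrix.zero_apply, hAmat,
          Matrix.of_apply]
        rw [if_neg hxy, hNout _ _ y.2, add_zero]
    | inr x =>
      cases j with
      | inl y => rfl
      | inr y =>
        simp only [Matrix.submatrix_apply, heqv, Equiv.sumCompl_apply_inr,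
          Matrix.fromBlocks_apply₂₂, hAmat, Matrix.of_apply]
        rw [hNout _ _ y.2, add_zero, Matrix.one_apply]
        by_cases hxy : x = y
        · rw [if_pos (congrArg Subtype.val hxy), if_pos hxy]
        · rw [if_neg (fun h => hxy (Subtype.ext h)), if_neg hxy]
  have hdetB : Bsub.det = 1 := by
    have h1 := Matrix.det_submatrix_equiv_self eqv Amat
    rw [hsubm, Matrix.det_fromBlocks_zero₁₂, Matrix.det_one, mul_one] at h1
    rw [h1]
    exact hdetA
  -- the cycle permutation on S
  obtain ⟨x0, hx0⟩ := hPS.1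
  haveI : Nonempty {x // x ∈ S} := ⟨⟨x0, hx0⟩⟩
  have hebij : Function.Bijective
      (fun x : {x // x ∈ S} => (⟨e x.1, heS x.1 x.2⟩ : {x // x ∈ S})) := by
    rw [← Finite.injective_iff_bijective]
    intro x y hxy
    exact Subtype.ext (hinj x.2 y.2 (congrArg Subtype.val hxy))
  set c : Equiv.Perm {x // x ∈ S} := Equiv.ofBijective _ hebij with hcdef
  have hc : ∀ x : {x // x ∈ S}, (c x).1 = e x.1 := fun _ => rfl
  have hcfix : ∀ x, c x ≠ x := by
    intro x h
    exact hene x.1 x.2 (by rw [← hc x, h])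
  have hiterc : ∀ (m : ℕ) (x : {x // x ∈ S}), (c^[m] x).1 = e^[m] x.1 := by
    intro m
    induction m with
    | zero => exact fun x => rfl
    | succ m ih =>
      intro x
      rw [Function.iterate_succ_apply', Function.iterate_succ_apply', hc, ih]
  have hcorb : ∀ x y : {x // x ∈ S}, ∃ m : ℕ, c^[m] x = y := by
    intro x y
    obtain ⟨m, hm⟩ := horb x.1 x.2 y.1 y.2
    exact ⟨m, Subtype.ext (by rw [hiterc]; exact hm)⟩
  -- entries of the block
  have hB1 : ∀ y, Bsub y y = 1 := by
    intro y
    show (if y.1 = y.1 then (1 : K) else 0) + N y.1 y.1 = 1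
    rw [if_pos rfl, hNdiag, add_zero]
  have hBc : ∀ y, Bsub (c y) y ≠ 0 := by
    intro y
    show (if (c y).1 = y.1 then (1 : K) else 0) + N (c y).1 y.1 ≠ 0
    rw [hc, if_neg (hene y.1 y.2), zero_add]
    exact hNe y.1 y.2
  have hB0 : ∀ x y, x ≠ y → x ≠ c y → Bsub x y = 0 := by
    intro x y hxy hxc
    show (if x.1 = y.1 then (1 : K) else 0) + N x.1 y.1 = 0
    rw [if_neg (fun h => hxy (Subtype.ext h)), zero_add]
    exact hNuniq x.1 y.1 y.2 x.2 (fun h => hxc (Subtype.ext (by rw [h, hc])))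
  -- only the identity and the cycle contribute to the determinant
  have h1c : (1 : Equiv.Perm {x // x ∈ S}) ≠ c := by
    intro h
    exact hcfix (Classical.arbitrary _) (by rw [← h]; rfl)
  have hterm : ∀ σ : Equiv.Perm {x // x ∈ S}, σ ≠ 1 → σ ≠ c →
      (∏ x, Bsub (σ x) x) = 0 := by
    intro σ hσ1 hσc
    by_contra hprod
    have hall : ∀ x, Bsub (σ x) x ≠ 0 := by
      intro x hx
      exact hprod (Finset.prod_eq_zero (Finset.mem_univ x) hx)
    have hstep : ∀ x, σ x = x ∨ σ x = c x := by
      intro x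
      by_contra hcon
      push_neg at hcon
      exact hall x (hB0 _ _ hcon.1 hcon.2)
    obtain ⟨z0, hz0⟩ : ∃ x, σ x ≠ x := by
      by_contra hcc
      push_neg at hcc
      exact hσ1 (Equiv.ext hcc)
    have hbase : σ z0 = c z0 := (hstep z0).resolve_left hz0
    have hprop : ∀ m : ℕ, σ (c^[m] z0) = c (c^[m] z0) := by
      intro m
      induction m with
      | zero => exact hbase
      | succ m ih =>
        rw [Function.iterate_succ_apply']
        rcases hstep (c (c^[m] z0)) with h | h
        · exfalso
          have h2 : σ (c (c^[m] z0)) = σ (c^[m] z0) := h.trans ih.symm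
          exact hcfix _ (σ.injective h2)
        · exact h
    apply hσc
    refine Equiv.ext fun x => ?_
    obtain ⟨m, hm⟩ := hcorb z0 x
    rw [← hm]
    exact hprop m
  have hsplit : Bsub.det = 1 + Equiv.Perm.sign c • ∏ x, Bsub (c x) x := by
    rw [Matrix.det_apply]
    rw [← Finset.sum_subset (Finset.subset_univ ({1, c} : Finset (Equiv.Perm {x // x ∈ S})))
      (fun σ _ hσ => ?_)]
    · rw [Finset.sum_pair h1c]
      congr 1
      have : ∀ x : {x // x ∈ S}, Bsub ((1 : Equiv.Perm {x // x ∈ S}) x) x = 1 := fun x => hB1 x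
      rw [Finset.prod_congr rfl (fun x _ => this x), Finset.prod_const_one]
      simp
    · have hσ1 : σ ≠ 1 := by
        intro h; exact hσ (by rw [h]; exact Finset.mem_insert_self _ _)
      have hσc : σ ≠ c := by
        intro h; exact hσ (by rw [h]; exact Finset.mem_insert_of_mem (Finset.mem_singleton_self _))
      rw [hterm σ hσ1 hσc, smul_zero]
  have hprodc : (∏ x, Bsub (c x) x) ≠ 0 :=
    Finset.prod_ne_zero_iff.2 fun x _ => hBc x
  rw [hdetB] at hsplit
  have hzero : Equiv.Perm.sign c • (∏ x, Bsub (c x) x) = 0 := by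
    have := hsplit.symm
    rwa [add_eq_left] at this
  rcases Int.units_eq_one_or (Equiv.Perm.sign c) with h | h <;> rw [h] at hzero
  · exact hprodc (by simpa using hzero)
  · exact hprodc (by simpa using hzero)



end ColumnLemma

/-- A polynomial without mixed terms whose `j`-th partial derivative vanishes does not involve
the variable `j`. -/
lemma mem_supported_compl {n : ℕ} {j : Fin n} {p : MvPolynomial (Fin n) K}
    (hp : p ∈ ⨆ k : Fin n, Subalgebra.toSubmodule (supported K ({k} : Set (Fin n))))
    (hd : pderiv j p = 0) : p ∈ supported K ({j}ᶜ : Set (Fin n)) := by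
  classical
  have hdecomp : ∃ q r : MvPolynomial (Fin n) K, p = q + r ∧
      q ∈ supported K ({j} : Set (Fin n)) ∧ r ∈ supported K ({j}ᶜ : Set (Fin n)) := by
    refine Submodule.iSup_induction (motive := fun p => ∃ q r : MvPolynomial (Fin n) K, p = q + r ∧
      q ∈ supported K ({j} : Set (Fin n)) ∧ r ∈ supported K ({j}ᶜ : Set (Fin n)))
      _ hp ?_ ?_ ?_
    · intro k x hx
      rw [Subalgebra.mem_toSubmodule] at hx
      by_cases hkj : k = j
      · exact ⟨x, 0, (add_zero x).symm, hkj ▸ hx, zero_mem _⟩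
      · exact ⟨0, x, (zero_add x).symm, zero_mem _,
          supported_mono (by simpa using Ne.symm hkj) hx⟩
    · exact ⟨0, 0, by simp, zero_mem _, zero_mem _⟩
    · rintro x y ⟨qx, rx, rfl, hqx, hrx⟩ ⟨qy, ry, rfl, hqy, hry⟩
      exact ⟨qx + qy, rx + ry, by ring, add_mem hqx hqy, add_mem hrx hry⟩
  obtain ⟨q, r, rfl, hq, hr⟩ := hdecomp
  have hr0 : pderiv j r = 0 :=
    pderiv_eq_zero_of_supported (by simp) hr
  have hq0 : pderiv j q = 0 := by
    have := hd
    rw [map_add, hr0, add_zero] at this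
    exact this
  obtain ⟨cq, hcq⟩ := eq_C_of_pderiv_eq_zero hq hq0
  rw [hcq]
  exact add_mem (Subalgebra.algebraMap_mem _ _) hr

theorem main : ∀ (n : ℕ) (f : Fin n → MvPolynomial (Fin n) K), NoMixedTerms f →
    (∃ c : K, c ≠ 0 ∧ (Matrix.of fun i j : Fin n => pderiv j (f i)).det = C c) →
    IsPolyAut f := by
  intro n
  induction n with
  | zero => exact fun f _ _ => ⟨f, fun i => i.elim0, fun i => i.elim0⟩
  | succ n IH =>
    intro f hmix hjac
    obtain ⟨cdet, hc0, hdet⟩ := hjac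
    classical
    -- the Jacobian at 0
    set A : Matrix (Fin (n + 1)) (Fin (n + 1)) K :=
      Matrix.of (fun i k => eval (fun _ => (0 : K)) (pderiv k (f i))) with hA
    have hAdet : A.det = cdet := by
      have h1 := RingHom.map_det (eval fun _ => (0 : K))
        (Matrix.of fun i k : Fin (n + 1) => pderiv k (f i))
      rw [hdet, eval_C] at h1
      have hAeq : A = (RingHom.mapMatrix (eval fun _ => (0 : K)))
          (Matrix.of fun i k : Fin (n + 1) => pderiv k (f i)) := Matrix.ext fun i k => rfl
      rw [hAeq]
      exact h1.symm
    have hAunit : IsUnit A.det := by rw [hAdet]; exact isUnit_iff_ne_zero.2 hc0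
    set B : Matrix (Fin (n + 1)) (Fin (n + 1)) K := A⁻¹ with hB
    set F : Fin (n + 1) → MvPolynomial (Fin (n + 1)) K :=
      fun i => ∑ k, C (B i k) * f k with hF
    have hlin : pcomp (linMap A) F = f := by
      funext i
      simp only [pcomp, linMap, map_sum, map_mul, bind₁_X_right, bind₁_C_right, hF]
      have h1 : ∀ k, C (A i k) * ∑ m, C (B k m) * f m = ∑ m, C (A i k * B k m) * f m := by
        intro k
        rw [Finset.mul_sum]
        exact Finset.sum_congr rfl fun m _ => by rw [map_mul, mul_assoc]
      simp only [h1]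
      rw [Finset.sum_comm]
      have h2 : ∀ m, (∑ k, C (A i k * B k m) * f m) = C ((A * B) i m) * f m := by
        intro m
        rw [Matrix.mul_apply, map_sum, Finset.sum_mul]
      simp only [h2]
      rw [Matrix.mul_nonsing_inv A hAunit]
      rw [Finset.sum_eq_single i]
      · simp
      · intro k _ hk
        rw [Matrix.one_apply_ne (Ne.symm hk)]
        simp
      · simp
    suffices hFaut : IsPolyAut F by
      rw [← hlin]
      exact isPolyAut_pcomp (isPolyAut_linMap hAunit) hFaut
    have hmixF : NoMixedTerms F := by
      intro i
      refine Submodule.sum_mem _ fun k _ => ?_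
      rw [← MvPolynomial.smul_eq_C_mul]
      exact Submodule.smul_mem _ _ (hmix k)
    have hpdF : ∀ i m, pderiv m (F i) = ∑ k, C (B i k) * pderiv m (f k) := by
      intro i m
      rw [hF]
      rw [map_sum]
      exact Finset.sum_congr rfl fun k _ => pderiv_C_mul
    have h0F : ∀ i m : Fin (n + 1),
        eval (fun _ => (0 : K)) (pderiv m (F i)) = if i = m then 1 else 0 := by
      intro i m
      rw [hpdF, map_sum]
      have h1 : ∀ k, eval (fun _ => (0 : K)) (C (B i k) * pderiv m (f k)) = B i k * A k m := by
        intro k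
        rw [map_mul, eval_C]
        rfl
      simp only [h1]
      have h2 : (∑ k, B i k * A k m) = (B * A) i m := (Matrix.mul_apply).symm
      rw [h2, hB, Matrix.nonsing_inv_mul A hAunit, Matrix.one_apply]
    have hdetF : (Matrix.of fun i m : Fin (n + 1) => pderiv m (F i)).det = C 1 := by
      have hprod : (Matrix.of fun i m : Fin (n + 1) => pderiv m (F i)) =
          (B.map C) * (Matrix.of fun k m : Fin (n + 1) => pderiv m (f k)) := by
        refine Matrix.ext fun i m => ?_
        rw [Matrix.mul_apply, Matrix.of_apply, hpdF]
        exact Finset.sum_congr rfl fun k _ => rfl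
      rw [hprod, Matrix.det_mul, hdet]
      have hBC : (B.map (C : K → MvPolynomial (Fin (n + 1)) K)).det = C B.det := by
        have h := RingHom.map_det (C : K →+* MvPolynomial (Fin (n + 1)) K) B
        rw [RingHom.mapMatrix_apply] at h
        exact h.symm
      rw [hBC, ← map_mul]
      congr 1
      rw [hB, Matrix.det_nonsing_inv, Ring.inverse_eq_inv, hAdet]
      exact inv_mul_cancel₀ hc0
    obtain ⟨j, hcol0, hcolj⟩ := exists_trivial_column F hmixF hdetF h0F (Nat.succ_pos n)
    -- removing the variable j
    set up : MvPolynomial (Fin n) K →ₐ[K] MvPolynomial (Fin (n + 1)) K :=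
      rename j.succAbove with hup
    set vdown : Fin (n + 1) → MvPolynomial (Fin n) K :=
      fun k => ((finSuccEquiv' j) k).elim 0 X with hvdown
    set down : MvPolynomial (Fin (n + 1)) K →ₐ[K] MvPolynomial (Fin n) K :=
      aeval vdown with hdown
    have hvdown_comp : ∀ i : Fin n, vdown (j.succAbove i) = X i := by
      intro i
      rw [hvdown]
      simp
    have hdown_up : ∀ q, down (up q) = q := by
      intro q
      show down (rename j.succAbove q) = q
      rw [hdown, aeval_rename]
      have : (vdown ∘ j.succAbove) = X := funext hvdown_comp
      rw [this, aeval_X_left_apply]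
    have hup_down : ∀ p ∈ supported K ({j}ᶜ : Set (Fin (n + 1))), up (down p) = p := by
      intro p hp
      induction hp using Algebra.adjoin_induction with
      | mem x hx =>
        obtain ⟨k, hk, rfl⟩ := hx
        obtain ⟨i, rfl⟩ := Fin.exists_succAbove_eq (Set.mem_compl_iff _ _ |>.1 hk)
        rw [hdown, aeval_X, hvdown_comp]
        show rename j.succAbove (X i) = _
        rw [rename_X]
      | algebraMap r => simp [MvPolynomial.algebraMap_eq]
      | add x y hx hy ihx ihy => rw [map_add, map_add, ihx, ihy]
      | mul x y hx hy ihx ihy => rw [map_mul, map_mul, ihx, ihy]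
    have hFsupp : ∀ i, i ≠ j → F i ∈ supported K ({j}ᶜ : Set (Fin (n + 1))) :=
      fun i hij => mem_supported_compl (hmixF i) (hcol0 i hij)
    have hQmem : F j - X j ∈ supported K ({j}ᶜ : Set (Fin (n + 1))) := by
      refine mem_supported_compl ?_ ?_
      · refine sub_mem (hmixF j) ?_
        refine Submodule.mem_iSup_of_mem j ?_
        rw [Subalgebra.mem_toSubmodule]
        exact X_mem_supported.2 rfl
      · rw [map_sub, hcolj, pderiv_X_self, sub_self]
    set F' : Fin n → MvPolynomial (Fin n) K := fun i => down (F (j.succAbove i)) with hF'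
    have hupF' : ∀ i, up (F' i) = F (j.succAbove i) :=
      fun i => hup_down _ (hFsupp _ (Fin.succAbove_ne j i))
    set Q' : MvPolynomial (Fin n) K := down (F j - X j) with hQ'
    have hupQ' : up Q' = F j - X j := hup_down _ hQmem
    -- F' has no mixed terms
    have hmixF' : NoMixedTerms F' := by
      intro i
      refine Submodule.iSup_induction
        (motive := fun p => down p ∈ ⨆ m : Fin n,
          Subalgebra.toSubmodule (supported K ({m} : Set (Fin n))))
        _ (hmixF (j.succAbove i)) ?_ ?_ ?_
      · intro k x hx
        rw [Subalgebra.mem_toSubmodule] at hx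
        by_cases hkj : k = j
        · subst hkj
          have h1 : down x = aeval (fun _ => (0 : MvPolynomial (Fin n) K)) x := by
            refine aeval_congr_of_supported ?_ hx
            intro m hm
            rcases hm with rfl
            rw [hvdown]
            simp
          rw [h1, aeval_zero_eq_C_eval_zero]
          refine Submodule.mem_iSup_of_mem i ?_
          rw [Subalgebra.mem_toSubmodule]
          exact Subalgebra.algebraMap_mem _ _
        · obtain ⟨i', rfl⟩ := Fin.exists_succAbove_eq hkj
          refine Submodule.mem_iSup_of_mem i' ?_
          rw [Subalgebra.mem_toSubmodule]
          refine aeval_mem_supported ?_ hx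
          intro m hm
          rcases hm with rfl
          rw [hvdown_comp]
          exact X_mem_supported.2 rfl
      · show down 0 ∈ _
        rw [map_zero]
        exact zero_mem _
      · intro x y hx hy
        show down (x + y) ∈ _
        rw [map_add]
        exact add_mem hx hy
    -- the Jacobian matrix of F'
    have hpdF' : ∀ i i' : Fin n,
        up (pderiv i' (F' i)) = pderiv (j.succAbove i') (F (j.succAbove i)) := by
      intro i i'
      rw [← hupF' i]
      exact (pderiv_rename (Fin.succAbove_right_injective (p := j)) i' (F' i)).symm
    have hdetF' : (Matrix.of fun i i' : Fin n => pderiv i' (F' i)).det = C 1 := by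
      set JF : Matrix (Fin (n + 1)) (Fin (n + 1)) (MvPolynomial (Fin (n + 1)) K) :=
        Matrix.of (fun i m : Fin (n + 1) => pderiv m (F i)) with hJF
      set JF' : Matrix (Fin n) (Fin n) (MvPolynomial (Fin n) K) :=
        Matrix.of (fun i i' : Fin n => pderiv i' (F' i)) with hJF'
      have hbij : Function.Bijective (Sum.elim j.succAbove (fun _ : Unit => j)) := by
        constructor
        · rintro (x | x) (y | y) h
          · rw [Fin.succAbove_right_injective (p := j) h]
          · exact absurd h (Fin.succAbove_ne j x)
          · exact absurd h.symm (Fin.succAbove_ne j y)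
          · exact congrArg Sum.inr (Subsingleton.elim x y)
        · intro k
          by_cases hk : k = j
          · exact ⟨Sum.inr ⟨⟩, hk.symm⟩
          · obtain ⟨i, hi⟩ := Fin.exists_succAbove_eq hk
            exact ⟨Sum.inl i, hi⟩
      set esum : Fin n ⊕ Unit ≃ Fin (n + 1) := Equiv.ofBijective _ hbij with hesum
      have h1 := Matrix.det_submatrix_equiv_self esum JF
      have hsub : JF.submatrix esum esum =
          Matrix.fromBlocks (AlgHom.mapMatrix up JF') 0
            (Matrix.of fun (x : Unit) (y : Fin n) => JF j (j.succAbove y))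
            (Matrix.of fun _ _ : Unit => (1 : MvPolynomial (Fin (n + 1)) K)) := by
        refine Matrix.ext fun x y => ?_
        cases x with
        | inl x =>
          cases y with
          | inl y =>
            show pderiv (j.succAbove y) (F (j.succAbove x)) = up (pderiv y (F' x))
            exact (hpdF' x y).symm
          | inr y =>
            show pderiv j (F (j.succAbove x)) = 0
            exact hcol0 _ (Fin.succAbove_ne j x)
        | inr x =>
          cases y with
          | inl y => rfl
          | inr y =>
            show pderiv j (F j) = 1
            exact hcolj
      rw [hsub, Matrix.det_fromBlocks_zero₁₂] at h1
      have hDet1 : (Matrix.of fun _ _ : Unit => (1 : MvPolynomial (Fin (n + 1)) K)).det = 1 := by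
        rw [Matrix.det_unique]
        rfl
      rw [hDet1, mul_one] at h1
      have h2 : (AlgHom.mapMatrix up JF').det = up JF'.det := (AlgHom.map_det up JF').symm
      rw [h2] at h1
      have h3 : up JF'.det = C 1 := by
        rw [h1]
        exact hdetF
      calc JF'.det = down (up JF'.det) := (hdown_up _).symm
        _ = down (C 1) := by rw [h3]
        _ = C 1 := by rw [hdown, aeval_C, MvPolynomial.algebraMap_eq]
    have hIH : IsPolyAut F' := IH F' hmixF' ⟨1, one_ne_zero, hdetF'⟩
    obtain ⟨G', hG'1, hG'2⟩ := hIH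
    set G : Fin (n + 1) → MvPolynomial (Fin (n + 1)) K :=
      j.insertNth (X j - up (bind₁ G' Q')) (fun i => up (G' i)) with hG
    have hGj : G j = X j - up (bind₁ G' Q') := by
      rw [hG]
      exact Fin.insertNth_apply_same j _ _
    have hGs : ∀ i, G (j.succAbove i) = up (G' i) := by
      intro i
      rw [hG]
      exact Fin.insertNth_apply_succAbove j _ _ i
    have hbindG_up : ∀ q : MvPolynomial (Fin n) K, bind₁ G (up q) = up (bind₁ G' q) := by
      intro q
      show bind₁ G (rename j.succAbove q) = _
      rw [bind₁_rename]
      have h1 : (G ∘ j.succAbove) = fun i => rename j.succAbove (G' i) := funext fun i => hGs i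
      rw [h1, ← rename_bind₁]
    have hbindF_up : ∀ q : MvPolynomial (Fin n) K, bind₁ F (up q) = up (bind₁ F' q) := by
      intro q
      show bind₁ F (rename j.succAbove q) = _
      rw [bind₁_rename]
      have h1 : (F ∘ j.succAbove) = fun i => rename j.succAbove (F' i) :=
        funext fun i => (hupF' i).symm
      rw [h1, ← rename_bind₁]
    refine ⟨G, ?_, ?_⟩
    · intro k
      rcases eq_or_ne k j with rfl | hk
      · have hFj : F k = X k + up Q' := by rw [hupQ']; ring
        rw [hFj, map_add, bind₁_X_right, hbindG_up, hGj]
        ring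
      · obtain ⟨i, rfl⟩ := Fin.exists_succAbove_eq hk
        rw [← hupF' i, hbindG_up, hG'1 i]
        exact rename_X j.succAbove i
    · intro k
      rcases eq_or_ne k j with rfl | hk
      · rw [hGj, map_sub, bind₁_X_right, hbindF_up]
        have h4 : bind₁ F' (bind₁ G' Q') = Q' := by
          rw [bind₁_bind₁]
          have h5 : (fun i => bind₁ F' (G' i)) = X := funext fun i => by rw [hG'2 i]
          rw [h5]
          exact congrFun (congrArg _ bind₁_X_left) Q'
        rw [h4, hupQ']
        ring
      · obtain ⟨i, rfl⟩ := Fin.exists_succAbove_eq hk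
        rw [hGs i, hbindF_up, hG'2 i]
        exact rename_X j.succAbove i

end S16

/-- The Jacobian Conjecture holds for polynomial maps without
mixed terms: over a field of characteristic zero, if `f` has no mixed terms and
its Jacobian determinant is a nonzero element of `K`, then `f` is a polynomial
automorphism. -/
theorem statement_16 (K : Type*) [Field K] [CharZero K] (n : ℕ)
    (f : Fin n → MvPolynomial (Fin n) K) (hmix : NoMixedTerms f)
    (hjac : ∃ c : K, c ≠ 0 ∧
      (Matrix.of fun i j : Fin n => MvPolynomial.pderiv j (f i)).det = MvPolynomial.C c) :
    IsPolyAut f :=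
  S16.main n f hmix hjac
end

section
/- Let R be an integral domain and suppose A = (a_{ij}) ∈ GL_n(R) has the property that all its principal minors are equal to 1 (including the determinant itself and the diagonal entries). Then there is a permutation matrix P such that P^{−1}AP is unitriangular, i.e. upper triangular with all diagonal entries equal to 1. -/
open Equiv Equiv.Perm Finset Function Matrix

set_option linter.unusedSectionVars false
set_option maxHeartbeats 1000000

section Aux
variable {R : Type*} [CommRing R] [IsDomain R] {n : ℕ} {A : Matrix (Fin n) (Fin n) R}

lemma st17_diag
    (hmin : ∀ (m : ℕ) (e : Fin m → Fin n), StrictMono e → (A.submatrix e e).det = 1)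
    (i : Fin n) : A i i = 1 := by
  have h := hmin 1 (fun _ => i) (Subsingleton.strictMono _)
  simpa [Matrix.det_fin_one] using h

lemma st17_powinj {k : ℕ} (σ : Perm (Fin k)) (y : Fin k) (hy : σ y ≠ y)
    {a b : ℕ} (ha : a < #(σ.cycleOf y).support) (hb : b < #(σ.cycleOf y).support)
    (hab : (σ ^ a) y = (σ ^ b) y) : a = b := by
  have hmem : y ∈ (σ.cycleOf y).support :=
    mem_support_cycleOf_iff.2 ⟨SameCycle.refl _ _, mem_support.2 hy⟩
  have h := ((σ.isCycleOn_support_cycleOf y).pow_apply_eq_pow_apply hmem).mp hab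
  simpa [Nat.ModEq, Nat.mod_eq_of_lt ha, Nat.mod_eq_of_lt hb] using h

lemma st17_fin_val_add_one {c : ℕ} [NeZero c] (hc : 2 ≤ c) (j : Fin c) :
    ((j + 1 : Fin c) : ℕ) = (j.val + 1) % c := by
  rw [Fin.val_add, Fin.val_one', Nat.mod_eq_of_lt (show 1 < c by omega)]

lemma st17_key
    (hmin : ∀ (m : ℕ) (e : Fin m → Fin n), StrictMono e → (A.submatrix e e).det = 1) :
    ∀ (k : ℕ) (g : Fin (k + 2) → Fin n), Function.Injective g →
      ∏ i : Fin (k + 2), A (g (i + 1)) (g i) = 0 := by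
  intro k
  induction k using Nat.strong_induction_on with
  | _ k IH =>
  intro g hg
  classical
  set M : Matrix (Fin (k + 2)) (Fin (k + 2)) R := A.submatrix g g with hM
  -- determinant of the submatrix is 1
  have hMdet : M.det = 1 := by
    have hS : #(Finset.image g univ) = k + 2 := by
      rw [Finset.card_image_of_injective _ hg, Finset.card_univ, Fintype.card_fin]
    set e := (Finset.image g univ).orderIsoOfFin hS with he
    set e' : Fin (k + 2) → Fin n := fun i => (e i : Fin n) with he'
    have hsm : StrictMono e' := fun a b hab => by
      exact Subtype.coe_lt_coe.mpr (e.strictMono hab)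
    have hmem : ∀ i, g i ∈ Finset.image g univ :=
      fun i => Finset.mem_image_of_mem g (mem_univ i)
    set π0 : Fin (k + 2) → Fin (k + 2) := fun i => e.symm ⟨g i, hmem i⟩ with hπ0
    have hπinj : Function.Injective π0 := by
      intro a b hab
      apply hg
      have := congrArg (fun z => ((e z : { x // x ∈ Finset.image g univ }) : Fin n)) hab
      simpa [hπ0] using this
    set π : Perm (Fin (k + 2)) :=
      Equiv.ofBijective π0 (Finite.injective_iff_bijective.mp hπinj) with hπ
    have hcomp : ∀ i, e' (π i) = g i := by
      intro i
      simp [hπ, hπ0, he']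
    have hMeq : M = (A.submatrix e' e').submatrix π π := by
      ext i j
      simp [hM, Matrix.submatrix_apply, hcomp]
    rw [hMeq, Matrix.det_submatrix_equiv_self, hmin _ e' hsm]
  have hMdiag : ∀ i, M i i = 1 := fun i => st17_diag hmin (g i)
  set c : Perm (Fin (k + 2)) → R := fun σ => ∏ i, M (σ i) i with hc
  -- orbit products divide c σ
  have horb : ∀ (σ : Perm (Fin (k + 2))) (x : Fin (k + 2)) (m : ℕ),
      m ≤ #(σ.cycleOf x).support → σ x ≠ x →
      (∏ j ∈ Finset.range m, M (σ ((σ ^ j) x)) ((σ ^ j) x)) ∣ c σ := by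
    intro σ x m hmc hmove
    have hinj : ∀ a ∈ Finset.range m, ∀ b ∈ Finset.range m,
        (σ ^ a) x = (σ ^ b) x → a = b := by
      intro a ha b hb hab
      exact st17_powinj σ x hmove (lt_of_lt_of_le (Finset.mem_range.mp ha) hmc)
        (lt_of_lt_of_le (Finset.mem_range.mp hb) hmc) hab
    have hsub := Finset.prod_dvd_prod_of_subset
      ((Finset.range m).image (fun j => (σ ^ j) x)) univ
      (fun i => M (σ i) i) (Finset.subset_univ _)
    rwa [Finset.prod_image hinj] at hsub
  -- permutations that are neither the identity nor a full cycle give zero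
  have claim1 : ∀ σ : Perm (Fin (k + 2)), σ ≠ 1 →
      ¬(σ.IsCycle ∧ σ.support = univ) → c σ = 0 := by
    intro σ hσ1 hσnc
    obtain ⟨x, hx⟩ : ∃ x, σ x ≠ x := by
      by_contra h
      push_neg at h
      exact hσ1 (Equiv.ext h)
    have h2cγ : 2 ≤ #(σ.cycleOf x).support := (isCycle_cycleOf σ hx).two_le_card_support
    have hcγk : #(σ.cycleOf x).support ≤ k + 2 :=
      le_trans (Finset.card_le_univ _) (by simp)
    rcases lt_or_eq_of_le hcγk with hlt | heq
    · -- short orbit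
      obtain ⟨c', hc'⟩ : ∃ c', #(σ.cycleOf x).support = c' + 2 :=
        ⟨#(σ.cycleOf x).support - 2, by omega⟩
      have hc'k : c' < k := by omega
      set g2 : Fin (c' + 2) → Fin n := fun j => g ((σ ^ (j : ℕ)) x) with hg2
      have hfact : ∀ j : Fin (c' + 2), A (g2 (j + 1)) (g2 j)
          = M (σ ((σ ^ (j : ℕ)) x)) ((σ ^ (j : ℕ)) x) := by
        intro j
        have h1 : g2 (j + 1) = g ((σ ^ ((j : ℕ) + 1)) x) := by
          rw [hg2]
          simp only
          have hmod := Equiv.Perm.pow_mod_card_support_cycleOf_self_apply σ ((j : ℕ) + 1) x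
          rw [hc'] at hmod
          rw [st17_fin_val_add_one (by omega) j, hmod]
        rw [h1]
        have h2 : (σ ^ ((j : ℕ) + 1)) x = σ ((σ ^ (j : ℕ)) x) := by
          rw [pow_succ']
          rfl
        rw [h2]
        rfl
      have hg2inj : Function.Injective g2 := by
        intro a b hab
        exact Fin.ext (st17_powinj σ x hx (by omega) (by omega) (hg hab))
      have hzero : ∏ j : Fin (c' + 2), A (g2 (j + 1)) (g2 j) = 0 := IH c' hc'k g2 hg2inj
      have hdvd := horb σ x (c' + 2) (by omega) hx
      rw [← Fin.prod_univ_eq_prod_range (fun j => M (σ ((σ ^ j) x)) ((σ ^ j) x)) (c' + 2)]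
        at hdvd
      rw [show (∏ j : Fin (c' + 2), M (σ ((σ ^ (j : ℕ)) x)) ((σ ^ (j : ℕ)) x))
          = ∏ j : Fin (c' + 2), A (g2 (j + 1)) (g2 j) from
          (Finset.prod_congr rfl fun j _ => hfact j).symm, hzero] at hdvd
      exact zero_dvd_iff.mp hdvd
    · -- full support ⇒ σ is a full cycle, contradiction
      exfalso
      apply hσnc
      have hsupp : (σ.cycleOf x).support = univ :=
        Finset.eq_univ_of_card _ (by simpa using heq)
      have hσeq : σ.cycleOf x = σ := by
        refine Equiv.ext fun y => ?_
        have hy : y ∈ (σ.cycleOf x).support := by rw [hsupp]; exact Finset.mem_univ y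
        exact (mem_support_cycleOf_iff.mp hy).1.cycleOf_apply
      exact ⟨hσeq ▸ isCycle_cycleOf σ hx, hσeq ▸ hsupp⟩
  set P : Perm (Fin (k + 2)) → Prop := fun σ => σ.IsCycle ∧ σ.support = univ with hP
  -- sum of full-cycle products is zero
  have hsum : ∑ σ ∈ univ.filter P, c σ = 0 := by
    have hexp := Matrix.det_apply M
    rw [← Finset.sum_filter_add_sum_filter_not univ P] at hexp
    have hsecond : ∑ σ ∈ univ.filter (fun σ => ¬ P σ),
        Equiv.Perm.sign σ • ∏ i, M (σ i) i = 1 := by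
      rw [Finset.sum_eq_single (1 : Perm (Fin (k + 2)))]
      · simp [hMdiag]
      · intro b hb hb1
        rw [show (∏ i, M (b i) i) = c b from rfl,
          claim1 b hb1 (Finset.mem_filter.mp hb).2, smul_zero]
      · intro h1
        exact absurd (Finset.mem_filter.mpr
          ⟨Finset.mem_univ _, fun hPP => hPP.1.ne_one rfl⟩) h1
    have hfirst : ∑ σ ∈ univ.filter P, Equiv.Perm.sign σ • ∏ i, M (σ i) i
        = (-(-1) ^ (k + 2) : ℤˣ) • ∑ σ ∈ univ.filter P, c σ := by
      rw [Finset.smul_sum]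
      refine Finset.sum_congr rfl fun σ hσ => ?_
      obtain ⟨h1, h2⟩ := (Finset.mem_filter.mp hσ).2
      rw [show (∏ i, M (σ i) i) = c σ from rfl, h1.sign, h2, Finset.card_univ,
        Fintype.card_fin]
    rw [hfirst, hsecond, hMdet] at hexp
    have hz : (-(-1) ^ (k + 2) : ℤˣ) • (∑ σ ∈ univ.filter P, c σ) = 0 :=
      (right_eq_add.mp hexp)
    rcases Int.units_eq_one_or (-(-1) ^ (k + 2) : ℤˣ) with h | h <;>
      rw [h] at hz <;> simpa [Units.smul_def] using hz
  -- pairwise products of distinct full-cycle products vanish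
  have claim3 : ∀ σ τ : Perm (Fin (k + 2)), P σ → P τ → σ ≠ τ → c σ * c τ = 0 := by
    intro σ τ hσ hτ hστ
    have hmoveσ : ∀ y, σ y ≠ y := fun y =>
      Equiv.Perm.mem_support.mp (by rw [hσ.2]; exact Finset.mem_univ y)
    have hmoveτ : ∀ y, τ y ≠ y := fun y =>
      Equiv.Perm.mem_support.mp (by rw [hτ.2]; exact Finset.mem_univ y)
    obtain ⟨x, hx⟩ : ∃ x, σ x ≠ τ x := by
      by_contra h
      push_neg at h
      exact hστ (Equiv.ext h)
    have hcard : ∀ y : Fin (k + 2), #(σ.cycleOf y).support = k + 2 := fun y => by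
      rw [hσ.1.cycleOf_eq (hmoveσ y), hσ.2, Finset.card_univ, Fintype.card_fin]
    have hone : σ.IsCycleOn ((univ : Finset (Fin (k + 2))) : Set (Fin (k + 2))) := by
      have h0 := σ.isCycleOn_support_cycleOf x
      rwa [hσ.1.cycleOf_eq (hmoveσ x), hσ.2] at h0
    obtain ⟨d, hdlt, hdx⟩ :=
      hone.exists_pow_eq (Finset.mem_univ (τ x)) (Finset.mem_univ x)
    rw [Finset.card_univ, Fintype.card_fin] at hdlt
    have hd0 : d ≠ 0 := by
      rintro rfl
      rw [pow_zero] at hdx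
      exact hmoveτ x hdx
    have hdk : d ≠ k + 1 := by
      rintro rfl
      have hcycle : (σ ^ (k + 2)) (τ x) = τ x := by
        have h0 := hone.pow_card_apply (Finset.mem_univ (τ x))
        rwa [Finset.card_univ, Fintype.card_fin] at h0
      apply hx
      calc σ x = σ ((σ ^ (k + 1)) (τ x)) := by rw [hdx]
        _ = (σ ^ (k + 2)) (τ x) := by
            rw [show σ ^ (k + 2) = σ * σ ^ (k + 1) from pow_succ' σ (k + 1)]
            rfl
        _ = τ x := hcycle
    obtain ⟨d', rfl⟩ : ∃ d', d = d' + 1 := ⟨d - 1, by omega⟩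
    have hd'k : d' < k := by omega
    set h2 : Fin (d' + 2) → Fin n := fun j => g ((σ ^ (j : ℕ)) (τ x)) with hh2
    have hinjpow : ∀ a b : ℕ, a < d' + 2 → b < d' + 2 →
        (σ ^ a) (τ x) = (σ ^ b) (τ x) → a = b := fun a b ha hb hab =>
      st17_powinj σ (τ x) (hmoveσ _) (by rw [hcard]; omega) (by rw [hcard]; omega) hab
    have hh2inj : Function.Injective h2 := fun a b hab =>
      Fin.ext (hinjpow _ _ a.isLt b.isLt (hg hab))
    have hzero := IH d' hd'k h2 hh2inj
    rw [Fin.prod_univ_castSucc] at hzero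
    have hlastfac : A (h2 (Fin.last (d' + 1) + 1)) (h2 (Fin.last (d' + 1))) = M (τ x) x := by
      rw [Fin.last_add_one]
      have e1 : h2 0 = g (τ x) := by rw [hh2]; simp
      have e2 : h2 (Fin.last (d' + 1)) = g x := by
        rw [hh2]
        simp only [Fin.val_last]
        rw [hdx]
      rw [e1, e2]
      rfl
    have hcastfac : ∀ j : Fin (d' + 1), A (h2 (j.castSucc + 1)) (h2 j.castSucc)
        = M (σ ((σ ^ (j : ℕ)) (τ x))) ((σ ^ (j : ℕ)) (τ x)) := by
      intro j
      rw [Fin.coeSucc_eq_succ]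
      have e1 : h2 j.succ = g (σ ((σ ^ (j : ℕ)) (τ x))) := by
        rw [hh2]
        simp only [Fin.val_succ]
        rw [pow_succ']
        rfl
      have e2 : h2 j.castSucc = g ((σ ^ (j : ℕ)) (τ x)) := by
        rw [hh2]
        simp only [Fin.coe_castSucc]
      rw [e1, e2]
      rfl
    rw [hlastfac, Finset.prod_congr rfl (fun j _ => hcastfac j)] at hzero
    have hdvd1 : (∏ j : Fin (d' + 1), M (σ ((σ ^ (j : ℕ)) (τ x))) ((σ ^ (j : ℕ)) (τ x)))
        ∣ c σ := by
      rw [Fin.prod_univ_eq_prod_range (fun j => M (σ ((σ ^ j) (τ x))) ((σ ^ j) (τ x)))]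
      exact horb σ (τ x) (d' + 1) (by rw [hcard]; omega) (hmoveσ _)
    have hdvd2 : M (τ x) x ∣ c τ := Finset.dvd_prod_of_mem _ (Finset.mem_univ x)
    have := mul_dvd_mul hdvd1 hdvd2
    rw [hzero] at this
    exact zero_dvd_iff.mp this
  -- conclude: the rotation cycle product vanishes
  set σ₀ : Perm (Fin (k + 2)) := finRotate (k + 2) with hσ₀def
  have hσ₀ : P σ₀ := ⟨isCycle_finRotate, support_finRotate⟩
  have hmemf : σ₀ ∈ univ.filter P := Finset.mem_filter.mpr ⟨Finset.mem_univ _, hσ₀⟩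
  have hsq : c σ₀ * c σ₀ = 0 := by
    have h1 : ∑ τ ∈ univ.filter P, c σ₀ * c τ = c σ₀ * c σ₀ := by
      apply Finset.sum_eq_single_of_mem σ₀ hmemf
      intro b hb hbne
      exact claim3 σ₀ b hσ₀ (Finset.mem_filter.mp hb).2 (Ne.symm hbne)
    rw [← Finset.mul_sum] at h1
    rw [← h1, hsum, mul_zero]
  have hc0 : c σ₀ = 0 := mul_self_eq_zero.mp hsq
  have hfinal : ∏ i : Fin (k + 2), A (g (i + 1)) (g i) = c σ₀ := by
    refine Finset.prod_congr rfl fun i _ => ?_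
    have : σ₀ i = i + 1 := finRotate_succ_apply i
    simp only [this]
    rfl
  rw [hfinal, hc0]

lemma st17_source
    (hmin : ∀ (m : ℕ) (e : Fin m → Fin n), StrictMono e → (A.submatrix e e).det = 1)
    (hn : 0 < n) : ∃ v : Fin n, ∀ w, w ≠ v → A w v = 0 := by
  by_contra h
  push_neg at h
  choose FF hFne hFnz using h
  set u : ℕ → Fin n := fun t => FF^[t] ⟨0, hn⟩ with hu_def
  have hu : ∀ t, u (t + 1) = FF (u t) := fun t => Function.iterate_succ_apply' FF t _
  have hQ : ∃ j, ∃ i, i < j ∧ u i = u j := by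
    obtain ⟨a, b, hab, he⟩ := Fintype.exists_ne_map_eq_of_card_lt
      (fun i : Fin (n + 1) => u i) (by simp)
    rcases lt_or_gt_of_ne (fun hv => hab (Fin.ext hv) : (a : ℕ) ≠ (b : ℕ)) with hl | hl
    · exact ⟨b, a, hl, he⟩
    · exact ⟨a, b, hl, he.symm⟩
  classical
  set j0 := Nat.find hQ with hj0
  obtain ⟨i0, hi0lt, hi0eq⟩ := Nat.find_spec hQ
  rw [← hj0] at hi0lt hi0eq
  have hdist : ∀ s t, s < t → t < j0 → u s ≠ u t := by
    intro s t hst htj heq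
    exact Nat.find_min hQ htj ⟨s, hst, heq⟩
  have hlen2 : 2 ≤ j0 - i0 := by
    rcases Nat.lt_or_ge (j0 - i0) 2 with hlt | hge
    · exfalso
      have : j0 = i0 + 1 := by omega
      rw [this, hu i0] at hi0eq
      exact hFne (u i0) hi0eq.symm
    · exact hge
  obtain ⟨l', hl'⟩ : ∃ l', j0 - i0 = l' + 2 := ⟨j0 - i0 - 2, by omega⟩
  set g : Fin (l' + 2) → Fin n := fun t => u (i0 + (t : ℕ)) with hgdef
  have hginj : Function.Injective g := by
    intro s t hst
    by_contra hne
    rcases lt_or_gt_of_ne (fun hv => hne (Fin.ext hv) : (s : ℕ) ≠ (t : ℕ)) with hl | hl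
    · exact hdist (i0 + s) (i0 + t) (by omega) (by omega) hst
    · exact hdist (i0 + t) (i0 + s) (by omega) (by omega) hst.symm
  have hedge : ∀ t : Fin (l' + 2), A (g (t + 1)) (g t) ≠ 0 := by
    intro t
    have hval : ((t + 1 : Fin (l' + 2)) : ℕ) = ((t : ℕ) + 1) % (l' + 2) :=
      st17_fin_val_add_one (by omega) t
    have hg1 : g (t + 1) = FF (u (i0 + (t : ℕ))) := by
      rw [hgdef]
      simp only
      rw [hval]
      rcases Nat.lt_or_ge ((t : ℕ) + 1) (l' + 2) with hlt | hge
      · rw [Nat.mod_eq_of_lt hlt, show i0 + ((t : ℕ) + 1) = (i0 + (t : ℕ)) + 1 by omega,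
          hu]
      · have ht : (t : ℕ) + 1 = l' + 2 := by omega
        rw [ht, Nat.mod_self, Nat.add_zero, hi0eq,
          show j0 = (i0 + (t : ℕ)) + 1 by omega, hu]
    rw [hg1]
    exact hFnz (u (i0 + (t : ℕ)))
  have hprod := st17_key hmin l' g hginj
  exact (Finset.prod_ne_zero_iff.mpr fun t _ => hedge t) hprod

end Aux

section Main
variable {R : Type*} [CommRing R] [IsDomain R]

lemma st17_main : ∀ (n : ℕ) (A : Matrix (Fin n) (Fin n) R),
    (∀ (m : ℕ) (e : Fin m → Fin n), StrictMono e → (A.submatrix e e).det = 1) →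
    ∃ σ : Equiv.Perm (Fin n), ∀ i j : Fin n, j < i → A (σ i) (σ j) = 0 := by
  intro n
  induction n with
  | zero => exact fun A _ => ⟨1, fun i => i.elim0⟩
  | succ m IHm =>
    intro A hmin
    obtain ⟨v, hv⟩ := st17_source hmin (Nat.succ_pos m)
    set B : Matrix (Fin m) (Fin m) R := A.submatrix v.succAbove v.succAbove with hB
    have hminB : ∀ (m' : ℕ) (e : Fin m' → Fin m), StrictMono e →
        (B.submatrix e e).det = 1 := by
      intro m' e he
      have heq : B.submatrix e e = A.submatrix (v.succAbove ∘ e) (v.succAbove ∘ e) := by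
        rw [hB, Matrix.submatrix_submatrix]
      rw [heq]
      exact hmin m' _ ((Fin.strictMono_succAbove v).comp he)
    obtain ⟨σ', hσ'⟩ := IHm B hminB
    set F : Fin (m + 1) → Fin (m + 1) :=
      Fin.cons v (fun i => v.succAbove (σ' i)) with hF
    have hFinj : Function.Injective F := by
      intro a b hab
      rcases Fin.eq_zero_or_eq_succ a with rfl | ⟨a', rfl⟩ <;>
        rcases Fin.eq_zero_or_eq_succ b with rfl | ⟨b', rfl⟩
      · rfl
      · rw [hF] at hab
        simp only [Fin.cons_zero, Fin.cons_succ] at hab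
        exact absurd hab.symm (Fin.succAbove_ne v _)
      · rw [hF] at hab
        simp only [Fin.cons_zero, Fin.cons_succ] at hab
        exact absurd hab (Fin.succAbove_ne v _)
      · rw [hF] at hab
        simp only [Fin.cons_succ] at hab
        have := σ'.injective ((Fin.strictMono_succAbove v).injective hab)
        rw [this]
    set σ : Equiv.Perm (Fin (m + 1)) :=
      Equiv.ofBijective F (Finite.injective_iff_bijective.mp hFinj) with hσdef
    refine ⟨σ, ?_⟩
    intro i j hij
    have hσapp : ∀ i, σ i = F i := fun i => rfl
    rw [hσapp, hσapp]
    rcases Fin.eq_zero_or_eq_succ j with rfl | ⟨j', rfl⟩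
    · rcases Fin.eq_zero_or_eq_succ i with rfl | ⟨i', rfl⟩
      · exact absurd hij (lt_irrefl _)
      · rw [hF]
        simp only [Fin.cons_zero, Fin.cons_succ]
        exact hv _ (Fin.succAbove_ne v _)
    · rcases Fin.eq_zero_or_eq_succ i with rfl | ⟨i', rfl⟩
      · exact absurd hij (Fin.not_lt_zero _)
      · rw [hF]
        simp only [Fin.cons_succ]
        exact hσ' i' j' (by rwa [Fin.succ_lt_succ_iff] at hij)

end Main


/-- Let `R` be a domain and `A ∈ GL_n(R)` with all principal
minors equal to `1` (for every strictly monotone choice of rows-and-columns, the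
determinant of the corresponding principal submatrix is `1`).  Then after
conjugation by a permutation matrix `A` is unitriangular: upper triangular with
all diagonal entries `1`. -/
theorem statement_17 (R : Type*) [CommRing R] [IsDomain R] (n : ℕ)
    (A : Matrix (Fin n) (Fin n) R) (hA : IsUnit A)
    (hmin : ∀ (m : ℕ) (e : Fin m → Fin n), StrictMono e → (A.submatrix e e).det = 1) :
    ∃ σ : Equiv.Perm (Fin n),
      (∀ i j : Fin n, j < i → A.submatrix σ σ i j = 0) ∧
      (∀ i : Fin n, A.submatrix σ σ i i = 1) := by
  obtain ⟨σ, hσ⟩ := st17_main n A hmin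
  exact ⟨σ, fun i j hij => hσ i j hij, fun i => st17_diag hmin (σ i)⟩
end
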